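/- arXiv:1505.03717 — 7 statements merged into one kernel-verified Lean document; each statement's English description precedes it below -/
import Mathlib

section
/- In every finite bipartite graph there exists a matching that covers every node of maximum degree. -/
/-!
Let `Δ` be the maximum degree and `A ⊆ S`, `B ⊆ T` the vertices of degree `Δ`. Hall's condition
holds for `A`: the `Δ * #X` edges leaving `X ⊆ A` all end in `N(X)`, whose vertices have degree at
most `Δ`, so `#X ≤ #N(X)`. Hence `A` is matched into `T` by an injection `g` and, symmetrically, `B`
into `S` by an injection `f`. The two are merged as in the proof of the Schröder–Bernstein theorem
(Mendelsohn–Dulmage): the vertices of `A` reached from `A \ f(B)` by alternately following `g` and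
`f` keep their `g`-edge, and every vertex of `B` not used by them keeps its `f`-edge.
-/

/-- Degree of a node `v` with respect to an edge set `E` (edges as ordered pairs). -/
def bipDeg {V : Type*} [DecidableEq V] (E : Finset (V × V)) (v : V) : ℕ :=
  (E.filter (fun e => e.1 = v ∨ e.2 = v)).card

/-- A set of edges is a matching if its edges are pairwise node-disjoint. -/
def IsMatching {V : Type*} (M : Finset (V × V)) : Prop :=
  ∀ e ∈ M, ∀ f ∈ M, e ≠ f → e.1 ≠ f.1 ∧ e.2 ≠ f.2 ∧ e.1 ≠ f.2 ∧ e.2 ≠ f.1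

/-- An edge set covers a node if some edge is incident to it. -/
def Covers {V : Type*} (M : Finset (V × V)) (v : V) : Prop :=
  ∃ e ∈ M, e.1 = v ∨ e.2 = v

open Finset

section Hall

variable {α β : Type*} [DecidableEq α] [DecidableEq β]

theorem card_le_card_biUnion_of_card_fiber_bounds {E : Finset (α × β)} {X : Finset α} {d : ℕ}
    (hd : 0 < d) (hX : ∀ a ∈ X, d ≤ #{e ∈ E | e.1 = a}) (hE : ∀ b, #{e ∈ E | e.2 = b} ≤ d) :
    #X ≤ #(X.biUnion fun a => {e ∈ E | e.1 = a}.image Prod.snd) := by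
  set N := X.biUnion fun a => {e ∈ E | e.1 = a}.image Prod.snd
  set F := {e ∈ E | e.1 ∈ X}
  have hlower : d * #X ≤ #F := by
    refine mul_card_image_le_card_of_maps_to (fun e he => (mem_filter.1 he).2) d fun a ha => ?_
    rw [filter_filter, filter_congr fun e _ => and_iff_right_of_imp fun h => h ▸ ha]
    exact hX a ha
  have hupper : #F ≤ d * #N := by
    refine card_le_mul_card_image_of_maps_to (f := Prod.snd) (fun e he => ?_) d
      fun b _ => (card_le_card (filter_subset_filter _ (filter_subset _ _))).trans (hE b)
    obtain ⟨heE, heX⟩ := mem_filter.1 he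
    exact mem_biUnion.2 ⟨e.1, heX, mem_image_of_mem _ (mem_filter.2 ⟨heE, rfl⟩)⟩
  exact le_of_mul_le_mul_left (hlower.trans hupper) hd

theorem exists_injOn_of_card_fiber_bounds [Nonempty β] {E : Finset (α × β)} {A : Set α} {d : ℕ}
    (hd : 0 < d) (hA : ∀ a ∈ A, d ≤ #{e ∈ E | e.1 = a}) (hE : ∀ b, #{e ∈ E | e.2 = b} ≤ d) :
    ∃ g : α → β, A.InjOn g ∧ ∀ a ∈ A, (a, g a) ∈ E := by
  obtain ⟨g, hg, hgE⟩ := (all_card_le_biUnion_card_iff_exists_injective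
      fun a : A => {e ∈ E | e.1 = (a : α)}.image Prod.snd).1 fun s => by
    have := card_le_card_biUnion_of_card_fiber_bounds hd (X := s.image Subtype.val)
      (by simpa using fun a ha _ => hA a ha) hE
    rwa [image_biUnion, card_image_of_injective _ Subtype.val_injective] at this
  classical
  refine ⟨fun a => if h : a ∈ A then g ⟨a, h⟩ else Classical.arbitrary β, ?_, fun a ha => ?_⟩
  · intro a ha a' ha' h
    simpa [ha, ha', hg.eq_iff] using h
  · simpa [ha] using hgE ⟨a, ha⟩

theorem exists_injOn_swap_of_card_fiber_bounds [Nonempty α] {E : Finset (α × β)} {B : Set β}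
    {d : ℕ} (hd : 0 < d) (hB : ∀ b ∈ B, d ≤ #{e ∈ E | e.2 = b})
    (hE : ∀ a, #{e ∈ E | e.1 = a} ≤ d) :
    ∃ f : β → α, B.InjOn f ∧ ∀ b ∈ B, (f b, b) ∈ E := by
  have hswap (p : β × α → Prop) [DecidablePred p] :
      #{e ∈ E.map (Equiv.prodComm α β).toEmbedding | p e} = #{e ∈ E | p e.swap} := by
    rw [filter_map, card_map]; rfl
  obtain ⟨f, hf, hfE⟩ := exists_injOn_of_card_fiber_bounds
    (E := E.map (Equiv.prodComm α β).toEmbedding) hd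
    (by simpa only [hswap, Prod.fst_swap, Prod.snd_swap] using hB)
    (by simpa only [hswap, Prod.fst_swap, Prod.snd_swap] using hE)
  exact ⟨f, hf, fun b hb => by simpa using hfE b hb⟩

end Hall

section Degree

variable {V : Type*} [DecidableEq V] {S T : Finset V} {E : Finset (V × V)}

theorem card_filter_fst_le_bipDeg (E : Finset (V × V)) (v : V) :
    #{e ∈ E | e.1 = v} ≤ bipDeg E v :=
  card_le_card (monotone_filter_right _ fun _ _ h => Or.inl h)

theorem card_filter_snd_le_bipDeg (E : Finset (V × V)) (v : V) :
    #{e ∈ E | e.2 = v} ≤ bipDeg E v :=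
  card_le_card (monotone_filter_right _ fun _ _ h => Or.inr h)

theorem bipDeg_eq_card_filter_fst (hST : Disjoint S T) (hE : E ⊆ S ×ˢ T) {v : V} (hv : v ∈ S) :
    bipDeg E v = #{e ∈ E | e.1 = v} := by
  refine congrArg card (filter_congr fun e he => or_iff_left fun h => ?_)
  exact disjoint_left.1 hST hv (h ▸ (mem_product.1 (hE he)).2)

theorem bipDeg_eq_card_filter_snd (hST : Disjoint S T) (hE : E ⊆ S ×ˢ T) {v : V} (hv : v ∈ T) :
    bipDeg E v = #{e ∈ E | e.2 = v} := by
  refine congrArg card (filter_congr fun e he => or_iff_right fun h => ?_)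
  exact disjoint_left.1 hST (h ▸ (mem_product.1 (hE he)).1) hv

theorem bipDeg_pos_of_mem {e : V × V} (he : e ∈ E) : 0 < bipDeg E e.1 :=
  card_pos.2 ⟨e, mem_filter.2 ⟨he, Or.inl rfl⟩⟩

theorem bipDeg_le_sup_bipDeg (hE : E ⊆ S ×ˢ T) (u : V) :
    bipDeg E u ≤ (S ∪ T).sup (bipDeg E) := by
  by_cases hu : u ∈ S ∪ T
  · exact le_sup hu
  · suffices bipDeg E u = 0 by omega
    refine card_eq_zero.2 (filter_eq_empty_iff.2 fun e he hue => hu ?_)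
    obtain ⟨h1, h2⟩ := mem_product.1 (hE he)
    rcases hue with rfl | rfl
    exacts [mem_union_left _ h1, mem_union_right _ h2]

end Degree

theorem isMatching_of_injOn {V : Type*} {S T : Finset V} {M : Finset (V × V)}
    (hST : Disjoint S T) (hM : M ⊆ S ×ˢ T) (hfst : Set.InjOn Prod.fst (M : Set (V × V)))
    (hsnd : Set.InjOn Prod.snd (M : Set (V × V))) : IsMatching M := by
  intro e he e' he' hne
  obtain ⟨h1, h2⟩ := mem_product.1 (hM he)
  obtain ⟨h1', h2'⟩ := mem_product.1 (hM he')
  exact ⟨fun h => hne (hfst he he' h), fun h => hne (hsnd he he' h),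
    fun h => disjoint_left.1 hST h1 (h ▸ h2'), fun h => disjoint_left.1 hST h1' (h ▸ h2)⟩

section MendelsohnDulmage

variable {V : Type*} {A B : Set V} {g f : V → V}

inductive AlternatingReach (A B : Set V) (g f : V → V) : V → Prop
  | start {a : V} : a ∈ A → a ∉ f '' B → AlternatingReach A B g f a
  | step {a : V} : AlternatingReach A B g f a → g a ∈ B → f (g a) ∈ A →
      AlternatingReach A B g f (f (g a))

theorem AlternatingReach.mem {a : V} (h : AlternatingReach A B g f a) : a ∈ A := by
  cases h with
  | start ha _ => exact ha
  | step _ _ ha => exact ha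

theorem AlternatingReach.exists_eq_of_apply (hf : B.InjOn f) {b : V} (hb : b ∈ B)
    (h : AlternatingReach A B g f (f b)) : ∃ a, AlternatingReach A B g f a ∧ g a = b := by
  generalize hx : f b = x at h
  cases h with
  | start _ hx' => exact absurd ⟨b, hb, hx⟩ hx'
  | step ha hgb _ => exact ⟨_, ha, hf hgb hb hx.symm⟩

theorem exists_matching_covering_of_injOn {S T : Finset V} {E : Finset (V × V)}
    (hST : Disjoint S T) (hE : E ⊆ S ×ˢ T) (hg : A.InjOn g) (hf : B.InjOn f)
    (hgE : ∀ a ∈ A, (a, g a) ∈ E) (hfE : ∀ b ∈ B, (f b, b) ∈ E) :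
    ∃ M ⊆ E, IsMatching M ∧ (∀ a ∈ A, Covers M a) ∧ ∀ b ∈ B, Covers M b := by
  classical
  let C := AlternatingReach A B g f
  let M := E.filter fun e =>
    (C e.1 ∧ e.2 = g e.1) ∨ (e.2 ∈ B ∧ (¬ ∃ a, C a ∧ g a = e.2) ∧ e.1 = f e.2)
  have hfst : Set.InjOn Prod.fst (M : Set (V × V)) := by
    intro e he e' he' h
    rcases (mem_filter.1 he).2 with ⟨hC, h2⟩ | ⟨hb, hnot, h1⟩ <;>
      rcases (mem_filter.1 he').2 with ⟨hC', h2'⟩ | ⟨hb', hnot', h1'⟩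
    · exact Prod.ext h (by rw [h2, h2', h])
    · exact (hnot' (AlternatingReach.exists_eq_of_apply hf hb' (h1' ▸ h ▸ hC))).elim
    · exact (hnot (AlternatingReach.exists_eq_of_apply hf hb (h1 ▸ h.symm ▸ hC'))).elim
    · exact Prod.ext h (hf hb hb' (h1 ▸ h1' ▸ h))
  have hsnd : Set.InjOn Prod.snd (M : Set (V × V)) := by
    intro e he e' he' h
    rcases (mem_filter.1 he).2 with ⟨hC, h2⟩ | ⟨hb, hnot, h1⟩ <;>
      rcases (mem_filter.1 he').2 with ⟨hC', h2'⟩ | ⟨hb', hnot', h1'⟩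
    · exact Prod.ext (hg hC.mem hC'.mem (h2 ▸ h2' ▸ h)) h
    · exact (hnot' ⟨e.1, hC, h2.symm.trans h⟩).elim
    · exact (hnot ⟨e'.1, hC', h2'.symm.trans h.symm⟩).elim
    · exact Prod.ext (by rw [h1, h1', h]) h
  refine ⟨M, filter_subset _ _, isMatching_of_injOn hST ((filter_subset _ _).trans hE) hfst hsnd,
    fun a ha => ?_, fun b hb => ?_⟩
  · by_cases hCa : C a
    · exact ⟨(a, g a), mem_filter.2 ⟨hgE a ha, Or.inl ⟨hCa, rfl⟩⟩, Or.inl rfl⟩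
    · obtain ⟨b, hb, rfl⟩ : a ∈ f '' B := by_contra fun h => hCa (.start ha h)
      refine ⟨(f b, b), mem_filter.2 ⟨hfE b hb, Or.inr ⟨hb, ?_, rfl⟩⟩, Or.inl rfl⟩
      rintro ⟨a', hCa', rfl⟩
      exact hCa (hCa'.step hb ha)
  · by_cases hused : ∃ a, C a ∧ g a = b
    · obtain ⟨a, hCa, rfl⟩ := hused
      exact ⟨(a, g a), mem_filter.2 ⟨hgE a hCa.mem, Or.inl ⟨hCa, rfl⟩⟩, Or.inr rfl⟩
    · exact ⟨(f b, b), mem_filter.2 ⟨hfE b hb, Or.inr ⟨hb, hused, rfl⟩⟩, Or.inr rfl⟩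

end MendelsohnDulmage

theorem matching_covers_max_degree_general {V : Type*} [DecidableEq V]
    (S T : Finset V) (E : Finset (V × V))
    (hST : Disjoint S T) (hE : E ⊆ S ×ˢ T) (hEne : E.Nonempty) :
    ∃ M ⊆ E, IsMatching M ∧
      ∀ v ∈ S ∪ T, (∀ u ∈ S ∪ T, bipDeg E u ≤ bipDeg E v) → Covers M v := by
  obtain ⟨e₀, he₀⟩ := hEne
  have : Nonempty V := ⟨e₀.1⟩
  set Δ := (S ∪ T).sup (bipDeg E)
  have hle : ∀ u, bipDeg E u ≤ Δ := bipDeg_le_sup_bipDeg hE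
  have hΔ : 0 < Δ := (bipDeg_pos_of_mem he₀).trans_le (hle _)
  obtain ⟨g, hg, hgE⟩ := exists_injOn_of_card_fiber_bounds (A := {a | a ∈ S ∧ bipDeg E a = Δ}) hΔ
    (fun a ha => (bipDeg_eq_card_filter_fst hST hE ha.1 ▸ ha.2).ge)
    (fun b => (card_filter_snd_le_bipDeg E b).trans (hle b))
  obtain ⟨f, hf, hfE⟩ := exists_injOn_swap_of_card_fiber_bounds
    (B := {b | b ∈ T ∧ bipDeg E b = Δ}) hΔ
    (fun b hb => (bipDeg_eq_card_filter_snd hST hE hb.1 ▸ hb.2).ge)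
    (fun a => (card_filter_fst_le_bipDeg E a).trans (hle a))
  obtain ⟨M, hME, hM, hA, hB⟩ := exists_matching_covering_of_injOn hST hE hg hf hgE hfE
  refine ⟨M, hME, hM, fun v hv hmax => ?_⟩
  have hvΔ : bipDeg E v = Δ := le_antisymm (le_sup hv) (Finset.sup_le hmax)
  rcases mem_union.1 hv with hvS | hvT
  exacts [hA v ⟨hvS, hvΔ⟩, hB v ⟨hvT, hvΔ⟩]

/-- In every finite bipartite graph (with at least one edge) there exists a matching
covering every node of maximum degree. -/
theorem matching_covers_max_degree {V : Type*} [DecidableEq V] [Fintype V]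
    (S T : Finset V) (E : Finset (V × V))
    (hST : Disjoint S T) (hE : E ⊆ S ×ˢ T) (hEne : E.Nonempty) :
    ∃ M ⊆ E, IsMatching M ∧
      ∀ v ∈ S ∪ T, (∀ u ∈ S ∪ T, bipDeg E u ≤ bipDeg E v) → Covers M v :=
  matching_covers_max_degree_general S T E hST hE hEne
end

section
/- (Dulmage–Mendelsohn) Let G=(S,T;E) be a bipartite graph, X ⊆ S and Y ⊆ T. If there exists a matching M_X covering X and a matching M_Y covering Y, then there exists a single matching M covering X ∪ Y. -/
lemma aug {V : Type*} [DecidableEq V]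
    (S T : Finset V) (E : Finset (V × V))
    (hST : Disjoint S T) (hE : E ⊆ S ×ˢ T)
    (Y : Finset V) (hY : Y ⊆ T)
    (MY : Finset (V × V)) (hMY : MY ⊆ E) (hMYm : IsMatching MY)
    (hMYc : ∀ v ∈ Y, Covers MY v) :
    ∀ n (M : Finset (V × V)) (A : Finset V) (y : V),
      (MY \ M).card ≤ n → M ⊆ E → IsMatching M →
      (∀ v ∈ A, Covers M v) → (∀ v ∈ A, v ∈ T → v ∈ Y) → y ∈ Y →
      ∃ M' ⊆ E, IsMatching M' ∧ ∀ v ∈ insert y A, Covers M' v := by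
  intro n
  induction n with
  | zero =>
    intro M A y hcard hME hMm hcov hAT hy
    refine ⟨M, hME, hMm, ?_⟩
    intro v hv
    rcases Finset.mem_insert.1 hv with rfl | hvA
    · obtain ⟨e, he, hor⟩ := hMYc v hy
      have : e ∈ M := by
        by_contra h
        have : e ∈ MY \ M := Finset.mem_sdiff.2 ⟨he, h⟩
        have := Finset.card_pos.2 ⟨e, this⟩
        omega
      exact ⟨e, this, hor⟩
    · exact hcov v hvA
  | succ n ih =>
    intro M A y hcard hME hMm hcov hAT hy
    by_cases hcy : Covers M y
    · refine ⟨M, hME, hMm, ?_⟩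
      intro v hv
      rcases Finset.mem_insert.1 hv with rfl | hvA
      · exact hcy
      · exact hcov v hvA
    · have hyT : y ∈ T := hY hy
      have hyS : y ∉ S := fun h => (Finset.disjoint_left.1 hST h) hyT
      obtain ⟨e, he, hor⟩ := hMYc y hy
      have heE := hE (hMY he)
      have he1S : e.1 ∈ S := (Finset.mem_product.1 heE).1
      have he2T : e.2 ∈ T := (Finset.mem_product.1 heE).2
      have he2 : e.2 = y := by
        rcases hor with h | h
        · exact absurd (h ▸ he1S) hyS
        · exact h
      set s := e.1 with hs_def
      have hsy : (s, y) ∈ MY := by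
        have : e = (s, y) := by rw [hs_def, ← he2]
        rwa [← this]
      have hsS : s ∈ S := he1S
      have hsT : s ∉ T := fun h => (Finset.disjoint_left.1 hST hsS) h
      have hsyM : (s, y) ∉ M := fun h => hcy ⟨(s, y), h, Or.inr rfl⟩
      by_cases hsc : Covers M s
      · -- s is covered by M via some edge f = (s, t)
        obtain ⟨f, hf, hfor⟩ := hsc
        have hfE := hE (hME hf)
        have hf1S : f.1 ∈ S := (Finset.mem_product.1 hfE).1
        have hf2T : f.2 ∈ T := (Finset.mem_product.1 hfE).2
        have hf1 : f.1 = s := by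
          rcases hfor with h | h
          · exact h
          · exact absurd (h ▸ hf2T) hsT
        set t := f.2 with ht_def
        have htT : t ∈ T := hf2T
        have hty : t ≠ y := by
          intro h
          exact hcy ⟨f, hf, Or.inr (by rw [← ht_def, h])⟩
        have hfne : f ≠ (s, y) := by
          intro h
          apply hty
          rw [ht_def, h]
        have hfMY : f ∉ MY := by
          intro h
          exact (hMYm f h (s, y) hsy hfne).1 hf1
        set M' := insert (s, y) (M.erase f) with hM'_def
        have hM'E : M' ⊆ E := by
          intro g hg
          rcases Finset.mem_insert.1 hg with rfl | hg
          · exact hMY hsy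
          · exact hME (Finset.mem_of_mem_erase hg)
        -- key disjointness facts for any edge g ∈ M, g ≠ f
        have hkey : ∀ g ∈ M, g ≠ f → g.1 ≠ s ∧ g.2 ≠ s ∧ g.1 ≠ y ∧ g.2 ≠ y := by
          intro g hg hgf
          have hgE := hE (hME hg)
          have hg1S : g.1 ∈ S := (Finset.mem_product.1 hgE).1
          have hg2T : g.2 ∈ T := (Finset.mem_product.1 hgE).2
          refine ⟨?_, ?_, ?_, ?_⟩
          · intro h; exact (hMm g hg f hf hgf).1 (h.trans hf1.symm)
          · intro h; exact hsT (h ▸ hg2T)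
          · intro h; exact hyS (h ▸ hg1S)
          · intro h; exact hcy ⟨g, hg, Or.inr h⟩
        have hM'm : IsMatching M' := by
          intro a ha b hb hab
          rcases Finset.mem_insert.1 ha with rfl | ha
          · rcases Finset.mem_insert.1 hb with rfl | hb
            · exact absurd rfl hab
            · have hbM := Finset.mem_of_mem_erase hb
              have hbf := Finset.ne_of_mem_erase hb
              obtain ⟨h1, h2, h3, h4⟩ := hkey b hbM hbf
              exact ⟨Ne.symm h1, Ne.symm h4, Ne.symm h2, Ne.symm h3⟩
          · rcases Finset.mem_insert.1 hb with rfl | hb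
            · have haM := Finset.mem_of_mem_erase ha
              have haf := Finset.ne_of_mem_erase ha
              obtain ⟨h1, h2, h3, h4⟩ := hkey a haM haf
              exact ⟨h1, h4, h3, h2⟩
            · exact hMm a (Finset.mem_of_mem_erase ha) b (Finset.mem_of_mem_erase hb) hab
        have hM'cov : ∀ v ∈ (insert y A).erase t, Covers M' v := by
          intro v hv
          have hvt := Finset.ne_of_mem_erase hv
          rcases Finset.mem_insert.1 (Finset.mem_of_mem_erase hv) with rfl | hvA
          · exact ⟨(s, v), Finset.mem_insert_self _ _, Or.inr rfl⟩
          · obtain ⟨g, hg, hgor⟩ := hcov v hvA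
            by_cases hgf : g = f
            · subst hgf
              rcases hgor with h | h
              · exact ⟨(s, y), Finset.mem_insert_self _ _, Or.inl (hf1.symm.trans h)⟩
              · exact absurd h.symm hvt
            · exact ⟨g, Finset.mem_insert_of_mem (Finset.mem_erase.2 ⟨hgf, hg⟩), hgor⟩
        have hM'card : (MY \ M').card ≤ n := by
          have hsub : MY \ M' ⊆ (MY \ M).erase (s, y) := by
            intro g hg
            obtain ⟨hgMY, hgM'⟩ := Finset.mem_sdiff.1 hg
            have hgsy : g ≠ (s, y) := fun h => hgM' (h ▸ Finset.mem_insert_self _ _)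
            refine Finset.mem_erase.2 ⟨hgsy, Finset.mem_sdiff.2 ⟨hgMY, fun hgM => ?_⟩⟩
            have : g ≠ f := fun h => hfMY (h ▸ hgMY)
            exact hgM' (Finset.mem_insert_of_mem (Finset.mem_erase.2 ⟨this, hgM⟩))
          have h1 : (s, y) ∈ MY \ M := Finset.mem_sdiff.2 ⟨hsy, hsyM⟩
          have h2 := Finset.card_erase_of_mem h1
          have h3 := Finset.card_le_card hsub
          have h4 : 1 ≤ (MY \ M).card := Finset.card_pos.2 ⟨_, h1⟩
          omega
        by_cases htY : t ∈ Y
        · obtain ⟨M'', hM''E, hM''m, hM''cov⟩ :=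
            ih M' ((insert y A).erase t) t hM'card hM'E hM'm hM'cov
              (fun v hv hvT => by
                rcases Finset.mem_insert.1 (Finset.mem_of_mem_erase hv) with rfl | hvA
                · exact hy
                · exact hAT v hvA hvT) htY
          refine ⟨M'', hM''E, hM''m, ?_⟩
          intro v hv
          by_cases hvt : v = t
          · exact hM''cov v (hvt ▸ Finset.mem_insert_self _ _)
          · exact hM''cov v (Finset.mem_insert_of_mem (Finset.mem_erase.2 ⟨hvt, hv⟩))
        · refine ⟨M', hM'E, hM'm, ?_⟩
          intro v hv
          have hvt : v ≠ t := by
            intro h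
            subst h
            rcases Finset.mem_insert.1 hv with h | h
            · exact hty h
            · exact htY (hAT t h htT)
          exact hM'cov v (Finset.mem_erase.2 ⟨hvt, hv⟩)
      · -- s uncovered by M: just add the edge
        set M' := insert (s, y) M with hM'_def
        refine ⟨M', ?_, ?_, ?_⟩
        · intro g hg
          rcases Finset.mem_insert.1 hg with rfl | hg
          · exact hMY hsy
          · exact hME hg
        · intro a ha b hb hab
          have hkey : ∀ g ∈ M, g.1 ≠ s ∧ g.2 ≠ s ∧ g.1 ≠ y ∧ g.2 ≠ y := by
            intro g hg
            have hgE := hE (hME hg)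
            have hg1S : g.1 ∈ S := (Finset.mem_product.1 hgE).1
            have hg2T : g.2 ∈ T := (Finset.mem_product.1 hgE).2
            refine ⟨?_, ?_, ?_, ?_⟩
            · intro h; exact hsc ⟨g, hg, Or.inl h⟩
            · intro h; exact hsc ⟨g, hg, Or.inr h⟩
            · intro h; exact hyS (h ▸ hg1S)
            · intro h; exact hcy ⟨g, hg, Or.inr h⟩
          rcases Finset.mem_insert.1 ha with rfl | ha
          · rcases Finset.mem_insert.1 hb with rfl | hb
            · exact absurd rfl hab
            · obtain ⟨h1, h2, h3, h4⟩ := hkey b hb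
              exact ⟨Ne.symm h1, Ne.symm h4, Ne.symm h2, Ne.symm h3⟩
          · rcases Finset.mem_insert.1 hb with rfl | hb
            · obtain ⟨h1, h2, h3, h4⟩ := hkey a ha
              exact ⟨h1, h4, h3, h2⟩
            · exact hMm a ha b hb hab
        · intro v hv
          rcases Finset.mem_insert.1 hv with rfl | hvA
          · exact ⟨(s, v), Finset.mem_insert_self _ _, Or.inr rfl⟩
          · obtain ⟨g, hg, hgor⟩ := hcov v hvA
            exact ⟨g, Finset.mem_insert_of_mem hg, hgor⟩

/-- Dulmage–Mendelsohn: if in a bipartite graph `G = (S,T;E)` there are matchings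
covering `X ⊆ S` and `Y ⊆ T` respectively, then there is a single matching covering
`X ∪ Y`. -/
theorem dulmage_mendelsohn {V : Type*} [DecidableEq V] [Fintype V]
    (S T : Finset V) (E : Finset (V × V))
    (hST : Disjoint S T) (hE : E ⊆ S ×ˢ T)
    (X Y : Finset V) (hX : X ⊆ S) (hY : Y ⊆ T)
    (MX MY : Finset (V × V)) (hMX : MX ⊆ E) (hMY : MY ⊆ E)
    (hMXm : IsMatching MX) (hMYm : IsMatching MY)
    (hMXc : ∀ v ∈ X, Covers MX v) (hMYc : ∀ v ∈ Y, Covers MY v) :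
    ∃ M ⊆ E, IsMatching M ∧ ∀ v ∈ X ∪ Y, Covers M v := by
  classical
  have key : ∀ Y₀ : Finset V, Y₀ ⊆ Y →
      ∃ M ⊆ E, IsMatching M ∧ ∀ v ∈ X ∪ Y₀, Covers M v := by
    intro Y₀
    induction Y₀ using Finset.induction_on with
    | empty =>
      intro _
      refine ⟨MX, hMX, hMXm, ?_⟩
      intro v hv
      rcases Finset.mem_union.1 hv with h | h
      · exact hMXc v h
      · exact absurd h (Finset.notMem_empty v)
    | @insert y Y₀ hnotmem ih =>
      intro hsub
      have hyY : y ∈ Y := hsub (Finset.mem_insert_self _ _)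
      have hY₀ : Y₀ ⊆ Y := fun v hv => hsub (Finset.mem_insert_of_mem hv)
      obtain ⟨M, hME, hMm, hMcov⟩ := ih hY₀
      obtain ⟨M', hM'E, hM'm, hM'cov⟩ :=
        aug S T E hST hE Y hY MY hMY hMYm hMYc (MY \ M).card M (X ∪ Y₀) y le_rfl
          hME hMm hMcov
          (fun v hv hvT => by
            rcases Finset.mem_union.1 hv with h | h
            · exact absurd hvT (Finset.disjoint_left.1 hST (hX h))
            · exact hY₀ h) hyY
      refine ⟨M', hM'E, hM'm, ?_⟩
      intro v hv
      apply hM'cov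
      rcases Finset.mem_union.1 hv with h | h
      · exact Finset.mem_insert_of_mem (Finset.mem_union_left _ h)
      · rcases Finset.mem_insert.1 h with rfl | h
        · exact Finset.mem_insert_self _ _
        · exact Finset.mem_insert_of_mem (Finset.mem_union_right _ h)
  exact key Y le_rfl
end

section
/- Let H=(V,𝓔) be an oddly uniform Δ-quasi-regular hypergraph and G the associated multigraph (replacing each hyperedge by a clique with multiplicity). Let D, A, C be the Gallai–Edmonds decomposition of G, and let K be a connected component of G[D] that does not span any hyperedge of H. Then the number of edges of G between K and A is at least Δ. -/
open scoped Classical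

/-- Quasi-degree of a node: `∑ [ |e| - 1 : v ∈ e ∈ 𝓔 ]`. -/
def quasiDeg {V : Type*} [DecidableEq V] (𝓔 : Multiset (Finset V)) (v : V) : ℕ :=
  ((𝓔.filter (fun e => v ∈ e)).map (fun e => e.card - 1)).sum

/-- The number of parallel edges between `u` and `v` in the multigraph associated to a
hypergraph: the number of hyperedges containing both. -/
def mult {V : Type*} [DecidableEq V] (𝓔 : Multiset (Finset V)) (u v : V) : ℕ :=
  𝓔.countP (fun e => u ∈ e ∧ v ∈ e)

/-- A maximum matching of a simple graph, as a subgraph. -/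
def IsMaximumMatching {V : Type*} [Fintype V] (G : SimpleGraph V) (M : G.Subgraph) : Prop :=
  M.IsMatching ∧ ∀ M' : G.Subgraph, M'.IsMatching → M'.edgeSet.ncard ≤ M.edgeSet.ncard

private lemma sum_sum_mult_eq {V : Type*} [DecidableEq V] [Fintype V]
    (𝓔 : Multiset (Finset V)) (K A : Set V) :
    ∑ u ∈ Finset.univ.filter (· ∈ K), ∑ a ∈ Finset.univ.filter (· ∈ A), mult 𝓔 u a
      = (𝓔.map (fun e => (e.filter (· ∈ K)).card * (e.filter (· ∈ A)).card)).sum := by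
  induction 𝓔 using Multiset.induction with
  | empty => simp [mult]
  | cons e s ih =>
    have hmult : ∀ u a : V, mult (e ::ₘ s) u a = mult s u a + (if u ∈ e ∧ a ∈ e then 1 else 0) := by
      intro u a; exact Multiset.countP_cons _ e s
    simp only [hmult, Finset.sum_add_distrib, ih, Multiset.map_cons, Multiset.sum_cons]
    have h1 : ∀ (S : Set V),
        ∑ u ∈ Finset.univ.filter (· ∈ S), (if u ∈ e then (1:ℕ) else 0)
          = (e.filter (· ∈ S)).card := by
      intro S
      rw [Finset.sum_boole]
      norm_cast
      congr 1
      ext x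
      simp [Finset.mem_filter, and_comm]
    have h2 : ∑ u ∈ Finset.univ.filter (· ∈ K), ∑ a ∈ Finset.univ.filter (· ∈ A),
        (if u ∈ e ∧ a ∈ e then (1:ℕ) else 0)
          = (e.filter (· ∈ K)).card * (e.filter (· ∈ A)).card := by
      rw [← h1 K, ← h1 A, Finset.sum_mul_sum]
      refine Finset.sum_congr rfl fun u _ => Finset.sum_congr rfl fun a _ => ?_
      by_cases hu : u ∈ e <;> by_cases ha : a ∈ e <;> simp [hu, ha]
    omega

/-- Let `H` be an oddly uniform `Δ`-quasi-regular hypergraph, `G` the underlying graph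
of the associated multigraph, `D` the set of nodes missed by some maximum matching,
`A` the outside neighbourhood of `D`, and `K` a connected component of `G[D]` not
spanning any hyperedge. Then the number of edges of the multigraph between `K` and `A`
is at least `Δ`. -/
theorem component_boundary_ge_delta {V : Type*} [DecidableEq V] [Fintype V]
    (𝓔 : Multiset (Finset V)) (hodd : ∀ e ∈ 𝓔, Odd e.card)
    (Δ : ℕ) (hreg : ∀ v : V, quasiDeg 𝓔 v = Δ)
    (G : SimpleGraph V)
    (hG : ∀ u v : V, G.Adj u v ↔ u ≠ v ∧ ∃ e ∈ 𝓔, u ∈ e ∧ v ∈ e)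
    (D A : Set V)
    (hD : D = {v : V | ∃ M : G.Subgraph, IsMaximumMatching G M ∧ v ∉ M.verts})
    (hA : A = {v : V | v ∉ D ∧ ∃ u ∈ D, G.Adj u v})
    (K : Set V)
    (hK : ∃ c : (SimpleGraph.induce D G).ConnectedComponent,
      K = Subtype.val '' {x : D | (SimpleGraph.induce D G).connectedComponentMk x = c})
    (hKnospan : ∀ e ∈ 𝓔, ¬ ((↑e : Set V) ⊆ K)) :
    Δ ≤ ∑ u ∈ Finset.univ.filter (· ∈ K), ∑ a ∈ Finset.univ.filter (· ∈ A), mult 𝓔 u a := by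
  obtain ⟨c, hKc⟩ := hK
  -- K ⊆ D
  have hKD : K ⊆ D := by
    rw [hKc]; rintro _ ⟨x, -, rfl⟩; exact x.2
  -- closure: neighbours of K inside D are in K
  have hclosure : ∀ u ∈ K, ∀ w, G.Adj u w → w ∈ D → w ∈ K := by
    rw [hKc]
    rintro _ ⟨x, hx, rfl⟩ w hadj hwD
    refine ⟨⟨w, hwD⟩, ?_, rfl⟩
    have hadj' : (SimpleGraph.induce D G).Adj ⟨w, hwD⟩ x := by
      simpa using hadj.symm
    simp only [Set.mem_setOf_eq] at hx ⊢
    rw [SimpleGraph.ConnectedComponent.connectedComponentMk_eq_of_adj hadj', hx]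
  -- pick a vertex of K
  obtain ⟨x₀, hx₀⟩ := c.exists_rep
  have hv₀K : (x₀ : V) ∈ K := by rw [hKc]; exact ⟨x₀, hx₀, rfl⟩
  set v₀ : V := (x₀ : V)
  -- pointwise bound for hyperedges containing v₀
  have hpt : ∀ e ∈ 𝓔.filter (fun e => v₀ ∈ e),
      e.card - 1 ≤ (e.filter (· ∈ K)).card * (e.filter (· ∈ A)).card := by
    intro e he
    rw [Multiset.mem_filter] at he
    obtain ⟨heE, hv₀e⟩ := he
    -- every w ∈ e with w ∉ K is in A
    have hwA : ∀ w ∈ e, w ∉ K → w ∈ A := by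
      intro w hw hwK
      have hne : w ≠ v₀ := by rintro rfl; exact hwK hv₀K
      have hadj : G.Adj v₀ w := (hG v₀ w).2 ⟨hne.symm, e, heE, hv₀e, hw⟩
      by_cases hwD : w ∈ D
      · exact absurd (hclosure v₀ hv₀K w hadj hwD) hwK
      · rw [hA]; exact ⟨hwD, v₀, hKD hv₀K, hadj⟩
    have hKA : K ∩ A = ∅ := by
      ext w; simp only [Set.mem_inter_iff, Set.mem_empty_iff_false, iff_false, not_and]
      intro hwK hwA'
      rw [hA] at hwA'; exact hwA'.1 (hKD hwK)
    have hsplit : (e.filter (· ∈ K)).card + (e.filter (· ∈ A)).card = e.card := by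
      have : e.filter (· ∈ A) = e.filter (fun w => ¬ w ∈ K) := by
        ext w
        simp only [Finset.mem_filter]
        constructor
        · rintro ⟨hw, hwA'⟩
          refine ⟨hw, fun hwK => ?_⟩
          have : w ∈ K ∩ A := ⟨hwK, hwA'⟩
          rw [hKA] at this; exact this
        · rintro ⟨hw, hwK⟩; exact ⟨hw, hwA w hw hwK⟩
      rw [this]
      exact Finset.card_filter_add_card_filter_not _
    have ha : 1 ≤ (e.filter (· ∈ K)).card :=
      Finset.card_pos.2 ⟨v₀, Finset.mem_filter.2 ⟨hv₀e, hv₀K⟩⟩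
    have hb : 1 ≤ (e.filter (· ∈ A)).card := by
      obtain ⟨w, hwe, hwK⟩ := Set.not_subset.1 (hKnospan e heE)
      exact Finset.card_pos.2 ⟨w, Finset.mem_filter.2 ⟨hwe, hwA w hwe hwK⟩⟩
    have hle : (e.filter (· ∈ K)).card + (e.filter (· ∈ A)).card
        ≤ (e.filter (· ∈ K)).card * (e.filter (· ∈ A)).card + 1 := by nlinarith
    omega
  rw [sum_sum_mult_eq]
  calc Δ = quasiDeg 𝓔 v₀ := (hreg v₀).symm
    _ = ((𝓔.filter (fun e => v₀ ∈ e)).map (fun e => e.card - 1)).sum := rfl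
    _ ≤ ((𝓔.filter (fun e => v₀ ∈ e)).map
          (fun e => (e.filter (· ∈ K)).card * (e.filter (· ∈ A)).card)).sum :=
        Multiset.sum_map_le_sum_map _ _ hpt
    _ ≤ (𝓔.map (fun e => (e.filter (· ∈ K)).card * (e.filter (· ∈ A)).card)).sum := by
        conv_rhs => rw [← Multiset.filter_add_not (fun e => v₀ ∈ e) 𝓔]
        simp
end

section
/- Let G=(S,T;E) be a bipartite graph. G has a matching M and a family 𝓕 of pairwise node-disjoint S-links such that M ∪ (∪_{P∈𝓕}P) covers T if and only if G has a 𝚅-free 2-matching covering T. -/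
/-- An `S`-link `(u, v, w)`: a path `u - v - w` of length two with `u, w ∈ S`
distinct and middle node `v ∈ T` (edges are ordered `(S,T)` pairs). -/
def IsSLink {V : Type*} (E : Finset (V × V)) (p : V × V × V) : Prop :=
  (p.1, p.2.1) ∈ E ∧ (p.2.2, p.2.1) ∈ E ∧ p.1 ≠ p.2.2

/-- The nodes of an `S`-link. -/
def linkNodes {V : Type*} [DecidableEq V] (p : V × V × V) : Finset V :=
  {p.1, p.2.1, p.2.2}

/-- The two edges of an `S`-link. -/
def linkEdges {V : Type*} [DecidableEq V] (p : V × V × V) : Finset (V × V) :=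
  {(p.1, p.2.1), (p.2.2, p.2.1)}

/-- A family of pairwise node-disjoint `S`-links. -/
def DisjointLinks {V : Type*} [DecidableEq V] (𝓕 : Finset (V × V × V)) : Prop :=
  ∀ p ∈ 𝓕, ∀ q ∈ 𝓕, p ≠ q → Disjoint (linkNodes p) (linkNodes q)

/-- A 2-matching: a subset of the edges with all degrees at most two. -/
def Is2Matching {V : Type*} [DecidableEq V] (E N : Finset (V × V)) : Prop :=
  N ⊆ E ∧ ∀ v : V, bipDeg N v ≤ 2

/-- A 2-matching is `𝚅`-free if no connected component of it is a path of length two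
with both end-nodes in `T` (i.e. a path `t₁ - s - t₂`). -/
def VFree {V : Type*} [DecidableEq V] (N : Finset (V × V)) : Prop :=
  ¬ ∃ s t₁ t₂ : V, t₁ ≠ t₂ ∧ (s, t₁) ∈ N ∧ (s, t₂) ∈ N ∧
    bipDeg N s = 2 ∧ bipDeg N t₁ = 1 ∧ bipDeg N t₂ = 1

section helpers
set_option linter.unusedSectionVars false
variable {V : Type*} [DecidableEq V] {N N' : Finset (V × V)} {v : V} {e f g : V × V}

lemma bipDeg_mono (h : N' ⊆ N) (v : V) : bipDeg N' v ≤ bipDeg N v :=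
  Finset.card_le_card (Finset.filter_subset_filter _ h)

lemma bipDeg_preserved (h : N' ⊆ N)
    (hv : ∀ e ∈ N, (e.1 = v ∨ e.2 = v) → e ∈ N') : bipDeg N' v = bipDeg N v := by
  unfold bipDeg
  congr 1
  apply Finset.Subset.antisymm (Finset.filter_subset_filter _ h)
  intro x hx
  rw [Finset.mem_filter] at hx ⊢
  exact ⟨hv x hx.1 hx.2, hx.2⟩

lemma one_le_bipDeg (he : e ∈ N) (h : e.1 = v ∨ e.2 = v) : 1 ≤ bipDeg N v :=
  Finset.card_pos.mpr ⟨e, Finset.mem_filter.mpr ⟨he, h⟩⟩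

lemma eq_of_bipDeg_le_one (h : bipDeg N v ≤ 1) (he : e ∈ N) (hev : e.1 = v ∨ e.2 = v)
    (hf : f ∈ N) (hfv : f.1 = v ∨ f.2 = v) : e = f :=
  Finset.card_le_one.mp h e (Finset.mem_filter.mpr ⟨he, hev⟩) f (Finset.mem_filter.mpr ⟨hf, hfv⟩)

lemma mem_pair_of_bipDeg_le_two (h : bipDeg N v ≤ 2)
    (he : e ∈ N) (hev : e.1 = v ∨ e.2 = v) (hf : f ∈ N) (hfv : f.1 = v ∨ f.2 = v)
    (hef : e ≠ f) (hg : g ∈ N) (hgv : g.1 = v ∨ g.2 = v) : g = e ∨ g = f := by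
  by_contra hc
  push_neg at hc
  have : 2 < bipDeg N v := Finset.two_lt_card_iff.mpr
    ⟨e, f, g, Finset.mem_filter.mpr ⟨he, hev⟩, Finset.mem_filter.mpr ⟨hf, hfv⟩,
      Finset.mem_filter.mpr ⟨hg, hgv⟩, hef, (fun h' => hc.1 h'.symm), (fun h' => hc.2 h'.symm)⟩
  omega

lemma exists_other_edge (h : bipDeg N v ≠ 1) (he : e ∈ N) (hev : e.1 = v ∨ e.2 = v) :
    ∃ f ∈ N, (f.1 = v ∨ f.2 = v) ∧ f ≠ e := by
  have h1 : 1 ≤ bipDeg N v := one_le_bipDeg he hev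
  have : 1 < bipDeg N v := by omega
  obtain ⟨f, hf, hfe⟩ := Finset.exists_mem_ne this e
  rw [Finset.mem_filter] at hf
  exact ⟨f, hf.1, hf.2, hfe⟩

lemma covers_mono {A B : Finset (V × V)} (h : A ⊆ B) (hc : Covers A v) : Covers B v := by
  obtain ⟨e, he, hev⟩ := hc
  exact ⟨e, h he, hev⟩

lemma two_le_bipDeg (he : e ∈ N) (hev : e.1 = v ∨ e.2 = v) (hf : f ∈ N)
    (hfv : f.1 = v ∨ f.2 = v) (hef : e ≠ f) : 2 ≤ bipDeg N v :=
  Finset.one_lt_card_iff.mpr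
    ⟨e, f, Finset.mem_filter.mpr ⟨he, hev⟩, Finset.mem_filter.mpr ⟨hf, hfv⟩, hef⟩

lemma card_lt_of_missing (hsub : N' ⊆ N) (he : e ∈ N) (he' : e ∉ N') : N'.card < N.card :=
  Finset.card_lt_card ⟨hsub, fun h => he' (h he)⟩

/-- Composition of a new small matching `A` with a recursively obtained matching `M'`
whose edges avoid the nodes of `A`. -/
lemma compose_matching {S T : Finset V} {E : Finset (V × V)}
    (hST : Disjoint S T) (hE : E ⊆ S ×ˢ T)
    {N N' M' A : Finset (V × V)}
    (hNE : N ⊆ E) (hN'N : N' ⊆ N) (hA : A ⊆ N) (hAmatch : IsMatching A)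
    (hAclean : ∀ x ∈ N', ∀ a ∈ A, x.1 ≠ a.1 ∧ x.2 ≠ a.2)
    (hM' : M' ⊆ N') (hM'match : IsMatching M') :
    IsMatching (A ∪ M') ∧ A ∪ M' ⊆ N := by
  constructor
  · intro x hx y hy hxy
    have key : ∀ a ∈ A, ∀ m ∈ M', a.1 ≠ m.1 ∧ a.2 ≠ m.2 ∧ a.1 ≠ m.2 ∧ a.2 ≠ m.1 := by
      intro a ha m hm
      have hm' := hM' hm
      have h1 := hAclean m hm' a ha
      have haS : a.1 ∈ S := (Finset.mem_product.mp (hE (hNE (hA ha)))).1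
      have haT : a.2 ∈ T := (Finset.mem_product.mp (hE (hNE (hA ha)))).2
      have hmS : m.1 ∈ S := (Finset.mem_product.mp (hE (hNE (hN'N hm')))).1
      have hmT : m.2 ∈ T := (Finset.mem_product.mp (hE (hNE (hN'N hm')))).2
      refine ⟨fun hh => h1.1 hh.symm, fun hh => h1.2 hh.symm, ?_, ?_⟩
      · exact fun hh => Finset.disjoint_left.mp hST haS (hh ▸ hmT)
      · exact fun hh => Finset.disjoint_left.mp hST (hh ▸ hmS) haT
    rcases Finset.mem_union.mp hx with hx' | hx' <;> rcases Finset.mem_union.mp hy with hy' | hy'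
    · exact hAmatch x hx' y hy' hxy
    · exact key x hx' y hy'
    · obtain ⟨a, b, c, d⟩ := key y hy' x hx'
      exact ⟨fun h => a h.symm, fun h => b h.symm, fun h => d h.symm, fun h => c h.symm⟩
    · exact hM'match x hx' y hy' hxy
  · exact Finset.union_subset hA (hM'.trans hN'N)

end helpers

set_option maxHeartbeats 1000000 in
lemma reverse_dir {V : Type*} [DecidableEq V]
    (S T : Finset V) (E : Finset (V × V))
    (hST : Disjoint S T) (hE : E ⊆ S ×ˢ T) :
    ∀ (n : ℕ) (N : Finset (V × V)) (T' : Finset V), N.card ≤ n → T' ⊆ T →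
      N ⊆ E → (∀ e ∈ N, e.2 ∈ T') → (∀ v, bipDeg N v ≤ 2) → VFree N →
      (∀ t ∈ T', Covers N t) →
      ∃ M : Finset (V × V), M ⊆ N ∧ IsMatching M ∧
        ∃ 𝓕 : Finset (V × V × V), (∀ p ∈ 𝓕, linkEdges p ⊆ N ∧ p.1 ≠ p.2.2) ∧
          DisjointLinks 𝓕 ∧ ∀ t ∈ T', Covers (M ∪ 𝓕.biUnion linkEdges) t := by
  intro n
  induction n with
  | zero =>
    intro N T' hcard _ _ _ _ _ hcov
    have hN : N = ∅ := Finset.card_eq_zero.mp (Nat.le_antisymm hcard (Nat.zero_le _))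
    refine ⟨∅, by simp, by intro e he; simp at he, ∅, by intro p hp; simp at hp,
      by intro p hp; simp at hp, ?_⟩
    intro t ht
    exfalso
    obtain ⟨y, hy, _⟩ := hcov t ht
    rw [hN] at hy
    simp at hy
  | succ n IH =>
    intro N T' hcard hT'T hNE hinv hdeg hVF hcov
    have hS1 : ∀ x ∈ N, x.1 ∈ S := fun x hx => (Finset.mem_product.mp (hE (hNE hx))).1
    have hT2 : ∀ x ∈ N, x.2 ∈ T := fun x hx => (Finset.mem_product.mp (hE (hNE hx))).2
    have hSnT : ∀ v, v ∈ S → v ∈ T → False := fun v hs ht => Finset.disjoint_left.mp hST hs ht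
    have getEdge : ∀ τ ∈ T', ∃ σ, (σ, τ) ∈ N := by
      intro τ hτ
      obtain ⟨y, hy, hyv⟩ := hcov τ hτ
      rcases hyv with h | h
      · exact absurd (h ▸ hS1 y hy) (fun hs => hSnT τ hs (hT'T hτ))
      · exact ⟨y.1, by rw [← h, Prod.mk.eta]; exact hy⟩
    by_cases hdeg1 : ∃ t ∈ T', bipDeg N t = 1
    · obtain ⟨t, htT', hdt⟩ := hdeg1
      obtain ⟨s, he⟩ := getEdge t htT'
      have hsS : s ∈ S := hS1 _ he
      have htT : t ∈ T := hT2 _ he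
      -- every N-edge incident to t equals (s,t)
      have hedgt : ∀ x ∈ N, (x.1 = t ∨ x.2 = t) → x = (s, t) := by
        intro x hx hxt
        exact eq_of_bipDeg_le_one (le_of_eq hdt) hx hxt he (Or.inr rfl)
      by_cases hds : bipDeg N s = 1
      · -- CASE A : isolated edge (s,t)
        have hedgs : ∀ x ∈ N, (x.1 = s ∨ x.2 = s) → x = (s, t) := by
          intro x hx hxs
          exact eq_of_bipDeg_le_one (le_of_eq hds) hx hxs he (Or.inl rfl)
        set N' : Finset (V × V) :=
          N.filter (fun x => ¬(x.1 = s ∨ x.2 = s) ∧ ¬(x.1 = t ∨ x.2 = t)) with hN'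
        have hN'N : N' ⊆ N := Finset.filter_subset _ _
        have hmem : ∀ x, x ∈ N' ↔ x ∈ N ∧ x ≠ (s, t) := by
          intro x
          constructor
          · intro hx
            rw [hN', Finset.mem_filter] at hx
            exact ⟨hx.1, fun hh => hx.2.1 (by rw [hh]; exact Or.inl rfl)⟩
          · rintro ⟨hx, hxne⟩
            rw [hN', Finset.mem_filter]
            refine ⟨hx, fun hh => hxne (hedgs x hx hh), fun hh => hxne (hedgt x hx hh)⟩
        have heN' : (s, t) ∉ N' := fun hh => ((hmem _).mp hh).2 rfl
        obtain ⟨M', hM'N', hM'match, 𝓕', h𝓕', h𝓕'disj, hcov'⟩ :=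
          IH N' (T'.erase t)
            (by have := card_lt_of_missing hN'N he heN'; omega)
            ((Finset.erase_subset _ _).trans hT'T)
            (hN'N.trans hNE)
            (by
              intro x hx
              rw [hN', Finset.mem_filter] at hx
              exact Finset.mem_erase.mpr ⟨fun hh => hx.2.2 (Or.inr hh), hinv x hx.1⟩)
            (fun v => le_trans (bipDeg_mono hN'N v) (hdeg v))
            (by
              rintro ⟨σ, τ₁, τ₂, hτne, h1, h2, hσ2, hτ1, hτ2⟩
              have pres : ∀ v : V, v ≠ s → v ≠ t → bipDeg N' v = bipDeg N v := by
                intro v hvs hvt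
                apply bipDeg_preserved hN'N
                intro y hy hyv
                rw [hmem]
                refine ⟨hy, fun hh => ?_⟩
                rw [hh] at hyv
                rcases hyv with h | h
                · exact hvs h.symm
                · exact hvt h.symm
              have h1N := hN'N h1
              have h2N := hN'N h2
              have hσs : σ ≠ s := by
                have := (Finset.mem_filter.mp h1).2.1
                exact fun hh => this (Or.inl hh)
              have hσt : σ ≠ t := by
                have := (Finset.mem_filter.mp h1).2.2
                exact fun hh => this (Or.inl hh)
              have hτ1s : τ₁ ≠ s := fun hh => (Finset.mem_filter.mp h1).2.1 (Or.inr hh)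
              have hτ1t : τ₁ ≠ t := fun hh => (Finset.mem_filter.mp h1).2.2 (Or.inr hh)
              have hτ2s : τ₂ ≠ s := fun hh => (Finset.mem_filter.mp h2).2.1 (Or.inr hh)
              have hτ2t : τ₂ ≠ t := fun hh => (Finset.mem_filter.mp h2).2.2 (Or.inr hh)
              exact hVF ⟨σ, τ₁, τ₂, hτne, h1N, h2N,
                (pres σ hσs hσt) ▸ hσ2, (pres τ₁ hτ1s hτ1t) ▸ hτ1, (pres τ₂ hτ2s hτ2t) ▸ hτ2⟩)
            (by
              intro τ hτ
              have hτT' := Finset.mem_of_mem_erase hτ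
              have hτt := Finset.ne_of_mem_erase hτ
              obtain ⟨σ, hστ⟩ := getEdge τ hτT'
              refine ⟨(σ, τ), (hmem _).mpr ⟨hστ, fun hh => hτt (congrArg Prod.snd hh)⟩, Or.inr rfl⟩)
        obtain ⟨hMmatch, hMN⟩ := compose_matching hST hE hNE hN'N
          (Finset.singleton_subset_iff.mpr he)
          (by intro a ha b hb hab; simp at ha hb; rw [ha, hb] at hab; exact absurd rfl hab)
          (by
            intro x hx a ha
            simp only [Finset.mem_singleton] at ha
            rw [ha]
            rw [hN', Finset.mem_filter] at hx
            exact ⟨fun hh => hx.2.1 (Or.inl hh), fun hh => hx.2.2 (Or.inr hh)⟩)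
          hM'N' hM'match
        refine ⟨{(s, t)} ∪ M', hMN, hMmatch, 𝓕',
          (fun p hp => ⟨(h𝓕' p hp).1.trans hN'N, (h𝓕' p hp).2⟩), h𝓕'disj, ?_⟩
        intro τ hτ
        by_cases hτt : τ = t
        · exact ⟨(s, t), Finset.mem_union_left _ (Finset.mem_union_left _ (by simp)),
            Or.inr hτt.symm⟩
        · apply covers_mono _ (hcov' τ (Finset.mem_erase.mpr ⟨hτt, hτ⟩))
          exact Finset.union_subset_union Finset.subset_union_right (le_refl _)
      · -- s has degree 2
        have hds2 : bipDeg N s = 2 := by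
          have h1 : 1 ≤ bipDeg N s := one_le_bipDeg he (Or.inl rfl)
          have h2 := hdeg s
          omega
        obtain ⟨f, hfN, hfs, hfne⟩ := exists_other_edge hds he (Or.inl rfl)
        have hf1 : f.1 = s := by
          rcases hfs with h | h
          · exact h
          · exact absurd (h ▸ hT2 f hfN) (fun ht => hSnT s hsS ht)
        set t' := f.2 with ht'def
        have hfmem : (s, t') ∈ N := by rw [ht'def, ← hf1, Prod.mk.eta]; exact hfN
        have ht'T' : t' ∈ T' := hinv f hfN
        have ht'T : t' ∈ T := hT2 f hfN
        have ht't : t' ≠ t := by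
          intro hh
          exact hfne (Prod.ext_iff.mpr ⟨hf1, hh⟩)
        have hedgs : ∀ x ∈ N, (x.1 = s ∨ x.2 = s) → x = (s, t) ∨ x = (s, t') :=
          fun x hx hxs => mem_pair_of_bipDeg_le_two (hdeg s) he (Or.inl rfl) hfmem (Or.inl rfl)
            (fun hh => ht't (congrArg Prod.snd hh).symm) hx hxs
        have hdt' : bipDeg N t' = 2 := by
          rcases Nat.lt_or_ge (bipDeg N t') 2 with hlt | hge
          · exfalso
            have hd1' : bipDeg N t' = 1 := by
              have hx : 1 ≤ bipDeg N t' := one_le_bipDeg hfmem (Or.inr rfl); omega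
            exact hVF ⟨s, t, t', (fun hh => ht't hh.symm), he, hfmem, hds2, hdt, hd1'⟩
          · have := hdeg t'; omega
        obtain ⟨g, hgN, hgt', hgne⟩ :=
          exists_other_edge (by omega : bipDeg N t' ≠ 1) hfmem (Or.inr rfl)
        have hg2 : g.2 = t' := by
          rcases hgt' with h | h
          · exact absurd (h ▸ hS1 g hgN) (fun hs => hSnT t' hs ht'T)
          · exact h
        set s' := g.1 with hs'def
        have hgmem : (s', t') ∈ N := by rw [hs'def, ← hg2, Prod.mk.eta]; exact hgN
        have hs'S : s' ∈ S := hS1 g hgN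
        have hgneP : g ≠ (s, t') := hgne
        have hs's : s' ≠ s := by
          intro hh
          exact hgneP (Prod.ext_iff.mpr ⟨hh, hg2⟩)
        have hedgt' : ∀ x ∈ N, (x.1 = t' ∨ x.2 = t') → x = (s, t') ∨ x = (s', t') := by
          intro x hx hxt'
          exact mem_pair_of_bipDeg_le_two (hdeg t') hfmem (Or.inr rfl) hgmem (Or.inr rfl)
            (fun hh => hs's (congrArg Prod.fst hh).symm) hx hxt'
        by_cases hguard : ∃ z ∈ N, z ≠ (s', t') ∧ z.1 = s' ∧ bipDeg N z.2 = 1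
        · -- CASE 5-PATH
          obtain ⟨z, hzN, hzne, hz1, hzdeg⟩ := hguard
          set t'' := z.2 with ht''def
          have hhmem : (s', t'') ∈ N := by rw [ht''def, ← hz1, Prod.mk.eta]; exact hzN
          have ht''t' : t'' ≠ t' := fun hh => hzne (Prod.ext_iff.mpr ⟨hz1, hh⟩)
          have ht''T' : t'' ∈ T' := hinv z hzN
          have ht''T : t'' ∈ T := hT2 z hzN
          have ht''t : t'' ≠ t := by
            intro hh
            have hz2t : z.2 = t := by rw [← ht''def]; exact hh
            have hzst : z = (s, t) := hedgt z hzN (Or.inr hz2t)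
            exact hs's (by rw [hs'def] at hz1 ⊢; rw [← hz1, hzst])
          have hdegs' : bipDeg N s' = 2 := by
            have h2 : 2 ≤ bipDeg N s' := two_le_bipDeg hgmem (Or.inl rfl) hhmem (Or.inl rfl)
              (fun hh => ht''t' (congrArg Prod.snd hh).symm)
            have := hdeg s'
            omega
          have hdt'' : bipDeg N t'' = 1 := hzdeg
          have hedgs' : ∀ x ∈ N, (x.1 = s' ∨ x.2 = s') → x = (s', t') ∨ x = (s', t'') :=
            fun x hx hxs => mem_pair_of_bipDeg_le_two (hdeg s') hgmem (Or.inl rfl)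
              hhmem (Or.inl rfl) (fun hh => ht''t' (congrArg Prod.snd hh).symm) hx hxs
          have hedgt'' : ∀ x ∈ N, (x.1 = t'' ∨ x.2 = t'') → x = (s', t'') :=
            fun x hx hxt => eq_of_bipDeg_le_one (le_of_eq hdt'') hx hxt hhmem (Or.inr rfl)
          set N' : Finset (V × V) :=
            N.filter (fun x => ¬(x.1 = s ∨ x.2 = s) ∧ ¬(x.1 = t ∨ x.2 = t) ∧
              ¬(x.1 = t' ∨ x.2 = t') ∧ ¬(x.1 = s' ∨ x.2 = s') ∧
              ¬(x.1 = t'' ∨ x.2 = t'')) with hN'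
          have hN'N : N' ⊆ N := Finset.filter_subset _ _
          have hmem : ∀ x, x ∈ N' ↔ x ∈ N ∧ x ≠ (s, t) ∧ x ≠ (s, t') ∧
              x ≠ (s', t') ∧ x ≠ (s', t'') := by
            intro x
            constructor
            · intro hx
              rw [hN', Finset.mem_filter] at hx
              refine ⟨hx.1, fun hh => hx.2.1 (by rw [hh]; exact Or.inl rfl),
                fun hh => hx.2.1 (by rw [hh]; exact Or.inl rfl),
                fun hh => hx.2.2.2.2.1 (by rw [hh]; exact Or.inl rfl),
                fun hh => hx.2.2.2.2.1 (by rw [hh]; exact Or.inl rfl)⟩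
            · rintro ⟨hx, hx1, hx2, hx3, hx4⟩
              rw [hN', Finset.mem_filter]
              refine ⟨hx, fun hh => ?_, fun hh => ?_, fun hh => ?_, fun hh => ?_, fun hh => ?_⟩
              · rcases hedgs x hx hh with h | h
                exacts [hx1 h, hx2 h]
              · exact hx1 (hedgt x hx hh)
              · rcases hedgt' x hx hh with h | h
                exacts [hx2 h, hx3 h]
              · rcases hedgs' x hx hh with h | h
                exacts [hx3 h, hx4 h]
              · exact hx4 (hedgt'' x hx hh)
          have heN' : (s, t) ∉ N' := fun hh => ((hmem _).mp hh).2.1 rfl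
          obtain ⟨M', hM'N', hM'match, 𝓕', h𝓕', h𝓕'disj, hcov'⟩ :=
            IH N' (((T'.erase t).erase t').erase t'')
              (by have := card_lt_of_missing hN'N he heN'; omega)
              (((Finset.erase_subset _ _).trans
                ((Finset.erase_subset _ _).trans (Finset.erase_subset _ _))).trans hT'T)
              (hN'N.trans hNE)
              (by
                intro x hx
                have hx' := (hmem x).mp hx
                rw [hN', Finset.mem_filter] at hx
                refine Finset.mem_erase.mpr ⟨fun hh => hx.2.2.2.2.2 (Or.inr hh),
                  Finset.mem_erase.mpr ⟨fun hh => hx.2.2.2.1 (Or.inr hh),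
                  Finset.mem_erase.mpr ⟨fun hh => hx.2.2.1 (Or.inr hh), hinv x hx.1⟩⟩⟩)
              (fun v => le_trans (bipDeg_mono hN'N v) (hdeg v))
              (by
                rintro ⟨σ, τ₁, τ₂, hτne, h1, h2, hσ2, hτ1, hτ2⟩
                have h1N := hN'N h1
                have h2N := hN'N h2
                have pres : ∀ v : V, v ≠ s → v ≠ t → v ≠ t' → v ≠ s' → v ≠ t'' →
                    bipDeg N' v = bipDeg N v := by
                  intro v v1 v2 v3 v4 v5
                  apply bipDeg_preserved hN'N
                  intro y hy hyv
                  rw [hmem]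
                  refine ⟨hy, fun hh => ?_, fun hh => ?_, fun hh => ?_, fun hh => ?_⟩
                  · rw [hh] at hyv; rcases hyv with h' | h'
                    exacts [v1 h'.symm, v2 h'.symm]
                  · rw [hh] at hyv; rcases hyv with h' | h'
                    exacts [v1 h'.symm, v3 h'.symm]
                  · rw [hh] at hyv; rcases hyv with h' | h'
                    exacts [v4 h'.symm, v3 h'.symm]
                  · rw [hh] at hyv; rcases hyv with h' | h'
                    exacts [v4 h'.symm, v5 h'.symm]
                have hσS : σ ∈ S := hS1 _ h1N
                have hτ1T : τ₁ ∈ T := hT2 _ h1N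
                have hτ2T : τ₂ ∈ T := hT2 _ h2N
                have f1 := (Finset.mem_filter.mp h1).2
                have f2 := (Finset.mem_filter.mp h2).2
                refine hVF ⟨σ, τ₁, τ₂, hτne, h1N, h2N, ?_, ?_, ?_⟩
                · rw [← pres σ (fun hh => f1.1 (Or.inl hh))
                    (fun hh => hSnT σ hσS (hh ▸ htT)) (fun hh => hSnT σ hσS (hh ▸ ht'T))
                    (fun hh => f1.2.2.2.1 (Or.inl hh)) (fun hh => hSnT σ hσS (hh ▸ ht''T))]
                  exact hσ2
                · rw [← pres τ₁ (fun hh => hSnT s hsS (hh ▸ hτ1T))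
                    (fun hh => f1.2.1 (Or.inr hh)) (fun hh => f1.2.2.1 (Or.inr hh))
                    (fun hh => hSnT s' hs'S (hh ▸ hτ1T)) (fun hh => f1.2.2.2.2 (Or.inr hh))]
                  exact hτ1
                · rw [← pres τ₂ (fun hh => hSnT s hsS (hh ▸ hτ2T))
                    (fun hh => f2.2.1 (Or.inr hh)) (fun hh => f2.2.2.1 (Or.inr hh))
                    (fun hh => hSnT s' hs'S (hh ▸ hτ2T)) (fun hh => f2.2.2.2.2 (Or.inr hh))]
                  exact hτ2)
              (by
                intro τ hτ
                have hτ3 := Finset.ne_of_mem_erase hτ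
                have hτb := Finset.mem_of_mem_erase hτ
                have hτ2' := Finset.ne_of_mem_erase hτb
                have hτc := Finset.mem_of_mem_erase hτb
                have hτ1' := Finset.ne_of_mem_erase hτc
                have hτT'' := Finset.mem_of_mem_erase hτc
                obtain ⟨σ, hστ⟩ := getEdge τ hτT''
                refine ⟨(σ, τ), (hmem _).mpr ⟨hστ, ?_, ?_, ?_, ?_⟩, Or.inr rfl⟩
                · exact fun hh => hτ1' (congrArg Prod.snd hh)
                · exact fun hh => hτ2' (congrArg Prod.snd hh)
                · exact fun hh => hτ2' (congrArg Prod.snd hh)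
                · exact fun hh => hτ3 (congrArg Prod.snd hh))
          -- compose
          have hAmatch : IsMatching ({(s, t), (s', t'')} : Finset (V × V)) := by
            intro a ha b hb hab
            simp only [Finset.mem_insert, Finset.mem_singleton] at ha hb
            rcases ha with ha | ha <;> rcases hb with hb | hb <;> rw [ha, hb] at hab ⊢
            · exact absurd rfl hab
            · exact ⟨fun hh => hs's (show s = s' from hh).symm,
                fun hh => ht''t (show t = t'' from hh).symm,
                fun hh => hSnT s hsS ((show s = t'' from hh) ▸ ht''T),
                fun hh => hSnT s' hs'S ((show t = s' from hh).symm ▸ htT)⟩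
            · exact ⟨fun hh => hs's (show s' = s from hh),
                fun hh => ht''t (show t'' = t from hh),
                fun hh => hSnT s' hs'S ((show s' = t from hh) ▸ htT),
                fun hh => hSnT s hsS ((show t'' = s from hh).symm ▸ ht''T)⟩
            · exact absurd rfl hab
          obtain ⟨hMmatch, hMN⟩ := compose_matching hST hE hNE hN'N
            (by
              intro a ha
              simp only [Finset.mem_insert, Finset.mem_singleton] at ha
              rcases ha with ha | ha <;> rw [ha]
              exacts [he, hhmem])
            hAmatch
            (by
              intro x hx a ha
              have hx' := Finset.mem_filter.mp hx
              simp only [Finset.mem_insert, Finset.mem_singleton] at ha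
              rcases ha with ha | ha <;> rw [ha]
              · exact ⟨fun hh => hx'.2.1 (Or.inl hh), fun hh => hx'.2.2.1 (Or.inr hh)⟩
              · exact ⟨fun hh => hx'.2.2.2.2.1 (Or.inl hh), fun hh => hx'.2.2.2.2.2 (Or.inr hh)⟩)
            hM'N' hM'match
          set p0 : V × V × V := (s, t', s') with hp0
          have hp0edges : linkEdges p0 ⊆ N := by
            intro y hy
            rw [hp0, linkEdges] at hy
            simp only [Finset.mem_insert, Finset.mem_singleton] at hy
            rcases hy with hy | hy <;> rw [hy]
            exacts [hfmem, hgmem]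
          have hnoN' : ∀ x ∈ N', ∀ v ∈ linkNodes p0, x.1 ≠ v ∧ x.2 ≠ v := by
            intro x hx v hv
            have hx' := Finset.mem_filter.mp hx
            rw [hp0, linkNodes] at hv
            simp only [Finset.mem_insert, Finset.mem_singleton] at hv
            rcases hv with hv | hv | hv <;> rw [hv]
            · exact ⟨fun hh => hx'.2.1 (Or.inl hh), fun hh => hx'.2.1 (Or.inr hh)⟩
            · exact ⟨fun hh => hx'.2.2.2.1 (Or.inl hh), fun hh => hx'.2.2.2.1 (Or.inr hh)⟩
            · exact ⟨fun hh => hx'.2.2.2.2.1 (Or.inl hh), fun hh => hx'.2.2.2.2.1 (Or.inr hh)⟩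
          have hlinkN' : ∀ q ∈ 𝓕', ∀ v ∈ linkNodes q, ∃ x ∈ N', x.1 = v ∨ x.2 = v := by
            intro q hq v hv
            have he1 : (q.1, q.2.1) ∈ N' := (h𝓕' q hq).1 (by simp [linkEdges])
            have he2 : (q.2.2, q.2.1) ∈ N' := (h𝓕' q hq).1 (by simp [linkEdges])
            rw [linkNodes] at hv
            simp only [Finset.mem_insert, Finset.mem_singleton] at hv
            rcases hv with hv | hv | hv
            · exact ⟨(q.1, q.2.1), he1, Or.inl hv.symm⟩
            · exact ⟨(q.1, q.2.1), he1, Or.inr hv.symm⟩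
            · exact ⟨(q.2.2, q.2.1), he2, Or.inl hv.symm⟩
          have hdisjnew : ∀ q ∈ 𝓕', Disjoint (linkNodes p0) (linkNodes q) := by
            intro q hq
            rw [Finset.disjoint_left]
            intro a hap haq
            obtain ⟨x, hx, hxv⟩ := hlinkN' q hq a haq
            obtain ⟨c1, c2⟩ := hnoN' x hx a hap
            rcases hxv with h | h
            exacts [c1 h, c2 h]
          refine ⟨{(s, t), (s', t'')} ∪ M', hMN, hMmatch, insert p0 𝓕', ?_, ?_, ?_⟩
          · intro p hp
            rcases Finset.mem_insert.mp hp with hp | hp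
            · rw [hp]
              exact ⟨hp0edges, fun hh => hs's hh.symm⟩
            · exact ⟨(h𝓕' p hp).1.trans hN'N, (h𝓕' p hp).2⟩
          · intro p hp q hq hpq
            rcases Finset.mem_insert.mp hp with hp | hp <;>
              rcases Finset.mem_insert.mp hq with hq | hq
            · exact absurd (hp.trans hq.symm) hpq
            · rw [hp]; exact hdisjnew q hq
            · rw [hq]; exact (hdisjnew p hp).symm
            · exact h𝓕'disj p hp q hq hpq
          · intro τ hτ
            by_cases hc1 : τ = t
            · exact ⟨(s, t), Finset.mem_union_left _ (Finset.mem_union_left _ (by simp)),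
                Or.inr hc1.symm⟩
            by_cases hc2 : τ = t'
            · refine ⟨(s, t'), Finset.mem_union_right _ ?_, Or.inr hc2.symm⟩
              exact Finset.mem_biUnion.mpr ⟨p0, Finset.mem_insert_self _ _, by rw [hp0]; simp [linkEdges]⟩
            by_cases hc3 : τ = t''
            · exact ⟨(s', t''), Finset.mem_union_left _ (Finset.mem_union_left _ (by simp)),
                Or.inr hc3.symm⟩
            apply covers_mono _ (hcov' τ (Finset.mem_erase.mpr ⟨hc3,
              Finset.mem_erase.mpr ⟨hc2, Finset.mem_erase.mpr ⟨hc1, hτ⟩⟩⟩))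
            apply Finset.union_subset_union Finset.subset_union_right
            apply Finset.biUnion_subset_biUnion_of_subset_left
            exact Finset.subset_insert _ _
        · -- CASE B'
          push_neg at hguard
          set N' : Finset (V × V) :=
            N.filter (fun x => ¬(x.1 = s ∨ x.2 = s) ∧ ¬(x.1 = t ∨ x.2 = t)) with hN'
          have hN'N : N' ⊆ N := Finset.filter_subset _ _
          have hmem : ∀ x, x ∈ N' ↔ x ∈ N ∧ x ≠ (s, t) ∧ x ≠ (s, t') := by
            intro x
            constructor
            · intro hx
              rw [hN', Finset.mem_filter] at hx
              exact ⟨hx.1, fun hh => hx.2.1 (by rw [hh]; exact Or.inl rfl),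
                fun hh => hx.2.1 (by rw [hh]; exact Or.inl rfl)⟩
            · rintro ⟨hx, hx1, hx2⟩
              rw [hN', Finset.mem_filter]
              refine ⟨hx, fun hh => ?_, fun hh => ?_⟩
              · rcases hedgs x hx hh with h | h
                exacts [hx1 h, hx2 h]
              · exact hx1 (hedgt x hx hh)
          have heN' : (s, t) ∉ N' := fun hh => ((hmem _).mp hh).2.1 rfl
          have hfN' : (s, t') ∉ N' := fun hh => ((hmem _).mp hh).2.2 rfl
          have hgN' : (s', t') ∈ N' := (hmem _).mpr ⟨hgmem,
            fun hh => ht't (congrArg Prod.snd hh),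
            fun hh => hs's (congrArg Prod.fst hh)⟩
          have pres : ∀ v : V, v ≠ s → v ≠ t → v ≠ t' → bipDeg N' v = bipDeg N v := by
            intro v v1 v2 v3
            apply bipDeg_preserved hN'N
            intro y hy hyv
            rw [hmem]
            refine ⟨hy, fun hh => ?_, fun hh => ?_⟩
            · rw [hh] at hyv; rcases hyv with h' | h'
              exacts [v1 h'.symm, v2 h'.symm]
            · rw [hh] at hyv; rcases hyv with h' | h'
              exacts [v1 h'.symm, v3 h'.symm]
          obtain ⟨M', hM'N', hM'match, 𝓕', h𝓕', h𝓕'disj, hcov'⟩ :=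
            IH N' (T'.erase t)
              (by have := card_lt_of_missing hN'N he heN'; omega)
              ((Finset.erase_subset _ _).trans hT'T)
              (hN'N.trans hNE)
              (by
                intro x hx
                have hx' := Finset.mem_filter.mp hx
                exact Finset.mem_erase.mpr ⟨fun hh => hx'.2.2 (Or.inr hh), hinv x hx'.1⟩)
              (fun v => le_trans (bipDeg_mono hN'N v) (hdeg v))
              (by
                rintro ⟨σ, τ₁, τ₂, hτne, h1, h2, hσ2, hτ1, hτ2⟩
                have h1N := hN'N h1
                have h2N := hN'N h2
                have hσS : σ ∈ S := hS1 _ h1N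
                have hτ1T : τ₁ ∈ T := hT2 _ h1N
                have hτ2T : τ₂ ∈ T := hT2 _ h2N
                have f1 := (Finset.mem_filter.mp h1).2
                have f2 := (Finset.mem_filter.mp h2).2
                have hσs : σ ≠ s := fun hh => f1.1 (Or.inl hh)
                have hσt : σ ≠ t := fun hh => hSnT σ hσS (hh ▸ htT)
                have hσt' : σ ≠ t' := fun hh => hSnT σ hσS (hh ▸ ht'T)
                have hσpres : bipDeg N σ = 2 := (pres σ hσs hσt hσt') ▸ hσ2
                have main : ∀ τa τb : V, τa ≠ τb → (σ, τa) ∈ N' → (σ, τb) ∈ N' →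
                    bipDeg N' τb = 1 → τa = t' → False := by
                  intro τa τb hab ha hb hdb hat'
                  rw [hat'] at ha
                  rcases hedgt' (σ, t') (hN'N ha) (Or.inr rfl) with h | h
                  · exact hσs (congrArg Prod.fst h)
                  · have hσs' : σ = s' := congrArg Prod.fst h
                    have hτbT : τb ∈ T := hT2 _ (hN'N hb)
                    have fb := (Finset.mem_filter.mp hb).2
                    have hτbs : τb ≠ s := fun hh => hSnT τb (hh ▸ hsS) hτbT
                    have hτbt : τb ≠ t := fun hh => fb.2 (Or.inr hh)
                    have hτbt' : τb ≠ t' := fun hh => hab (hat'.trans hh.symm)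
                    apply hguard (σ, τb) (hN'N hb)
                      (fun hh => hτbt' (congrArg Prod.snd hh)) hσs'
                    rw [← pres τb hτbs hτbt hτbt']
                    exact hdb
                by_cases h1t' : τ₁ = t'
                · exact main τ₁ τ₂ hτne h1 h2 hτ2 h1t'
                by_cases h2t' : τ₂ = t'
                · exact main τ₂ τ₁ hτne.symm h2 h1 hτ1 h2t'
                have hτ1s : τ₁ ≠ s := fun hh => hSnT τ₁ (hh ▸ hsS) hτ1T
                have hτ1t : τ₁ ≠ t := fun hh => f1.2 (Or.inr hh)
                have hτ2s : τ₂ ≠ s := fun hh => hSnT τ₂ (hh ▸ hsS) hτ2T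
                have hτ2t : τ₂ ≠ t := fun hh => f2.2 (Or.inr hh)
                exact hVF ⟨σ, τ₁, τ₂, hτne, h1N, h2N, hσpres,
                  (pres τ₁ hτ1s hτ1t h1t') ▸ hτ1, (pres τ₂ hτ2s hτ2t h2t') ▸ hτ2⟩)
              (by
                intro τ hτ
                have hτt := Finset.ne_of_mem_erase hτ
                have hτT' := Finset.mem_of_mem_erase hτ
                by_cases hτt' : τ = t'
                · exact ⟨(s', t'), hgN', Or.inr hτt'.symm⟩
                · obtain ⟨σ, hστ⟩ := getEdge τ hτT'
                  refine ⟨(σ, τ), (hmem _).mpr ⟨hστ,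
                    fun hh => hτt (congrArg Prod.snd hh),
                    fun hh => hτt' (congrArg Prod.snd hh)⟩, Or.inr rfl⟩)
          obtain ⟨hMmatch, hMN⟩ := compose_matching hST hE hNE hN'N
            (Finset.singleton_subset_iff.mpr he)
            (by intro a ha b hb hab; simp at ha hb; rw [ha, hb] at hab; exact absurd rfl hab)
            (by
              intro x hx a ha
              simp only [Finset.mem_singleton] at ha
              rw [ha]
              have hx' := Finset.mem_filter.mp hx
              exact ⟨fun hh => hx'.2.1 (Or.inl hh), fun hh => hx'.2.2 (Or.inr hh)⟩)
            hM'N' hM'match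
          refine ⟨{(s, t)} ∪ M', hMN, hMmatch, 𝓕',
            (fun p hp => ⟨(h𝓕' p hp).1.trans hN'N, (h𝓕' p hp).2⟩), h𝓕'disj, ?_⟩
          intro τ hτ
          by_cases hτt : τ = t
          · exact ⟨(s, t), Finset.mem_union_left _ (Finset.mem_union_left _ (by simp)),
              Or.inr hτt.symm⟩
          · apply covers_mono _ (hcov' τ (Finset.mem_erase.mpr ⟨hτt, hτ⟩))
            exact Finset.union_subset_union Finset.subset_union_right (le_refl _)
    · -- no T'-node of degree 1 : CASE C or empty
      push_neg at hdeg1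
      rcases Finset.eq_empty_or_nonempty T' with hT'e | ⟨t, htT'⟩
      · refine ⟨∅, by simp, by intro e he; simp at he, ∅, by intro p hp; simp at hp,
          by intro p hp; simp at hp, ?_⟩
        intro τ hτ
        rw [hT'e] at hτ
        simp at hτ
      · obtain ⟨s₁, he⟩ := getEdge t htT'
        have hsS : s₁ ∈ S := hS1 _ he
        have htT : t ∈ T := hT2 _ he
        set N' : Finset (V × V) :=
          N.filter (fun x => ¬(x.1 = s₁ ∨ x.2 = s₁) ∧ ¬(x.1 = t ∨ x.2 = t)) with hN'
        have hN'N : N' ⊆ N := Finset.filter_subset _ _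
        have hmem : ∀ x, x ∈ N' ↔ x ∈ N ∧ x.1 ≠ s₁ ∧ x.2 ≠ t := by
          intro x
          constructor
          · intro hx
            rw [hN', Finset.mem_filter] at hx
            exact ⟨hx.1, fun hh => hx.2.1 (Or.inl hh), fun hh => hx.2.2 (Or.inr hh)⟩
          · rintro ⟨hx, hx1, hx2⟩
            rw [hN', Finset.mem_filter]
            refine ⟨hx, fun hh => ?_, fun hh => ?_⟩
            · rcases hh with h | h
              · exact hx1 h
              · exact hSnT s₁ hsS (h ▸ hT2 x hx)
            · rcases hh with h | h
              · exact hSnT t (h ▸ hS1 x hx) htT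
              · exact hx2 h
        have heN' : (s₁, t) ∉ N' := fun hh => ((hmem _).mp hh).2.1 rfl
        obtain ⟨M', hM'N', hM'match, 𝓕', h𝓕', h𝓕'disj, hcov'⟩ :=
          IH N' (T'.erase t)
            (by have := card_lt_of_missing hN'N he heN'; omega)
            ((Finset.erase_subset _ _).trans hT'T)
            (hN'N.trans hNE)
            (by
              intro x hx
              have hx' := (hmem x).mp hx
              exact Finset.mem_erase.mpr ⟨hx'.2.2, hinv x hx'.1⟩)
            (fun v => le_trans (bipDeg_mono hN'N v) (hdeg v))
            (by
              rintro ⟨σ, τ₁, τ₂, hτne, h1, h2, hσ2, hτ1, hτ2⟩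
              have h1N := hN'N h1
              have h2N := hN'N h2
              have claim : ∀ τi : V, (σ, τi) ∈ N' → bipDeg N' τi = 1 → (s₁, τi) ∈ N := by
                intro τi hi hdi
                have hiN := hN'N hi
                have hτiT' : τi ∈ T' := hinv _ hiN
                have hτiT : τi ∈ T := hT2 _ hiN
                have hz : ∃ z ∈ N, (z.1 = τi ∨ z.2 = τi) ∧ z ∉ N' := by
                  by_contra hc
                  push_neg at hc
                  exact hdeg1 τi hτiT'
                    ((bipDeg_preserved hN'N (fun y hy hyv => hc y hy hyv)) ▸ hdi)
                obtain ⟨z, hzN, hzv, hzN'⟩ := hz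
                have hz2 : z.2 = τi := by
                  rcases hzv with h | h
                  · exact absurd (h ▸ hS1 z hzN) (fun hs => hSnT τi hs hτiT)
                  · exact h
                have hτit : τi ≠ t := fun hh => ((hmem _).mp hi).2.2 hh
                have hz1 : z.1 = s₁ := by
                  by_contra hz1
                  exact hzN' ((hmem z).mpr ⟨hzN, hz1, fun hh => hτit (hz2 ▸ hh)⟩)
                have : z = (s₁, τi) := Prod.ext_iff.mpr ⟨hz1, hz2⟩
                exact this ▸ hzN
              have hz1 := claim τ₁ h1 hτ1
              have hz2 := claim τ₂ h2 hτ2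
              have hτ1t : τ₁ ≠ t := fun hh => ((hmem _).mp h1).2.2 hh
              have hτ2t : τ₂ ≠ t := fun hh => ((hmem _).mp h2).2.2 hh
              have := mem_pair_of_bipDeg_le_two (hdeg s₁) hz1 (Or.inl rfl) hz2 (Or.inl rfl)
                (fun hh => hτne (congrArg Prod.snd hh)) he (Or.inl rfl)
              rcases this with h | h
              · exact hτ1t (congrArg Prod.snd h).symm
              · exact hτ2t (congrArg Prod.snd h).symm)
            (by
              intro τ hτ
              have hτt := Finset.ne_of_mem_erase hτ
              have hτT' := Finset.mem_of_mem_erase hτ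
              obtain ⟨σ, hστ⟩ := getEdge τ hτT'
              by_cases hσs : σ = s₁
              · have hdτ : bipDeg N τ = 2 := by
                  have h1 : 1 ≤ bipDeg N τ := one_le_bipDeg hστ (Or.inr rfl)
                  have h2 := hdeg τ
                  have h3 := hdeg1 τ hτT'
                  omega
                obtain ⟨y, hyN, hyv, hyne⟩ :=
                  exists_other_edge (hdeg1 τ hτT') hστ (Or.inr rfl)
                have hy2 : y.2 = τ := by
                  rcases hyv with h | h
                  · exact absurd (h ▸ hS1 y hyN)
                      (fun hs => hSnT τ hs (hT'T hτT'))
                  · exact h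
                have hy1 : y.1 ≠ s₁ := by
                  intro hh
                  exact hyne (Prod.ext_iff.mpr ⟨hh.trans hσs.symm, hy2⟩)
                exact ⟨y, (hmem y).mpr ⟨hyN, hy1, fun hh => hτt (hy2 ▸ hh)⟩, Or.inr hy2⟩
              · exact ⟨(σ, τ), (hmem _).mpr ⟨hστ, hσs, fun hh => hτt hh⟩, Or.inr rfl⟩)
        obtain ⟨hMmatch, hMN⟩ := compose_matching hST hE hNE hN'N
          (Finset.singleton_subset_iff.mpr he)
          (by intro a ha b hb hab; simp at ha hb; rw [ha, hb] at hab; exact absurd rfl hab)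
          (by
            intro x hx a ha
            simp only [Finset.mem_singleton] at ha
            rw [ha]
            have hx' := (hmem x).mp hx
            exact ⟨hx'.2.1, hx'.2.2⟩)
          hM'N' hM'match
        refine ⟨{(s₁, t)} ∪ M', hMN, hMmatch, 𝓕',
          (fun p hp => ⟨(h𝓕' p hp).1.trans hN'N, (h𝓕' p hp).2⟩), h𝓕'disj, ?_⟩
        intro τ hτ
        by_cases hτt : τ = t
        · exact ⟨(s₁, t), Finset.mem_union_left _ (Finset.mem_union_left _ (by simp)),
            Or.inr hτt.symm⟩
        · apply covers_mono _ (hcov' τ (Finset.mem_erase.mpr ⟨hτt, hτ⟩))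
          exact Finset.union_subset_union Finset.subset_union_right (le_refl _)


section fwd
variable {V : Type*} [DecidableEq V]

lemma bipDeg_le_two_of_pair {N : Finset (V × V)} {v : V} (a b : V × V)
    (h : ∀ e ∈ N, (e.1 = v ∨ e.2 = v) → e = a ∨ e = b) : bipDeg N v ≤ 2 := by
  have : N.filter (fun e => e.1 = v ∨ e.2 = v) ⊆ {a, b} := by
    intro x hx
    rw [Finset.mem_filter] at hx
    simpa using h x hx.1 hx.2
  calc bipDeg N v ≤ ({a, b} : Finset (V × V)).card := Finset.card_le_card this
    _ ≤ 2 := Finset.card_insert_le _ _ |>.trans (by simp)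

lemma forward_dir {V : Type*} [DecidableEq V]
    (S T : Finset V) (E : Finset (V × V))
    (hST : Disjoint S T) (hE : E ⊆ S ×ˢ T)
    (M : Finset (V × V)) (hME : M ⊆ E) (hM : IsMatching M)
    (𝓕 : Finset (V × V × V)) (hlink : ∀ p ∈ 𝓕, IsSLink E p)
    (hdisj : DisjointLinks 𝓕)
    (hcov : ∀ t ∈ T, Covers (M ∪ 𝓕.biUnion linkEdges) t) :
    ∃ N : Finset (V × V), Is2Matching E N ∧ VFree N ∧ ∀ t ∈ T, Covers N t := by
  classical
  set Nodes : Finset V := 𝓕.biUnion linkNodes with hNodes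
  set L : Finset (V × V) := 𝓕.biUnion linkEdges with hL
  set M₀ : Finset (V × V) := M.filter (fun e => e.2 ∉ Nodes) with hM₀
  refine ⟨L ∪ M₀, ⟨?_, ?_⟩, ?_, ?_⟩
  · -- subset of E
    intro x hx
    rcases Finset.mem_union.mp hx with hx | hx
    · obtain ⟨p, hp, hxe⟩ := Finset.mem_biUnion.mp hx
      obtain ⟨h1, h2, _⟩ := hlink p hp
      rcases Finset.mem_insert.mp hxe with h | h
      · rw [h]; exact h1
      · rw [Finset.mem_singleton.mp h]; exact h2
    · exact hME (Finset.mem_filter.mp hx).1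
  · -- degree ≤ 2
    intro v
    -- basic facts
    have hSmem : ∀ x ∈ L ∪ M₀, x.1 ∈ S ∧ x.2 ∈ T := by
      intro x hx
      have : x ∈ E := by
        rcases Finset.mem_union.mp hx with hx | hx
        · obtain ⟨p, hp, hxe⟩ := Finset.mem_biUnion.mp hx
          obtain ⟨h1, h2, _⟩ := hlink p hp
          rcases Finset.mem_insert.mp hxe with h | h
          · rw [h]; exact h1
          · rw [Finset.mem_singleton.mp h]; exact h2
        · exact hME (Finset.mem_filter.mp hx).1
      simpa using Finset.mem_product.mp (hE this)
    -- edges of M₀ at v: at most one, call it unique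
    have hM₀v : ∀ x ∈ M₀, ∀ y ∈ M₀, (x.1 = v ∨ x.2 = v) → (y.1 = v ∨ y.2 = v) → x = y := by
      intro x hx y hy hxv hyv
      by_contra hxy
      have hx' := (Finset.mem_filter.mp hx).1
      have hy' := (Finset.mem_filter.mp hy).1
      obtain ⟨h1, h2, h3, h4⟩ := hM x hx' y hy' hxy
      have hxS := hSmem x (Finset.mem_union_right _ hx)
      have hyS := hSmem y (Finset.mem_union_right _ hy)
      rcases hxv with hv1 | hv1 <;> rcases hyv with hv2 | hv2
      · exact h1 (hv1.trans hv2.symm)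
      · exact h3 (hv1.trans hv2.symm)
      · exact h4 (hv1.trans hv2.symm)
      · exact h2 (hv1.trans hv2.symm)
    have hLv : ∀ x ∈ L, (x.1 = v ∨ x.2 = v) → ∃ p ∈ 𝓕, x ∈ linkEdges p ∧ v ∈ linkNodes p := by
      intro x hx hxv
      obtain ⟨p, hp, hxe⟩ := Finset.mem_biUnion.mp hx
      refine ⟨p, hp, hxe, ?_⟩
      rcases Finset.mem_insert.mp hxe with h | h
      · rcases hxv with h' | h'
        · rw [← h'] ; rw [h] ; simp [linkNodes]
        · rw [← h'] ; rw [h] ; simp [linkNodes]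
      · rw [Finset.mem_singleton] at h
        rcases hxv with h' | h'
        · rw [← h'] ; rw [h] ; simp [linkNodes]
        · rw [← h'] ; rw [h] ; simp [linkNodes]
    by_cases hvN : ∃ p ∈ 𝓕, v ∈ linkNodes p
    · obtain ⟨p, hp, hvp⟩ := hvN
      have huniq : ∀ q ∈ 𝓕, v ∈ linkNodes q → q = p := by
        intro q hq hvq
        by_contra hqp
        exact (Finset.disjoint_left.mp (hdisj q hq p hp hqp) hvq) hvp
      obtain ⟨hpe1, hpe2, hpne⟩ := hlink p hp
      have hp1S : p.1 ∈ S := (Finset.mem_product.mp (hE hpe1)).1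
      have hp21T : p.2.1 ∈ T := (Finset.mem_product.mp (hE hpe1)).2
      have hp22S : p.2.2 ∈ S := (Finset.mem_product.mp (hE hpe2)).1
      have hLsub : ∀ x ∈ L, (x.1 = v ∨ x.2 = v) → x ∈ linkEdges p := by
        intro x hx hxv
        obtain ⟨q, hq, hxq, hvq⟩ := hLv x hx hxv
        rw [huniq q hq hvq] at hxq
        exact hxq
      by_cases hmid : v = p.2.1
      · -- v is a middle node, in T; no M₀ edge at v
        apply bipDeg_le_two_of_pair (p.1, p.2.1) (p.2.2, p.2.1)
        intro x hx hxv
        rcases Finset.mem_union.mp hx with hx | hx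
        · have := hLsub x hx hxv
          rcases Finset.mem_insert.mp this with h | h
          · left; exact h
          · right; exact Finset.mem_singleton.mp h
        · exfalso
          have hx2 : x.2 ∉ Nodes := (Finset.mem_filter.mp hx).2
          have hxST := hSmem x (Finset.mem_union_right _ hx)
          rcases hxv with h | h
          · refine (Finset.disjoint_left.mp hST ?_) (show x.1 ∈ T by rw [h, hmid]; exact hp21T)
            rw [h]; exact h ▸ hxST.1
          · exact hx2 (by rw [h]; exact Finset.mem_biUnion.mpr ⟨p, hp, hvp⟩)
      · -- v is an endpoint; at most one L edge (v, p.2.1)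
        have hLone : ∀ x ∈ L, (x.1 = v ∨ x.2 = v) → x = (v, p.2.1) := by
          intro x hx hxv
          have hxp := hLsub x hx hxv
          rcases Finset.mem_insert.mp hxp with h | h
          · rcases hxv with h' | h'
            · rw [h] at h' ⊢; simp at h' ⊢; exact h'
            · rw [h] at h'; simp at h'; exact absurd h'.symm hmid
          · rw [Finset.mem_singleton] at h
            rcases hxv with h' | h'
            · rw [h] at h' ⊢; simp at h' ⊢; exact h'
            · rw [h] at h'; simp at h'; exact absurd h'.symm hmid
        by_cases hm : ∃ m ∈ M₀, m.1 = v ∨ m.2 = v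
        · obtain ⟨m, hm, hmv⟩ := hm
          apply bipDeg_le_two_of_pair (v, p.2.1) m
          intro x hx hxv
          rcases Finset.mem_union.mp hx with hx | hx
          · left; exact hLone x hx hxv
          · right; exact hM₀v x hx m hm hxv hmv
        · push_neg at hm
          apply bipDeg_le_two_of_pair (v, p.2.1) (v, p.2.1)
          intro x hx hxv
          rcases Finset.mem_union.mp hx with hx | hx
          · left; exact hLone x hx hxv
          · rcases hxv with h' | h'
            · exact absurd h' (hm x hx).1
            · exact absurd h' (hm x hx).2
    · push_neg at hvN
      by_cases hm : ∃ m ∈ M₀, m.1 = v ∨ m.2 = v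
      · obtain ⟨m, hm, hmv⟩ := hm
        apply bipDeg_le_two_of_pair m m
        intro x hx hxv
        rcases Finset.mem_union.mp hx with hx | hx
        · obtain ⟨q, hq, _, hvq⟩ := hLv x hx hxv
          exact absurd hvq (hvN q hq)
        · left; exact hM₀v x hx m hm hxv hmv
      · push_neg at hm
        apply bipDeg_le_two_of_pair (v, v) (v, v)
        intro x hx hxv
        rcases Finset.mem_union.mp hx with hx | hx
        · obtain ⟨q, hq, _, hvq⟩ := hLv x hx hxv
          exact absurd hvq (hvN q hq)
        · rcases hxv with h' | h'
          · exact absurd h' (hm x hx).1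
          · exact absurd h' (hm x hx).2
  · -- VFree
    rintro ⟨s, t₁, t₂, hne, h1, h2, hdegs, hd1, hd2⟩
    have hL1 : (s, t₁) ∈ L ∨ (s, t₂) ∈ L := by
      by_contra hc
      push_neg at hc
      have h1' : (s, t₁) ∈ M₀ := (Finset.mem_union.mp h1).resolve_left hc.1
      have h2' : (s, t₂) ∈ M₀ := (Finset.mem_union.mp h2).resolve_left hc.2
      have hd : ((s, t₁) : V × V) ≠ (s, t₂) := by simp [hne]
      exact (hM ((s,t₁)) (Finset.mem_filter.mp h1').1 ((s,t₂)) (Finset.mem_filter.mp h2').1 hd).1 rfl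
    -- whichever is a link edge, its t is a middle with degree ≥ 2
    have key : ∀ t : V, (s, t) ∈ L → bipDeg (L ∪ M₀) t ≠ 1 := by
      intro t hL
      obtain ⟨p, hp, hxe⟩ := Finset.mem_biUnion.mp hL
      have hmid : t = p.2.1 := by
        rcases Finset.mem_insert.mp hxe with h | h
        · simpa using congrArg Prod.snd h
        · rw [Finset.mem_singleton] at h; simpa using congrArg Prod.snd h
      have ha : ((p.1, p.2.1) : V × V) ∈ L := Finset.mem_biUnion.mpr ⟨p, hp, by simp [linkEdges]⟩
      have hb : ((p.2.2, p.2.1) : V × V) ∈ L := Finset.mem_biUnion.mpr ⟨p, hp, by simp [linkEdges]⟩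
      have hpne := (hlink p hp).2.2
      have h2le : 2 ≤ bipDeg (L ∪ M₀) t := by
        apply two_le_bipDeg (Finset.mem_union_left _ ha) (by right; simp [hmid])
          (Finset.mem_union_left _ hb) (by right; simp [hmid])
        simp [hpne]
      omega
    rcases hL1 with h | h
    · exact key t₁ h hd1
    · exact key t₂ h hd2
  · -- covers T
    intro t ht
    obtain ⟨e, he, hev⟩ := hcov t ht
    have heE : e ∈ E := by
      rcases Finset.mem_union.mp he with h | h
      · exact hME h
      · obtain ⟨p, hp, hxe⟩ := Finset.mem_biUnion.mp h
        obtain ⟨h1, h2, _⟩ := hlink p hp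
        rcases Finset.mem_insert.mp hxe with h' | h'
        · rw [h']; exact h1
        · rw [Finset.mem_singleton.mp h']; exact h2
    have he2 : e.2 = t := by
      rcases hev with h' | h'
      · exact absurd (h' ▸ (Finset.mem_product.mp (hE heE)).1)
          (fun hs => (Finset.disjoint_left.mp hST hs) ht)
      · exact h'
    rcases Finset.mem_union.mp he with h | h
    · -- e ∈ M
      by_cases htN : t ∈ Nodes
      · obtain ⟨p, hp, htp⟩ := Finset.mem_biUnion.mp htN
        obtain ⟨h1, h2, _⟩ := hlink p hp
        have hp1S : p.1 ∈ S := (Finset.mem_product.mp (hE h1)).1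
        have hp22S : p.2.2 ∈ S := (Finset.mem_product.mp (hE h2)).1
        have htmid : t = p.2.1 := by
          rcases Finset.mem_insert.mp htp with h' | h'
          · exact absurd (h' ▸ hp1S) (fun hs => (Finset.disjoint_left.mp hST hs) ht)
          · rcases Finset.mem_insert.mp h' with h'' | h''
            · exact h''
            · rw [Finset.mem_singleton] at h''
              exact absurd (h'' ▸ hp22S) (fun hs => (Finset.disjoint_left.mp hST hs) ht)
        refine ⟨(p.1, p.2.1), Finset.mem_union_left _ (Finset.mem_biUnion.mpr ⟨p, hp, by simp [linkEdges]⟩), by right; simp [htmid]⟩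
      · refine ⟨e, Finset.mem_union_right _ (Finset.mem_filter.mpr ⟨h, by rw [he2]; exact htN⟩), Or.inr he2⟩
    · exact ⟨e, Finset.mem_union_left _ h, Or.inr he2⟩

end fwd


/-- A bipartite graph `G = (S,T;E)` has a matching `M` and a family `𝓕` of pairwise
node-disjoint `S`-links whose union covers `T` if and only if `G` has a `𝚅`-free
2-matching covering `T`. -/
theorem matching_links_iff_vfree_two_matching {V : Type*} [DecidableEq V] [Fintype V]
    (S T : Finset V) (E : Finset (V × V))
    (hST : Disjoint S T) (hE : E ⊆ S ×ˢ T) :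
    (∃ M ⊆ E, IsMatching M ∧
      ∃ 𝓕 : Finset (V × V × V), (∀ p ∈ 𝓕, IsSLink E p) ∧ DisjointLinks 𝓕 ∧
        ∀ t ∈ T, Covers (M ∪ 𝓕.biUnion linkEdges) t) ↔
    (∃ N : Finset (V × V), Is2Matching E N ∧ VFree N ∧ ∀ t ∈ T, Covers N t) := by
  constructor
  · rintro ⟨M, hME, hM, 𝓕, hlink, hdisj, hcov⟩
    exact forward_dir S T E hST hE M hME hM 𝓕 hlink hdisj hcov
  · rintro ⟨N, ⟨hNE, hdeg⟩, hVF, hcov⟩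
    obtain ⟨M, hMN, hMmatch, 𝓕, h𝓕, h𝓕disj, hcov'⟩ :=
      reverse_dir S T E hST hE N.card N T (le_refl _) (Finset.Subset.refl _) hNE
        (fun e he => (Finset.mem_product.mp (hE (hNE he))).2) hdeg hVF hcov
    refine ⟨M, hMN.trans hNE, hMmatch, 𝓕, ?_, h𝓕disj, hcov'⟩
    intro p hp
    obtain ⟨hsub, hne⟩ := h𝓕 p hp
    exact ⟨hNE (hsub (by simp [linkEdges])), hNE (hsub (by simp [linkEdges])), hne⟩
end

section
/- Let G=(S,T;E) be a bipartite graph and N a 𝚅-free 2-matching covering T. Then there exists a subset N' ⊆ N that is a 𝚅-free 2-matching covering T whose connected components are paths of length 1, and paths of length 4 having both end-nodes in T. -/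
/-- A path `t₁ - s₁ - t₂ - s₂ - t₃` of length four (edges as ordered `(S,T)` pairs),
encoded as the tuple `(t₁, s₁, t₂, s₂, t₃)`. -/
def IsP4 {V : Type*} (N : Finset (V × V)) (p : V × V × V × V × V) : Prop :=
  (p.2.1, p.1) ∈ N ∧ (p.2.1, p.2.2.1) ∈ N ∧ (p.2.2.2.1, p.2.2.1) ∈ N ∧
  (p.2.2.2.1, p.2.2.2.2) ∈ N ∧
  p.1 ≠ p.2.2.1 ∧ p.1 ≠ p.2.2.2.2 ∧ p.2.2.1 ≠ p.2.2.2.2 ∧ p.2.1 ≠ p.2.2.2.1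

/-- The nodes of such a length-four path. -/
def p4Nodes {V : Type*} [DecidableEq V] (p : V × V × V × V × V) : Finset V :=
  {p.1, p.2.1, p.2.2.1, p.2.2.2.1, p.2.2.2.2}

/-- The four edges of such a length-four path. -/
def p4Edges {V : Type*} [DecidableEq V] (p : V × V × V × V × V) : Finset (V × V) :=
  {(p.2.1, p.1), (p.2.1, p.2.2.1), (p.2.2.2.1, p.2.2.1), (p.2.2.2.1, p.2.2.2.2)}

namespace VAux
variable {V : Type*} [DecidableEq V]

lemma bipDeg_mono {N M : Finset (V × V)} (h : N ⊆ M) (v : V) : bipDeg N v ≤ bipDeg M v :=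
  Finset.card_le_card (Finset.filter_subset_filter _ h)

lemma one_le_bipDeg {N : Finset (V × V)} {e : V × V} {v : V} (he : e ∈ N)
    (hv : e.1 = v ∨ e.2 = v) : 1 ≤ bipDeg N v :=
  Finset.card_pos.mpr ⟨e, Finset.mem_filter.mpr ⟨he, hv⟩⟩

lemma bipDeg_zero {N : Finset (V × V)} {v : V}
    (h : ∀ e ∈ N, e.1 ≠ v ∧ e.2 ≠ v) : bipDeg N v = 0 := by
  rw [bipDeg, Finset.card_eq_zero, Finset.filter_eq_empty_iff]
  intro e he
  rcases h e he with ⟨h1, h2⟩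
  simp [h1, h2]

lemma not_inc_of_deg_zero {N : Finset (V × V)} {v : V} (h : bipDeg N v = 0)
    {e : V × V} (he : e ∈ N) : e.1 ≠ v ∧ e.2 ≠ v := by
  constructor <;> intro hv
  · have := one_le_bipDeg he (Or.inl hv); omega
  · have := one_le_bipDeg he (Or.inr hv); omega

lemma two_le_bipDeg {N : Finset (V × V)} {e f : V × V} {v : V} (he : e ∈ N) (hf : f ∈ N)
    (hev : e.1 = v ∨ e.2 = v) (hfv : f.1 = v ∨ f.2 = v) (hne : e ≠ f) : 2 ≤ bipDeg N v := by
  have hsub : ({e, f} : Finset (V × V)) ⊆ N.filter (fun x => x.1 = v ∨ x.2 = v) := by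
    intro g hg
    rcases Finset.mem_insert.mp hg with rfl | hg
    · exact Finset.mem_filter.mpr ⟨he, hev⟩
    · rw [Finset.mem_singleton] at hg; subst hg; exact Finset.mem_filter.mpr ⟨hf, hfv⟩
  calc 2 = ({e, f} : Finset (V × V)).card := (Finset.card_pair hne).symm
    _ ≤ _ := Finset.card_le_card hsub

lemma three_le_bipDeg {N : Finset (V × V)} {e f g : V × V} {v : V}
    (he : e ∈ N) (hf : f ∈ N) (hg : g ∈ N)
    (hev : e.1 = v ∨ e.2 = v) (hfv : f.1 = v ∨ f.2 = v) (hgv : g.1 = v ∨ g.2 = v)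
    (hef : e ≠ f) (heg : e ≠ g) (hfg : f ≠ g) : 3 ≤ bipDeg N v := by
  have hsub : ({e, f, g} : Finset (V × V)) ⊆ N.filter (fun x => x.1 = v ∨ x.2 = v) := by
    intro x hx
    simp only [Finset.mem_insert, Finset.mem_singleton] at hx
    rcases hx with rfl | rfl | rfl
    · exact Finset.mem_filter.mpr ⟨he, hev⟩
    · exact Finset.mem_filter.mpr ⟨hf, hfv⟩
    · exact Finset.mem_filter.mpr ⟨hg, hgv⟩
  have hcard : ({e, f, g} : Finset (V × V)).card = 3 := by
    rw [Finset.card_insert_of_notMem (by simp [hef, heg]), Finset.card_pair hfg]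
  calc 3 = ({e, f, g} : Finset (V × V)).card := hcard.symm
    _ ≤ _ := Finset.card_le_card hsub

lemma eq_of_deg_one {N : Finset (V × V)} {v : V} (h : bipDeg N v = 1) {e f : V × V}
    (he : e ∈ N) (hf : f ∈ N) (hev : e.1 = v ∨ e.2 = v) (hfv : f.1 = v ∨ f.2 = v) : e = f :=
  Finset.card_le_one.mp h.le e (Finset.mem_filter.mpr ⟨he, hev⟩) f (Finset.mem_filter.mpr ⟨hf, hfv⟩)

lemma exists_other {N : Finset (V × V)} {v : V} (h : bipDeg N v = 2) {e : V × V}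
    (he : e ∈ N) (hev : e.1 = v ∨ e.2 = v) :
    ∃ f ∈ N, (f.1 = v ∨ f.2 = v) ∧ f ≠ e := by
  have h1 : 1 < (N.filter (fun x => x.1 = v ∨ x.2 = v)).card := by
    rw [show (N.filter (fun x => x.1 = v ∨ x.2 = v)).card = bipDeg N v from rfl, h]; omega
  obtain ⟨f, hf, hfe⟩ := Finset.exists_mem_ne h1 e
  rw [Finset.mem_filter] at hf
  exact ⟨f, hf.1, hf.2, hfe⟩

lemma inc_eq_pair {N : Finset (V × V)} {v : V} {e f : V × V} (h : bipDeg N v = 2)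
    (he : e ∈ N) (hf : f ∈ N) (hev : e.1 = v ∨ e.2 = v) (hfv : f.1 = v ∨ f.2 = v)
    (hne : e ≠ f) : ∀ g ∈ N, (g.1 = v ∨ g.2 = v) → g = e ∨ g = f := by
  have hsub : ({e, f} : Finset (V × V)) ⊆ N.filter (fun x => x.1 = v ∨ x.2 = v) := by
    intro g hg
    rcases Finset.mem_insert.mp hg with rfl | hg
    · exact Finset.mem_filter.mpr ⟨he, hev⟩
    · rw [Finset.mem_singleton] at hg; subst hg; exact Finset.mem_filter.mpr ⟨hf, hfv⟩
  have heq : ({e, f} : Finset (V × V)) = N.filter (fun x => x.1 = v ∨ x.2 = v) :=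
    Finset.eq_of_subset_of_card_le hsub (by rw [show (N.filter (fun x => x.1 = v ∨ x.2 = v)).card = bipDeg N v from rfl, h, Finset.card_pair hne])
  intro g hg hgv
  have : g ∈ ({e, f} : Finset (V × V)) := heq ▸ Finset.mem_filter.mpr ⟨hg, hgv⟩
  simpa using this

lemma mem_p4Edges_nodes {p : V × V × V × V × V} {e : V × V} (h : e ∈ p4Edges p) :
    e.1 ∈ p4Nodes p ∧ e.2 ∈ p4Nodes p := by
  obtain ⟨a, b, c, d, f⟩ := p
  simp only [p4Edges, Finset.mem_insert, Finset.mem_singleton] at h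
  rcases h with rfl | rfl | rfl | rfl <;> simp [p4Nodes]

lemma one_le_deg_of_mem_p4Nodes {K : Finset (V × V)} {p : V × V × V × V × V}
    (hsub : p4Edges p ⊆ K) {v : V} (hv : v ∈ p4Nodes p) : 1 ≤ bipDeg K v := by
  obtain ⟨a, b, c, d, f⟩ := p
  have h1 : (b, a) ∈ K := hsub (by simp [p4Edges])
  have h2 : (b, c) ∈ K := hsub (by simp [p4Edges])
  have h3 : (d, c) ∈ K := hsub (by simp [p4Edges])
  have h4 : (d, f) ∈ K := hsub (by simp [p4Edges])
  simp only [p4Nodes, Finset.mem_insert, Finset.mem_singleton] at hv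
  rcases hv with rfl | rfl | rfl | rfl | rfl
  · exact one_le_bipDeg h1 (Or.inr rfl)
  · exact one_le_bipDeg h1 (Or.inl rfl)
  · exact one_le_bipDeg h2 (Or.inr rfl)
  · exact one_le_bipDeg h3 (Or.inl rfl)
  · exact one_le_bipDeg h4 (Or.inr rfl)

lemma covers_mono {A B : Finset (V × V)} (h : A ⊆ B) {v : V} : Covers A v → Covers B v :=
  fun ⟨e, he, hv⟩ => ⟨e, h he, hv⟩

end VAux

namespace VAux
variable {V : Type*} [DecidableEq V]

structure GoodCore (N M : Finset (V × V)) (𝓟 : Finset (V × V × V × V × V)) : Prop where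
  hM : M ⊆ N
  hP : ∀ p ∈ 𝓟, p4Edges p ⊆ N
  hmatch : IsMatching M
  hshape : ∀ p ∈ 𝓟, p.1 ≠ p.2.2.1 ∧ p.1 ≠ p.2.2.2.2 ∧ p.2.2.1 ≠ p.2.2.2.2 ∧ p.2.1 ≠ p.2.2.2.1
  hdisj : ∀ p ∈ 𝓟, ∀ q ∈ 𝓟, p ≠ q → Disjoint (p4Nodes p) (p4Nodes q)
  hMP : ∀ e ∈ M, ∀ p ∈ 𝓟, e.1 ∉ p4Nodes p ∧ e.2 ∉ p4Nodes p

lemma GoodCore.addEdge {N₂ N M : Finset (V × V)} {𝓟 : Finset (V × V × V × V × V)}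
    (hG : GoodCore N₂ M 𝓟) (hsub : N₂ ⊆ N) {e : V × V} (he : e ∈ N)
    (h1 : bipDeg N₂ e.1 = 0) (h2 : bipDeg N₂ e.2 = 0) :
    GoodCore N (insert e M) 𝓟 := by
  constructor
  · intro f hf
    rcases Finset.mem_insert.mp hf with rfl | hf
    · exact he
    · exact hsub (hG.hM hf)
  · intro p hp; exact (hG.hP p hp).trans hsub
  · intro f hf g hg hfg
    rcases Finset.mem_insert.mp hf with hfe | hfM
    · rcases Finset.mem_insert.mp hg with hge | hgM
      · exact absurd (hfe.trans hge.symm) hfg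
      · have A := not_inc_of_deg_zero h1 (hG.hM hgM)
        have B := not_inc_of_deg_zero h2 (hG.hM hgM)
        rw [hfe]
        exact ⟨A.1.symm, B.2.symm, A.2.symm, B.1.symm⟩
    · rcases Finset.mem_insert.mp hg with hge | hgM
      · have A := not_inc_of_deg_zero h1 (hG.hM hfM)
        have B := not_inc_of_deg_zero h2 (hG.hM hfM)
        rw [hge]
        exact ⟨A.1, B.2, B.1, A.2⟩
      · exact hG.hmatch f hfM g hgM hfg
  · exact hG.hshape
  · exact hG.hdisj
  · intro f hf p hp
    rcases Finset.mem_insert.mp hf with rfl | hf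
    · constructor <;> intro hmem
      · have := one_le_deg_of_mem_p4Nodes (hG.hP p hp) hmem; omega
      · have := one_le_deg_of_mem_p4Nodes (hG.hP p hp) hmem; omega
    · exact hG.hMP f hf p hp

lemma GoodCore.addP4 {N₂ N M : Finset (V × V)} {𝓟 : Finset (V × V × V × V × V)}
    (hG : GoodCore N₂ M 𝓟) (hsub : N₂ ⊆ N) {p : V × V × V × V × V}
    (hpE : p4Edges p ⊆ N)
    (hshape : p.1 ≠ p.2.2.1 ∧ p.1 ≠ p.2.2.2.2 ∧ p.2.2.1 ≠ p.2.2.2.2 ∧ p.2.1 ≠ p.2.2.2.1)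
    (hiso : ∀ v ∈ p4Nodes p, bipDeg N₂ v = 0) :
    GoodCore N M (insert p 𝓟) := by
  have key : ∀ q ∈ 𝓟, Disjoint (p4Nodes p) (p4Nodes q) := by
    intro q hq
    rw [Finset.disjoint_left]
    intro v hvp hvq
    have := one_le_deg_of_mem_p4Nodes (hG.hP q hq) hvq
    have := hiso v hvp
    omega
  constructor
  · exact hG.hM.trans hsub
  · intro q hq
    rcases Finset.mem_insert.mp hq with rfl | hq
    · exact hpE
    · exact (hG.hP q hq).trans hsub
  · exact hG.hmatch
  · intro q hq
    rcases Finset.mem_insert.mp hq with rfl | hq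
    · exact hshape
    · exact hG.hshape q hq
  · intro q hq r hr hqr
    rcases Finset.mem_insert.mp hq with hqp | hq <;> rcases Finset.mem_insert.mp hr with hrp | hr
    · exact absurd (hqp.trans hrp.symm) hqr
    · rw [hqp]; exact key r hr
    · rw [hrp]; exact (key q hq).symm
    · exact hG.hdisj q hq r hr hqr
  · intro f hf q hq
    rcases Finset.mem_insert.mp hq with rfl | hq
    · have hfN : f ∈ N₂ := hG.hM hf
      constructor <;> intro hmem
      · have := hiso _ hmem
        have := one_le_bipDeg hfN (Or.inl rfl)
        omega
      · have := hiso _ hmem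
        have := one_le_bipDeg hfN (Or.inr rfl)
        omega
    · exact hG.hMP f hf q hq

lemma vfree_snd (T : Finset V) {N N₂ : Finset (V × V)} (Q : V → Prop)
    (hmem : ∀ g, g ∈ N₂ ↔ g ∈ N ∧ Q g.2)
    (hbi : ∀ e ∈ N, e.1 ∉ T ∧ e.2 ∈ T) (hdeg : ∀ v, bipDeg N v ≤ 2) (hV : VFree N) :
    VFree N₂ := by
  rintro ⟨s, t1, t2, hne, h1, h2, hds, hd1, hd2⟩
  have hsub : N₂ ⊆ N := fun e he => ((hmem e).mp he).1
  have h1N : (s, t1) ∈ N := hsub h1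
  have h2N : (s, t2) ∈ N := hsub h2
  have ht1T : t1 ∈ T := (hbi _ h1N).2
  have ht2T : t2 ∈ T := (hbi _ h2N).2
  have hQ1 : Q t1 := ((hmem _).mp h1).2
  have hQ2 : Q t2 := ((hmem _).mp h2).2
  have hdegs : bipDeg N s = 2 := le_antisymm (hdeg s) (hds ▸ bipDeg_mono hsub s)
  have key : ∀ t' ∈ T, Q t' → bipDeg N t' = bipDeg N₂ t' := by
    intro t' htT hQt
    refine le_antisymm ?_ (bipDeg_mono hsub t')
    apply Finset.card_le_card
    intro g hg
    rw [Finset.mem_filter] at hg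
    have hg2 : g.2 = t' := by
      rcases hg.2 with h | h
      · exact absurd htT (h ▸ (hbi g hg.1).1)
      · exact h
    exact Finset.mem_filter.mpr ⟨(hmem g).mpr ⟨hg.1, by rw [hg2]; exact hQt⟩, hg.2⟩
  exact hV ⟨s, t1, t2, hne, h1N, h2N, hdegs, (key t1 ht1T hQ1).trans hd1,
    (key t2 ht2T hQ2).trans hd2⟩

lemma covers_snd (T : Finset V) {N N₂ : Finset (V × V)}
    (hbi : ∀ e ∈ N, e.1 ∉ T ∧ e.2 ∈ T) (Q : V → Prop)
    (hmem : ∀ g, g ∈ N₂ ↔ g ∈ N ∧ Q g.2) {t : V}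
    (ht : t ∈ T) (hQ : Q t) (hc : Covers N t) : Covers N₂ t := by
  obtain ⟨e, he, hv⟩ := hc
  have he2 : e.2 = t := by
    rcases hv with h | h
    · exact absurd ht (h ▸ (hbi e he).1)
    · exact h
  exact ⟨e, (hmem e).mpr ⟨he, by rw [he2]; exact hQ⟩, Or.inr he2⟩

lemma vfree_IIb (T : Finset V) {N N₂ : Finset (V × V)} {s t : V}
    (hbi : ∀ e ∈ N, e.1 ∉ T ∧ e.2 ∈ T) (hdeg : ∀ v, bipDeg N v ≤ 2)
    (hst : (s, t) ∈ N) (hall2 : ∀ e ∈ N, bipDeg N e.2 = 2)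
    (hmem : ∀ g, g ∈ N₂ ↔ g ∈ N ∧ (g.1 ≠ s ∧ g.2 ≠ t)) :
    VFree N₂ := by
  rintro ⟨s'', t1, t2, hne, h1, h2, _, hd1, hd2⟩
  have hsub : N₂ ⊆ N := fun e he => ((hmem e).mp he).1
  have lost : ∀ t' : V, (s'', t') ∈ N₂ → bipDeg N₂ t' = 1 → (s, t') ∈ N ∧ t' ≠ t := by
    intro t' ht' hdt'
    have ht'N : (s'', t') ∈ N := hsub ht'
    have ht'T : t' ∈ T := (hbi _ ht'N).2
    have ht't : t' ≠ t := ((hmem _).mp ht').2.2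
    have hdN : bipDeg N t' = 2 := hall2 _ ht'N
    have hne2 : ¬ (N.filter (fun x => x.1 = t' ∨ x.2 = t') ⊆
        N₂.filter (fun x => x.1 = t' ∨ x.2 = t')) := by
      intro hsub2
      have := Finset.card_le_card hsub2
      rw [show (N.filter (fun x => x.1 = t' ∨ x.2 = t')).card = bipDeg N t' from rfl,
        show (N₂.filter (fun x => x.1 = t' ∨ x.2 = t')).card = bipDeg N₂ t' from rfl,
        hdN, hdt'] at this
      omega
    obtain ⟨g, hgN, hgnot⟩ := Finset.not_subset.mp hne2
    rw [Finset.mem_filter] at hgN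
    have hg2 : g.2 = t' := by
      rcases hgN.2 with h | h
      · exact absurd ht'T (h ▸ (hbi g hgN.1).1)
      · exact h
    have hgN₂ : g ∉ N₂ := fun h => hgnot (Finset.mem_filter.mpr ⟨h, hgN.2⟩)
    have hgc : ¬(g.1 ≠ s ∧ g.2 ≠ t) := fun h => hgN₂ ((hmem g).mpr ⟨hgN.1, h⟩)
    push_neg at hgc
    have hg1 : g.1 = s := by
      by_contra h
      exact ht't (hg2 ▸ hgc h)
    refine ⟨?_, ht't⟩
    rw [← hg1, ← hg2]
    exact hgN.1
  obtain ⟨e1, ht1t⟩ := lost t1 h1 hd1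
  obtain ⟨e2, ht2t⟩ := lost t2 h2 hd2
  have h3 : 3 ≤ bipDeg N s := by
    refine three_le_bipDeg e1 e2 hst (Or.inl rfl) (Or.inl rfl) (Or.inl rfl) ?_ ?_ ?_
    · intro h; exact hne (congrArg Prod.snd h)
    · intro h; exact ht1t (congrArg Prod.snd h)
    · intro h; exact ht2t (congrArg Prod.snd h)
  have := hdeg s
  omega

end VAux

namespace VAux
variable {V : Type*} [DecidableEq V]

lemma good_empty (N : Finset (V × V)) : GoodCore N ∅ ∅ :=
  ⟨Finset.empty_subset _, by simp, by intro e he; exact absurd he (Finset.notMem_empty e),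
   by simp, by simp, by simp⟩

lemma extract (T : Finset V) :
    ∀ n (N : Finset (V × V)), N.card ≤ n →
      (∀ e ∈ N, e.1 ∉ T ∧ e.2 ∈ T) →
      (∀ v, bipDeg N v ≤ 2) → VFree N →
      ∃ M 𝓟, GoodCore N M 𝓟 ∧
        ∀ t ∈ T, Covers N t → Covers (M ∪ 𝓟.biUnion p4Edges) t := by
  intro n
  induction n with
  | zero =>
    intro N hcard _ _ _
    have hN : N = ∅ := Finset.card_eq_zero.mp (Nat.le_zero.mp hcard)
    subst hN
    exact ⟨∅, ∅, good_empty _, by rintro t _ ⟨e, he, _⟩; exact absurd he (Finset.notMem_empty e)⟩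
  | succ n IH =>
    intro N hcard hbi hdeg hV
    by_cases hNe : N = ∅
    · subst hNe
      exact ⟨∅, ∅, good_empty _, by rintro t _ ⟨e, he, _⟩; exact absurd he (Finset.notMem_empty e)⟩
    by_cases hcase1 : ∃ e ∈ N, bipDeg N e.1 = 1
    · -- Case 1 : pendant S-node; extract a single edge
      obtain ⟨⟨s, t⟩, hst, hds⟩ := hcase1
      have hsT : s ∉ T := (hbi _ hst).1
      have htT : t ∈ T := (hbi _ hst).2
      set N₂ := N.filter (fun f => f.2 ≠ t) with hN₂def
      have hmem₂ : ∀ g, g ∈ N₂ ↔ g ∈ N ∧ g.2 ≠ t := fun g => Finset.mem_filter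
      have hsub : N₂ ⊆ N := Finset.filter_subset _ _
      have hstnot : (s, t) ∉ N₂ := fun h => ((hmem₂ _).mp h).2 rfl
      have hlt : N₂.card < N.card := Finset.card_lt_card ⟨hsub, fun hsup => hstnot (hsup hst)⟩
      have hbi₂ : ∀ e ∈ N₂, e.1 ∉ T ∧ e.2 ∈ T := fun e he => hbi e (hsub he)
      have hdeg₂ : ∀ v, bipDeg N₂ v ≤ 2 := fun v => le_trans (bipDeg_mono hsub v) (hdeg v)
      have hV₂ : VFree N₂ := vfree_snd T (fun x => x ≠ t) hmem₂ hbi hdeg hV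
      obtain ⟨M, 𝓟, hcore, hcov'⟩ := IH N₂ (by omega) hbi₂ hdeg₂ hV₂
      have hiso_s : bipDeg N₂ s = 0 := by
        apply bipDeg_zero
        intro g hg
        obtain ⟨hgN, hgt⟩ := (hmem₂ g).mp hg
        constructor
        · intro h
          have hgeq : g = (s, t) := eq_of_deg_one hds hgN hst (Or.inl h) (Or.inl rfl)
          exact hgt (congrArg Prod.snd hgeq)
        · intro h
          exact hsT (h ▸ (hbi g hgN).2)
      have hiso_t : bipDeg N₂ t = 0 := by
        apply bipDeg_zero
        intro g hg
        exact ⟨fun h => (hbi g (hsub hg)).1 (h ▸ htT), ((hmem₂ g).mp hg).2⟩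
      refine ⟨insert (s, t) M, 𝓟, hcore.addEdge hsub hst hiso_s hiso_t, ?_⟩
      intro t' ht' hc
      by_cases h1 : t' = t
      · exact ⟨(s, t), Finset.mem_union_left _ (Finset.mem_insert_self _ _), Or.inr h1.symm⟩
      · have hc₂ : Covers N₂ t' := covers_snd T hbi (fun x => x ≠ t) hmem₂ ht' h1 hc
        exact covers_mono (Finset.union_subset_union (Finset.subset_insert _ _)
          (Finset.Subset.refl _)) (hcov' t' ht' hc₂)
    push_neg at hcase1
    have hallS : ∀ e ∈ N, bipDeg N e.1 = 2 := by
      intro e he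
      have h1 := one_le_bipDeg he (Or.inl rfl)
      have h2 := hdeg e.1
      have h3 := hcase1 e he
      omega
    by_cases hcase2 : ∃ e ∈ N, bipDeg N e.2 = 1
    · -- Case 2 : pendant T-node; extract a P4
      obtain ⟨⟨s, t⟩, hst, hdt⟩ := hcase2
      have hsT : s ∉ T := (hbi _ hst).1
      have htT : t ∈ T := (hbi _ hst).2
      have hds2 : bipDeg N s = 2 := hallS _ hst
      obtain ⟨f, hfN', hfinc, hfne⟩ := exists_other hds2 hst (Or.inl rfl)
      have hf1 : f.1 = s := by
        rcases hfinc with h | h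
        · exact h
        · exact absurd (h ▸ (hbi f hfN').2) hsT
      obtain ⟨t2, rfl⟩ : ∃ t2, f = (s, t2) := ⟨f.2, by rw [← hf1]⟩
      have hfN : (s, t2) ∈ N := hfN'
      have ht2 : t2 ≠ t := fun h => hfne (by rw [h])
      have ht2T : t2 ∈ T := (hbi _ hfN).2
      by_cases hdt2 : bipDeg N t2 = 1
      · exact absurd ⟨s, t, t2, fun h => ht2 h.symm, hst, hfN, hds2, hdt, hdt2⟩ hV
      have hdt2' : bipDeg N t2 = 2 := by
        have h1 := hdeg t2
        have h2 : 1 ≤ bipDeg N t2 := one_le_bipDeg hfN (Or.inr rfl)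
        omega
      obtain ⟨g, hgN', hginc, hgne⟩ := exists_other hdt2' hfN (Or.inr rfl)
      have hg2 : g.2 = t2 := by
        rcases hginc with h | h
        · exact absurd ht2T (h ▸ (hbi g hgN').1)
        · exact h
      obtain ⟨s2, rfl⟩ : ∃ s2, g = (s2, t2) := ⟨g.1, by rw [← hg2]⟩
      have hgN : (s2, t2) ∈ N := hgN'
      have hs2 : s2 ≠ s := fun h => hgne (by rw [h])
      have hs2T : s2 ∉ T := (hbi _ hgN).1
      have hds2'' : bipDeg N s2 = 2 := hallS _ hgN
      obtain ⟨h4, hhN', hhinc, hhne⟩ := exists_other hds2'' hgN (Or.inl rfl)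
      have hh1 : h4.1 = s2 := by
        rcases hhinc with h | h
        · exact h
        · exact absurd (h ▸ (hbi h4 hhN').2) hs2T
      obtain ⟨t3, rfl⟩ : ∃ t3, h4 = (s2, t3) := ⟨h4.2, by rw [← hh1]⟩
      have hhN : (s2, t3) ∈ N := hhN'
      have ht3t2 : t3 ≠ t2 := fun h => hhne (by rw [h])
      have ht3T : t3 ∈ T := (hbi _ hhN).2
      have ht3t : t3 ≠ t := by
        intro h
        have h2le := two_le_bipDeg hst hhN (Or.inr rfl) (Or.inr (by rw [h]))
          (fun hh => hs2 (congrArg Prod.fst hh).symm)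
        omega
      set N₂ := N.filter (fun f => f.2 ≠ t ∧ f.2 ≠ t2 ∧ f.2 ≠ t3) with hN₂def
      have hmem₂ : ∀ g, g ∈ N₂ ↔ g ∈ N ∧ (g.2 ≠ t ∧ g.2 ≠ t2 ∧ g.2 ≠ t3) :=
        fun g => Finset.mem_filter
      have hsub : N₂ ⊆ N := Finset.filter_subset _ _
      have hstnot : (s, t) ∉ N₂ := fun h => ((hmem₂ _).mp h).2.1 rfl
      have hlt : N₂.card < N.card := Finset.card_lt_card ⟨hsub, fun hsup => hstnot (hsup hst)⟩
      have hbi₂ : ∀ e ∈ N₂, e.1 ∉ T ∧ e.2 ∈ T := fun e he => hbi e (hsub he)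
      have hdeg₂ : ∀ v, bipDeg N₂ v ≤ 2 := fun v => le_trans (bipDeg_mono hsub v) (hdeg v)
      have hV₂ : VFree N₂ :=
        vfree_snd T (fun x => x ≠ t ∧ x ≠ t2 ∧ x ≠ t3) hmem₂ hbi hdeg hV
      obtain ⟨M, 𝓟, hcore, hcov'⟩ := IH N₂ (by omega) hbi₂ hdeg₂ hV₂
      set p : V × V × V × V × V := (t, s, t2, s2, t3) with hpdef
      have hshape : p.1 ≠ p.2.2.1 ∧ p.1 ≠ p.2.2.2.2 ∧ p.2.2.1 ≠ p.2.2.2.2 ∧ p.2.1 ≠ p.2.2.2.1 :=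
        ⟨fun h => ht2 h.symm, fun h => ht3t h.symm, fun h => ht3t2 h.symm, fun h => hs2 h.symm⟩
      have hedges : p4Edges p ⊆ N := by
        intro x hx
        simp only [hpdef, p4Edges, Finset.mem_insert, Finset.mem_singleton] at hx
        rcases hx with rfl | rfl | rfl | rfl
        · exact hst
        · exact hfN
        · exact hgN
        · exact hhN
      have hincS : ∀ x ∈ N, x.1 = s → x = (s, t) ∨ x = (s, t2) := by
        intro x hx h
        exact inc_eq_pair hds2 hst hfN (Or.inl rfl) (Or.inl rfl)
          (fun hh => ht2 (congrArg Prod.snd hh).symm) x hx (Or.inl h)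
      have hincS2 : ∀ x ∈ N, x.1 = s2 → x = (s2, t2) ∨ x = (s2, t3) := by
        intro x hx h
        exact inc_eq_pair hds2'' hgN hhN (Or.inl rfl) (Or.inl rfl)
          (fun hh => ht3t2 (congrArg Prod.snd hh).symm) x hx (Or.inl h)
      have hiso : ∀ v ∈ p4Nodes p, bipDeg N₂ v = 0 := by
        intro v hv
        simp only [hpdef, p4Nodes, Finset.mem_insert, Finset.mem_singleton] at hv
        apply bipDeg_zero
        intro x hx
        obtain ⟨hxN, hx1, hx2, hx3⟩ := (hmem₂ x).mp hx
        rcases hv with rfl | rfl | rfl | rfl | rfl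
        · exact ⟨fun h => (hbi x hxN).1 (h ▸ htT), hx1⟩
        · constructor
          · intro h
            rcases hincS x hxN h with h' | h'
            · exact hx1 (congrArg Prod.snd h')
            · exact hx2 (congrArg Prod.snd h')
          · intro h
            exact hsT (h ▸ (hbi x hxN).2)
        · exact ⟨fun h => (hbi x hxN).1 (h ▸ ht2T), hx2⟩
        · constructor
          · intro h
            rcases hincS2 x hxN h with h' | h'
            · exact hx2 (congrArg Prod.snd h')
            · exact hx3 (congrArg Prod.snd h')
          · intro h
            exact hs2T (h ▸ (hbi x hxN).2)
        · exact ⟨fun h => (hbi x hxN).1 (h ▸ ht3T), hx3⟩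
      refine ⟨M, insert p 𝓟, hcore.addP4 hsub hedges hshape hiso, ?_⟩
      have hedge : ∀ x ∈ p4Edges p, x ∈ M ∪ (insert p 𝓟).biUnion p4Edges :=
        fun x hx => Finset.mem_union_right _
          (Finset.mem_biUnion.mpr ⟨p, Finset.mem_insert_self _ _, hx⟩)
      intro t' ht' hc
      by_cases h1 : t' = t
      · exact ⟨(s, t), hedge _ (by simp [hpdef, p4Edges]), Or.inr h1.symm⟩
      by_cases h2 : t' = t2
      · exact ⟨(s, t2), hedge _ (by simp [hpdef, p4Edges]), Or.inr h2.symm⟩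
      by_cases h3 : t' = t3
      · exact ⟨(s2, t3), hedge _ (by simp [hpdef, p4Edges]), Or.inr h3.symm⟩
      · have hc₂ : Covers N₂ t' :=
          covers_snd T hbi (fun x => x ≠ t ∧ x ≠ t2 ∧ x ≠ t3) hmem₂ ht' ⟨h1, h2, h3⟩ hc
        exact covers_mono (Finset.union_subset_union (Finset.Subset.refl _)
          (Finset.biUnion_subset_biUnion_of_subset_left _ (Finset.subset_insert _ _)))
          (hcov' t' ht' hc₂)
    · -- Case 3 : all degrees two (disjoint cycles); extract a single edge
      push_neg at hcase2
      have hall2 : ∀ e ∈ N, bipDeg N e.2 = 2 := by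
        intro e he
        have h1 := one_le_bipDeg he (Or.inr rfl)
        have h2 := hdeg e.2
        have h3 := hcase2 e he
        omega
      obtain ⟨⟨s, t⟩, hst⟩ := Finset.nonempty_of_ne_empty hNe
      have hsT : s ∉ T := (hbi _ hst).1
      have htT : t ∈ T := (hbi _ hst).2
      set N₂ := N.filter (fun f => f.1 ≠ s ∧ f.2 ≠ t) with hN₂def
      have hmem₂ : ∀ g, g ∈ N₂ ↔ g ∈ N ∧ (g.1 ≠ s ∧ g.2 ≠ t) := fun g => Finset.mem_filter
      have hsub : N₂ ⊆ N := Finset.filter_subset _ _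
      have hstnot : (s, t) ∉ N₂ := fun h => ((hmem₂ _).mp h).2.1 rfl
      have hlt : N₂.card < N.card := Finset.card_lt_card ⟨hsub, fun hsup => hstnot (hsup hst)⟩
      have hbi₂ : ∀ e ∈ N₂, e.1 ∉ T ∧ e.2 ∈ T := fun e he => hbi e (hsub he)
      have hdeg₂ : ∀ v, bipDeg N₂ v ≤ 2 := fun v => le_trans (bipDeg_mono hsub v) (hdeg v)
      have hV₂ : VFree N₂ := vfree_IIb T hbi hdeg hst hall2 hmem₂
      obtain ⟨M, 𝓟, hcore, hcov'⟩ := IH N₂ (by omega) hbi₂ hdeg₂ hV₂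
      have hiso_s : bipDeg N₂ s = 0 := bipDeg_zero fun x hx =>
        ⟨((hmem₂ x).mp hx).2.1, fun h => hsT (h ▸ (hbi x (hsub hx)).2)⟩
      have hiso_t : bipDeg N₂ t = 0 := bipDeg_zero fun x hx =>
        ⟨fun h => (hbi x (hsub hx)).1 (h ▸ htT), ((hmem₂ x).mp hx).2.2⟩
      refine ⟨insert (s, t) M, 𝓟, hcore.addEdge hsub hst hiso_s hiso_t, ?_⟩
      intro t' ht' hc
      by_cases h1 : t' = t
      · exact ⟨(s, t), Finset.mem_union_left _ (Finset.mem_insert_self _ _), Or.inr h1.symm⟩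
      obtain ⟨e, he, hv⟩ := hc
      have he2 : e.2 = t' := by
        rcases hv with h | h
        · exact absurd ht' (h ▸ (hbi e he).1)
        · exact h
      have hmono : M ∪ 𝓟.biUnion p4Edges ⊆ insert (s, t) M ∪ 𝓟.biUnion p4Edges :=
        Finset.union_subset_union (Finset.subset_insert _ _) (Finset.Subset.refl _)
      by_cases hes : e.1 = s
      · have hdt' : bipDeg N t' = 2 := he2 ▸ hall2 e he
        obtain ⟨g, hgNe, hginc, hgne⟩ := exists_other hdt' he (Or.inr he2)
        have hg2 : g.2 = t' := by
          rcases hginc with h | h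
          · exact absurd ht' (h ▸ (hbi g hgNe).1)
          · exact h
        have hg1 : g.1 ≠ s := by
          intro h
          apply hgne
          calc g = (s, t') := by rw [← h, ← hg2]
            _ = e := by rw [← hes, ← he2]
        have hgN₂ : g ∈ N₂ := (hmem₂ g).mpr ⟨hgNe, hg1, by rw [hg2]; exact h1⟩
        exact covers_mono hmono (hcov' t' ht' ⟨g, hgN₂, Or.inr hg2⟩)
      · have heN₂ : e ∈ N₂ := (hmem₂ e).mpr ⟨he, hes, by rw [he2]; exact h1⟩
        exact covers_mono hmono (hcov' t' ht' ⟨e, heN₂, Or.inr he2⟩)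

end VAux


/-- From any `𝚅`-free 2-matching `N` covering `T` one can select a subset `N' ⊆ N`
which is still a `𝚅`-free 2-matching covering `T` and whose connected components are
paths of length 1 and paths of length 4 with both end-nodes in `T`. -/
theorem vfree_two_matching_reduction {V : Type*} [DecidableEq V] [Fintype V]
    (S T : Finset V) (E : Finset (V × V))
    (hST : Disjoint S T) (hE : E ⊆ S ×ˢ T)
    (N : Finset (V × V)) (hN : Is2Matching E N) (hV : VFree N)
    (hcov : ∀ t ∈ T, Covers N t) :
    ∃ N' ⊆ N, Is2Matching E N' ∧ VFree N' ∧ (∀ t ∈ T, Covers N' t) ∧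
      ∃ (M : Finset (V × V)) (𝓟 : Finset (V × V × V × V × V)),
        IsMatching M ∧
        (∀ p ∈ 𝓟, IsP4 N' p ∧ p.1 ∈ T ∧ p.2.2.2.2 ∈ T) ∧
        (∀ p ∈ 𝓟, ∀ q ∈ 𝓟, p ≠ q → Disjoint (p4Nodes p) (p4Nodes q)) ∧
        (∀ e ∈ M, ∀ p ∈ 𝓟, e.1 ∉ p4Nodes p ∧ e.2 ∉ p4Nodes p) ∧
        N' = M ∪ 𝓟.biUnion p4Edges := by
  have hbi : ∀ e ∈ N, e.1 ∉ T ∧ e.2 ∈ T := by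
    intro e he
    have hmem := hE (hN.1 he)
    rw [Finset.mem_product] at hmem
    exact ⟨Finset.disjoint_left.mp hST hmem.1, hmem.2⟩
  obtain ⟨M, 𝓟, hcore, hcov'⟩ := VAux.extract T N.card N le_rfl hbi hN.2 hV
  set N' := M ∪ 𝓟.biUnion p4Edges with hN'def
  have hPsub : 𝓟.biUnion p4Edges ⊆ N := Finset.biUnion_subset.mpr hcore.hP
  have hN'N : N' ⊆ N := Finset.union_subset hcore.hM hPsub
  have hedgeN' : ∀ p ∈ 𝓟, p4Edges p ⊆ N' :=
    fun p hp x hx => Finset.mem_union_right _ (Finset.mem_biUnion.mpr ⟨p, hp, hx⟩)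
  refine ⟨N', hN'N, ⟨hN'N.trans hN.1, fun v => le_trans (VAux.bipDeg_mono hN'N v) (hN.2 v)⟩,
    ?_, fun t ht => hcov' t ht (hcov t ht), M, 𝓟, hcore.hmatch, ?_, hcore.hdisj, hcore.hMP,
    hN'def⟩
  · -- VFree N'
    rintro ⟨s, t1, t2, hne, h1, h2, hds, hd1, hd2⟩
    have emem : ∀ x : V × V, x ∈ N' → x ∈ M ∨ ∃ p ∈ 𝓟, x ∈ p4Edges p := by
      intro x hx
      rcases Finset.mem_union.mp hx with h | h
      · exact Or.inl h
      · obtain ⟨p, hp, hxp⟩ := Finset.mem_biUnion.mp h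
        exact Or.inr ⟨p, hp, hxp⟩
    rcases emem _ h1 with hM1 | ⟨p, hp, hpe1⟩
    · rcases emem _ h2 with hM2 | ⟨q, hq, hqe2⟩
      · exact (hcore.hmatch _ hM1 _ hM2 (fun h => hne (congrArg Prod.snd h))).1 rfl
      · exact (hcore.hMP _ hM1 q hq).1 (VAux.mem_p4Edges_nodes hqe2).1
    · rcases emem _ h2 with hM2 | ⟨q, hq, hqe2⟩
      · exact (hcore.hMP _ hM2 p hp).1 (VAux.mem_p4Edges_nodes hpe1).1
      · have hpq : p = q := by
          by_contra hne'
          exact (Finset.disjoint_left.mp (hcore.hdisj p hp q hq hne'))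
            (VAux.mem_p4Edges_nodes hpe1).1 (VAux.mem_p4Edges_nodes hqe2).1
        subst hpq
        obtain ⟨hs1, hs2, hs3, hs4⟩ := hcore.hshape p hp
        have hsubp : p4Edges p ⊆ N' := hedgeN' p hp
        obtain ⟨a, b, c, d, e⟩ := p
        have hbc : ((b, c) : V × V) ∈ N' := hsubp (by simp [p4Edges])
        have hdc : ((d, c) : V × V) ∈ N' := hsubp (by simp [p4Edges])
        have h2c : 2 ≤ bipDeg N' c :=
          VAux.two_le_bipDeg hbc hdc (Or.inr rfl) (Or.inr rfl)
            (fun h => hs4 (congrArg Prod.fst h))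
        simp only [p4Edges, Finset.mem_insert, Finset.mem_singleton, Prod.mk.injEq]
          at hpe1 hqe2
        rcases hpe1 with ⟨rfl, rfl⟩ | ⟨rfl, rfl⟩ | ⟨rfl, rfl⟩ | ⟨rfl, rfl⟩ <;>
          rcases hqe2 with ⟨h5, rfl⟩ | ⟨h5, rfl⟩ | ⟨h5, rfl⟩ | ⟨h5, rfl⟩ <;>
          first
            | exact hne rfl
            | exact hs4 rfl
            | exact hs4 h5
            | exact hs4 h5.symm
            | omega
  · -- the paths are genuine P4's of N' with end-nodes in T
    intro p hp
    obtain ⟨hs1, hs2, hs3, hs4⟩ := hcore.hshape p hp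
    have hsubp : p4Edges p ⊆ N' := hedgeN' p hp
    obtain ⟨a, b, c, d, e⟩ := p
    have hba : ((b, a) : V × V) ∈ N' := hsubp (by simp [p4Edges])
    have hbc : ((b, c) : V × V) ∈ N' := hsubp (by simp [p4Edges])
    have hdc : ((d, c) : V × V) ∈ N' := hsubp (by simp [p4Edges])
    have hde : ((d, e) : V × V) ∈ N' := hsubp (by simp [p4Edges])
    exact ⟨⟨hba, hbc, hdc, hde, hs1, hs2, hs3, hs4⟩,
      (hbi _ (hN'N hba)).2, (hbi _ (hN'N hde)).2⟩
end

section
/- Let H=(X,Y,Z;𝓔) be a tripartite 3-regular 3-uniform hypergraph and let G=(S,T;E) be the bipartite graph constructed from H via the gadget construction (nodes s_x,t_x for x∈X, s_y,t_y for y∈Y, t_z for z∈Z, edges s_xt_x, s_yt_y, and for each hyperedge e a path P_e of length 4 on t₁ᵉ,s₁ᵉ,t₂ᵉ,s₂ᵉ,t₃ᵉ together with edges s_{x_e}t₁ᵉ, s_{y_e}t₁ᵉ, t_{z_e}s₁ᵉ). Then H admits a perfect matching if and only if G has a 𝚅-free 2-matching covering T. -/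
/-- Node type for the gadget construction: `Sum.inl (v, i)` encodes the nodes
`s_v = (v,0)` and `t_v = (v,1)` for original nodes `v` (with `t_z = (z,0)` for
`z ∈ Z`), and `Sum.inr (e, j)` encodes the path `P_e = t₁ᵉ s₁ᵉ t₂ᵉ s₂ᵉ t₃ᵉ`
(`j = 0,…,4`) for each hyperedge `e`. -/
abbrev GadgetNode (V : Type*) := (V × Fin 2) ⊕ ((V × V × V) × Fin 5)

instance {V : Type*} [DecidableEq V] : DecidableEq (GadgetNode V) :=
  fun a b => inferInstanceAs (Decidable (a = b))

/-!
Given a perfect matching `𝓜`, take for every `e ∈ 𝓜` the paths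
`t_{x_e} s_{x_e} t₁ᵉ s_{y_e} t_{y_e}` and `t_{z_e} s₁ᵉ t₂ᵉ s₂ᵉ t₃ᵉ`, and for every other `e` the
path `P_e`. These are node-disjoint paths of length four with both ends in `T`, so their union is
a `𝚅`-free 2-matching covering `T`.

Conversely, let `N` be a `𝚅`-free 2-matching covering `T`. The leaves `t_x`, `t_y`, `t₃ᵉ` force
their unique edges into `N`, and then `𝚅`-freeness at `s₂ᵉ` forces `s₁ᵉt₂ᵉ ∈ N`. The hyperedges
`e` with `s₁ᵉt_{z_e} ∈ N` cover `Z`. For such `e` the node `s₁ᵉ` is saturated, so `t₁ᵉ` is served by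
`s_{x_e}` or `s_{y_e}`, and in fact by both, since a single one would form a `𝚅` with the leaf
`t_{x_e}` or `t_{y_e}`. As `s_x` also serves `t_x`, it serves at most one such `t₁ᵉ`. Hence these
hyperedges are injective on `X` and on `Y` and cover `Z`, and regularity gives
`|X| = |Y| = |Z|`, which makes them a perfect matching.
-/

section Degree

variable {W : Type*} [DecidableEq W] {N A : Finset (W × W)} {s t₁ t₂ t₃ v : W}

theorem card_le_bipDeg (hA : ∀ p ∈ A, p ∈ N ∧ (p.1 = v ∨ p.2 = v)) : A.card ≤ bipDeg N v :=
  Finset.card_le_card fun p hp => Finset.mem_filter.2 (hA p hp)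

theorem bipDeg_le_card (hA : ∀ p ∈ N, p.1 = v ∨ p.2 = v → p ∈ A) : bipDeg N v ≤ A.card :=
  Finset.card_le_card fun p hp => hA p (Finset.mem_filter.1 hp).1 (Finset.mem_filter.1 hp).2

theorem subset_of_card_le_bipDeg (hA : ∀ p ∈ N, p.1 = v ∨ p.2 = v → p ∈ A)
    (h : A.card ≤ bipDeg N v) : A ⊆ N := by
  have hsub : N.filter (fun p => p.1 = v ∨ p.2 = v) ⊆ A := fun p hp =>
    hA p (Finset.mem_filter.1 hp).1 (Finset.mem_filter.1 hp).2
  rw [← Finset.eq_of_subset_of_card_le hsub h]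
  exact Finset.filter_subset _ _

theorem bipDeg_pos_iff : 0 < bipDeg N v ↔ Covers N v := by
  simp [bipDeg, Finset.card_pos, Finset.Nonempty, Covers]

theorem mem_and_bipDeg_eq_one_of_covers {p : W × W}
    (hp : ∀ q ∈ N, q.1 = v ∨ q.2 = v → q = p) (hv : Covers N v) :
    p ∈ N ∧ bipDeg N v = 1 := by
  have hA : ∀ q ∈ N, q.1 = v ∨ q.2 = v → q ∈ ({p} : Finset (W × W)) := by simpa using hp
  have hle := bipDeg_le_card hA
  have hpos := bipDeg_pos_iff.2 hv
  rw [Finset.card_singleton] at hle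
  exact ⟨subset_of_card_le_bipDeg hA (by rwa [Finset.card_singleton])
    (Finset.mem_singleton_self p),
    by omega⟩

theorem two_le_bipDeg_of_mem_of_mem (h₁ : (s, t₁) ∈ N) (h₂ : (s, t₂) ∈ N) (ht : t₁ ≠ t₂) :
    2 ≤ bipDeg N s := by
  simpa [Finset.card_pair, ht] using
    card_le_bipDeg (N := N) (v := s) (A := {(s, t₁), (s, t₂)}) (by simp [h₁, h₂])

theorem eq_of_bipDeg_le_two (hs : bipDeg N s ≤ 2) (h₁ : (s, t₁) ∈ N) (h₂ : (s, t₂) ∈ N)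
    (h₃ : (s, t₃) ∈ N) (h₁₂ : t₁ ≠ t₂) (h₁₃ : t₁ ≠ t₃) : t₂ = t₃ := by
  by_contra h₂₃
  have := card_le_bipDeg (N := N) (v := s) (A := {(s, t₁), (s, t₂), (s, t₃)})
    (by simp [h₁, h₂, h₃])
  rw [Finset.card_insert_of_notMem (by simp [h₁₂, h₁₃]), Finset.card_pair (by simpa)] at this
  omega

theorem VFree.bipDeg_ne_one (hN : VFree N) (hs : bipDeg N s ≤ 2) (h₁ : (s, t₁) ∈ N)
    (h₂ : (s, t₂) ∈ N) (ht : t₁ ≠ t₂) (hd₂ : bipDeg N t₂ = 1) : bipDeg N t₁ ≠ 1 := fun hd₁ =>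
  hN ⟨s, t₁, t₂, ht, h₁, h₂, le_antisymm hs (two_le_bipDeg_of_mem_of_mem h₁ h₂ ht), hd₁, hd₂⟩

end Degree

section NodeDisjoint

variable {W ι : Type*} [DecidableEq W] {I : Finset ι} {M : ι → Finset (W × W)} {v : W}

def NodeDisjoint (I : Finset ι) (M : ι → Finset (W × W)) : Prop :=
  (I : Set ι).Pairwise fun i j => ∀ v, Covers (M i) v → ¬ Covers (M j) v

theorem covers_biUnion_iff : Covers (I.biUnion M) v ↔ ∃ i ∈ I, Covers (M i) v := by
  simp only [Covers, Finset.mem_biUnion]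
  grind

theorem NodeDisjoint.bipDeg_biUnion (hdisj : NodeDisjoint I M) {i : ι} (hi : i ∈ I)
    (hv : Covers (M i) v) : bipDeg (I.biUnion M) v = bipDeg (M i) v := by
  unfold bipDeg
  congr 1
  ext p
  simp only [Finset.mem_filter, Finset.mem_biUnion]
  refine ⟨fun ⟨⟨j, hj, hp⟩, hpv⟩ => ?_, fun ⟨hp, hpv⟩ => ⟨⟨i, hi, hp⟩, hpv⟩⟩
  obtain rfl : j = i := by
    by_contra hji
    exact hdisj hj hi hji v ⟨p, hp, hpv⟩ hv
  exact ⟨hp, hpv⟩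

theorem NodeDisjoint.bipDeg_biUnion_le (hdisj : NodeDisjoint I M) {k : ℕ}
    (h : ∀ i ∈ I, ∀ v, bipDeg (M i) v ≤ k) (v : W) : bipDeg (I.biUnion M) v ≤ k := by
  by_cases hv : Covers (I.biUnion M) v
  · obtain ⟨i, hi, hiv⟩ := covers_biUnion_iff.1 hv
    exact (hdisj.bipDeg_biUnion hi hiv).trans_le (h i hi v)
  · rw [← bipDeg_pos_iff] at hv
    omega

theorem NodeDisjoint.vFree_biUnion (hdisj : NodeDisjoint I M) (h : ∀ i ∈ I, VFree (M i)) :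
    VFree (I.biUnion M) := by
  rintro ⟨s, t₁, t₂, ht, h₁, h₂, hs, hd₁, hd₂⟩
  obtain ⟨i, hi, h₁⟩ := Finset.mem_biUnion.1 h₁
  obtain ⟨j, hj, h₂⟩ := Finset.mem_biUnion.1 h₂
  obtain rfl : j = i := by
    by_contra hji
    exact hdisj hj hi hji s ⟨_, h₂, Or.inl rfl⟩ ⟨_, h₁, Or.inl rfl⟩
  have hdeg : ∀ v, Covers (M j) v → bipDeg (I.biUnion M) v = bipDeg (M j) v :=
    fun v => hdisj.bipDeg_biUnion hi
  refine h j hi ⟨s, t₁, t₂, ht, h₁, h₂, ?_, ?_, ?_⟩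
  · rwa [← hdeg s ⟨_, h₁, Or.inl rfl⟩]
  · rwa [← hdeg t₁ ⟨_, h₁, Or.inr rfl⟩]
  · rwa [← hdeg t₂ ⟨_, h₂, Or.inr rfl⟩]

end NodeDisjoint

/-- A path `t₀ - s₁ - t₂ - s₃ - t₄` whose edges are the pairs `(sᵢ, tⱼ)`. -/
structure TSPath (W : Type*) where
  (t₀ s₁ t₂ s₃ t₄ : W)
  deriving DecidableEq

namespace TSPath

variable {W : Type*} [DecidableEq W] (p : TSPath W) {v : W}

def edges : Finset (W × W) :=
  {(p.s₁, p.t₀), (p.s₁, p.t₂), (p.s₃, p.t₂), (p.s₃, p.t₄)}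

def Nodup : Prop :=
  [p.t₀, p.s₁, p.t₂, p.s₃, p.t₄].Nodup

theorem covers_edges_iff :
    Covers p.edges v ↔ v = p.t₀ ∨ v = p.s₁ ∨ v = p.t₂ ∨ v = p.s₃ ∨ v = p.t₄ := by
  simp only [Covers, edges, Finset.mem_insert, Finset.mem_singleton, or_and_right, exists_or,
    exists_eq_left]
  grind

variable {p}

theorem bipDeg_edges_le_two (hp : p.Nodup) (v : W) : bipDeg p.edges v ≤ 2 := by
  simp only [Nodup, List.nodup_cons, List.mem_cons, List.not_mem_nil] at hp
  simp only [bipDeg, edges, Finset.filter_insert, Finset.filter_singleton]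
  split_ifs <;> grind [Finset.card_insert_of_notMem]

theorem bipDeg_edges_t₂ (hp : p.Nodup) : bipDeg p.edges p.t₂ = 2 := by
  simp only [Nodup, List.nodup_cons, List.mem_cons, List.not_mem_nil] at hp
  simp only [bipDeg, edges, Finset.filter_insert, Finset.filter_singleton]
  split_ifs <;> grind [Finset.card_insert_of_notMem]

theorem vFree_edges (hp : p.Nodup) : VFree p.edges := by
  rintro ⟨s, t₁, t₂, ht, h₁, h₂, -, hd₁, hd₂⟩
  have hmid := bipDeg_edges_t₂ hp
  simp only [Nodup, List.nodup_cons, List.mem_cons, List.not_mem_nil] at hp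
  simp only [edges, Finset.mem_insert, Finset.mem_singleton, Prod.mk.injEq] at h₁ h₂
  grind

end TSPath

section Hypergraph

variable {V : Type*} {X Y Z : Finset V} {𝓔 𝓜 : Finset (V × V × V)} {e : V × V × V}

def IsPerfectMatching (X Y Z : Finset V) (𝓜 : Finset (V × V × V)) : Prop :=
  (∀ m ∈ 𝓜, ∀ m' ∈ 𝓜, m ≠ m' → m.1 ≠ m'.1 ∧ m.2.1 ≠ m'.2.1 ∧ m.2.2 ≠ m'.2.2) ∧
    (∀ x ∈ X, ∃ m ∈ 𝓜, m.1 = x) ∧ (∀ y ∈ Y, ∃ m ∈ 𝓜, m.2.1 = y) ∧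
    (∀ z ∈ Z, ∃ m ∈ 𝓜, m.2.2 = z)

structure IsTripartite (X Y Z : Finset V) (𝓔 : Finset (V × V × V)) : Prop where
  disjoint_XY : Disjoint X Y
  disjoint_XZ : Disjoint X Z
  disjoint_YZ : Disjoint Y Z
  subset : 𝓔 ⊆ X ×ˢ Y ×ˢ Z

theorem IsTripartite.mem (hH : IsTripartite X Y Z 𝓔) (he : e ∈ 𝓔) :
    e.1 ∈ X ∧ e.2.1 ∈ Y ∧ e.2.2 ∈ Z := by
  simpa using hH.subset he

theorem IsTripartite.fst_ne_snd (hH : IsTripartite X Y Z 𝓔) (he : e ∈ 𝓔) : e.1 ≠ e.2.1 :=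
  fun h => Finset.disjoint_left.1 hH.disjoint_XY (hH.mem he).1 (h ▸ (hH.mem he).2.1)

theorem card_eq_mul_of_card_fiber_eq {α β : Type*} [DecidableEq β] {s : Finset α}
    {t : Finset β} {f : α → β} {k : ℕ} (hf : ∀ a ∈ s, f a ∈ t)
    (hk : ∀ b ∈ t, (s.filter fun a => f a = b).card = k) : s.card = t.card * k := by
  rw [Finset.card_eq_sum_card_fiberwise hf, Finset.sum_const_nat hk]

theorem isPerfectMatching_of_injOn (hXZ : X.card = Z.card) (hYZ : Y.card = Z.card)
    (h𝓜 : 𝓜 ⊆ X ×ˢ Y ×ˢ Z) (hx : Set.InjOn (fun m => m.1) (𝓜 : Set (V × V × V)))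
    (hy : Set.InjOn (fun m => m.2.1) (𝓜 : Set (V × V × V)))
    (hz : Set.SurjOn (fun m => m.2.2) (𝓜 : Set (V × V × V)) Z) :
    IsPerfectMatching X Y Z 𝓜 := by
  have mem : ∀ m ∈ 𝓜, m.1 ∈ X ∧ m.2.1 ∈ Y ∧ m.2.2 ∈ Z := fun m hm => by
    simpa using h𝓜 hm
  have hmapsX : Set.MapsTo (fun m => m.1) (𝓜 : Set (V × V × V)) X := fun m hm => (mem m hm).1
  have hmapsY : Set.MapsTo (fun m => m.2.1) (𝓜 : Set (V × V × V)) Y :=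
    fun m hm => (mem m hm).2.1
  have hmapsZ : Set.MapsTo (fun m => m.2.2) (𝓜 : Set (V × V × V)) Z :=
    fun m hm => (mem m hm).2.2
  have hcard : 𝓜.card = Z.card :=
    le_antisymm (hXZ ▸ Finset.card_le_card_of_injOn _ hmapsX hx)
      (Finset.card_le_card_of_surjOn _ hz)
  have hz' := Finset.injOn_of_surjOn_of_card_le _ hmapsZ hz hcard.le
  have hx' := Finset.surjOn_of_injOn_of_card_le _ hmapsX hx (by omega)
  have hy' := Finset.surjOn_of_injOn_of_card_le _ hmapsY hy (by omega)
  exact ⟨fun m hm m' hm' hne => ⟨fun h => hne (hx hm hm' h), fun h => hne (hy hm hm' h),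
    fun h => hne (hz' hm hm' h)⟩, fun x h => hx' h, fun y h => hy' h, fun z h => hz h⟩

end Hypergraph

section Gadget

variable {V : Type*} [DecidableEq V]

def gadgetEdges (X Y : Finset V) (𝓔 : Finset (V × V × V)) :
    Finset (GadgetNode V × GadgetNode V) :=
  X.image (fun x => ((Sum.inl (x, 0) : GadgetNode V), (Sum.inl (x, 1) : GadgetNode V))) ∪
  Y.image (fun y => ((Sum.inl (y, 0) : GadgetNode V), (Sum.inl (y, 1) : GadgetNode V))) ∪
  𝓔.biUnion (fun e =>
    { ((Sum.inr (e, 1) : GadgetNode V), (Sum.inr (e, 0) : GadgetNode V)),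
      (Sum.inr (e, 1), Sum.inr (e, 2)),
      (Sum.inr (e, 3), Sum.inr (e, 2)),
      (Sum.inr (e, 3), Sum.inr (e, 4)),
      (Sum.inl (e.1, 0), Sum.inr (e, 0)),
      (Sum.inl (e.2.1, 0), Sum.inr (e, 0)),
      (Sum.inr (e, 1), Sum.inl (e.2.2, 0)) })

def gadgetTNodes (X Y Z : Finset V) (𝓔 : Finset (V × V × V)) : Finset (GadgetNode V) :=
  X.image (fun x => Sum.inl (x, (1 : Fin 2))) ∪
  Y.image (fun y => Sum.inl (y, (1 : Fin 2))) ∪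
  Z.image (fun z => Sum.inl (z, (0 : Fin 2))) ∪
  𝓔.image (fun e => Sum.inr (e, (0 : Fin 5))) ∪
  𝓔.image (fun e => Sum.inr (e, (2 : Fin 5))) ∪
  𝓔.image (fun e => Sum.inr (e, (4 : Fin 5)))

variable {X Y Z : Finset V} {𝓔 : Finset (V × V × V)} {e : V × V × V}
  {q : GadgetNode V × GadgetNode V}

theorem mem_gadgetEdges : q ∈ gadgetEdges X Y 𝓔 ↔
    (∃ w ∈ X ∪ Y, q = (.inl (w, 0), .inl (w, 1))) ∨
    ∃ e ∈ 𝓔, q = (.inr (e, 1), .inr (e, 0)) ∨ q = (.inr (e, 1), .inr (e, 2)) ∨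
      q = (.inr (e, 3), .inr (e, 2)) ∨ q = (.inr (e, 3), .inr (e, 4)) ∨
      q = (.inl (e.1, 0), .inr (e, 0)) ∨ q = (.inl (e.2.1, 0), .inr (e, 0)) ∨
      q = (.inr (e, 1), .inl (e.2.2, 0)) := by
  simp only [gadgetEdges, Finset.mem_union, Finset.mem_image, Finset.mem_biUnion,
    Finset.mem_insert, Finset.mem_singleton]
  grind

theorem eq_of_mem_gadgetEdges_inl_one (hq : q ∈ gadgetEdges X Y 𝓔) {w : V}
    (hw : q.1 = .inl (w, 1) ∨ q.2 = .inl (w, 1)) : q = (.inl (w, 0), .inl (w, 1)) := by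
  rw [mem_gadgetEdges] at hq
  rcases hq with ⟨w', -, rfl⟩ | ⟨e', -, rfl | rfl | rfl | rfl | rfl | rfl | rfl⟩ <;> simp_all

theorem eq_of_mem_gadgetEdges_inr_four (hq : q ∈ gadgetEdges X Y 𝓔)
    (he : q.1 = .inr (e, 4) ∨ q.2 = .inr (e, 4)) : q = (.inr (e, 3), .inr (e, 4)) := by
  rw [mem_gadgetEdges] at hq
  rcases hq with ⟨w', -, rfl⟩ | ⟨e', -, rfl | rfl | rfl | rfl | rfl | rfl | rfl⟩ <;> simp_all

theorem eq_of_mem_gadgetEdges_inr_two (hq : q ∈ gadgetEdges X Y 𝓔)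
    (he : q.1 = .inr (e, 2) ∨ q.2 = .inr (e, 2)) :
    q = (.inr (e, 1), .inr (e, 2)) ∨ q = (.inr (e, 3), .inr (e, 2)) := by
  rw [mem_gadgetEdges] at hq
  rcases hq with ⟨w', -, rfl⟩ | ⟨e', -, rfl | rfl | rfl | rfl | rfl | rfl | rfl⟩ <;> simp_all

theorem eq_of_mem_gadgetEdges_inr_zero (hq : q ∈ gadgetEdges X Y 𝓔)
    (he : q.1 = .inr (e, 0) ∨ q.2 = .inr (e, 0)) :
    q = (.inr (e, 1), .inr (e, 0)) ∨ q = (.inl (e.1, 0), .inr (e, 0)) ∨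
      q = (.inl (e.2.1, 0), .inr (e, 0)) := by
  rw [mem_gadgetEdges] at hq
  rcases hq with ⟨w', -, rfl⟩ | ⟨e', -, rfl | rfl | rfl | rfl | rfl | rfl | rfl⟩ <;> simp_all

theorem exists_of_mem_gadgetEdges_inl_zero (hH : IsTripartite X Y Z 𝓔)
    (hq : q ∈ gadgetEdges X Y 𝓔) {z : V} (hz : z ∈ Z)
    (hqz : q.1 = .inl (z, 0) ∨ q.2 = .inl (z, 0)) :
    ∃ e ∈ 𝓔, e.2.2 = z ∧ q = (.inr (e, 1), .inl (z, 0)) := by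
  have hXZ := Finset.disjoint_left.1 hH.disjoint_XZ
  have hYZ := Finset.disjoint_left.1 hH.disjoint_YZ
  rw [mem_gadgetEdges] at hq
  rcases hq with ⟨w, hw, rfl⟩ | ⟨e, he, rfl | rfl | rfl | rfl | rfl | rfl | rfl⟩ <;>
    simp at hqz
  · subst hqz
    rcases Finset.mem_union.1 hw with hw | hw
    exacts [(hXZ hw hz).elim, (hYZ hw hz).elim]
  · exact absurd hz (hXZ (hqz ▸ (hH.mem he).1))
  · exact absurd hz (hYZ (hqz ▸ (hH.mem he).2.1))
  · exact ⟨e, he, hqz, by rw [hqz]⟩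

end Gadget

section Backward

variable {V : Type*} [DecidableEq V] {X Y Z : Finset V} {𝓔 : Finset (V × V × V)}
  {N : Finset (GadgetNode V × GadgetNode V)} {e e' : V × V × V} {w : V}

/-- `N` is a `𝚅`-free 2-matching of the gadget graph covering its `t`-nodes. -/
structure IsGadgetCover (X Y Z : Finset V) (𝓔 : Finset (V × V × V))
    (N : Finset (GadgetNode V × GadgetNode V)) : Prop where
  subset : N ⊆ gadgetEdges X Y 𝓔
  bipDeg_le : ∀ v, bipDeg N v ≤ 2
  vFree : VFree N
  covers : ∀ t ∈ gadgetTNodes X Y Z 𝓔, Covers N t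

namespace IsGadgetCover

theorem pendant_inl (hN : IsGadgetCover X Y Z 𝓔 N) (hw : w ∈ X ∪ Y) :
    ((.inl (w, 0), .inl (w, 1)) : GadgetNode V × GadgetNode V) ∈ N ∧
      bipDeg N (.inl (w, 1)) = 1 := by
  refine mem_and_bipDeg_eq_one_of_covers
    (fun q hq => eq_of_mem_gadgetEdges_inl_one (hN.subset hq)) (hN.covers _ ?_)
  rcases Finset.mem_union.1 hw with hw | hw <;> simp [gadgetTNodes, hw]

theorem inr_one_two_mem (hN : IsGadgetCover X Y Z 𝓔 N) (he : e ∈ 𝓔) :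
    ((.inr (e, 1), .inr (e, 2)) : GadgetNode V × GadgetNode V) ∈ N := by
  by_contra h12
  obtain ⟨h34, hd4⟩ := mem_and_bipDeg_eq_one_of_covers
    (fun q hq => eq_of_mem_gadgetEdges_inr_four (hN.subset hq))
    (hN.covers (.inr (e, 4)) (by simp [gadgetTNodes, he]))
  obtain ⟨h32, hd2⟩ := mem_and_bipDeg_eq_one_of_covers (p := (.inr (e, 3), .inr (e, 2)))
    (fun q hq hq2 => (eq_of_mem_gadgetEdges_inr_two (hN.subset hq) hq2).resolve_left
      (by rintro rfl; exact h12 hq))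
    (hN.covers (.inr (e, 2)) (by simp [gadgetTNodes, he]))
  exact hN.vFree.bipDeg_ne_one (hN.bipDeg_le _) h32 h34 (by simp) hd4 hd2

theorem exists_inr_one_inl_zero_mem (hN : IsGadgetCover X Y Z 𝓔 N) (hH : IsTripartite X Y Z 𝓔)
    {z : V} (hz : z ∈ Z) :
    ∃ e ∈ 𝓔, e.2.2 = z ∧ ((.inr (e, 1), .inl (z, 0)) : GadgetNode V × GadgetNode V) ∈ N := by
  obtain ⟨q, hq, hqz⟩ := hN.covers (.inl (z, 0)) (by simp [gadgetTNodes, hz])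
  obtain ⟨e, he, hez, rfl⟩ := exists_of_mem_gadgetEdges_inl_zero hH (hN.subset hq) hz hqz
  exact ⟨e, he, hez, hq⟩

theorem eq_of_inl_inr_zero_mem (hN : IsGadgetCover X Y Z 𝓔 N) (hw : w ∈ X ∪ Y)
    (h : ((.inl (w, 0), .inr (e, 0)) : GadgetNode V × GadgetNode V) ∈ N)
    (h' : ((.inl (w, 0), .inr (e', 0)) : GadgetNode V × GadgetNode V) ∈ N) : e = e' := by
  simpa using eq_of_bipDeg_le_two (hN.bipDeg_le _) (hN.pendant_inl hw).1 h h' (by simp) (by simp)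

theorem inl_inr_zero_mem (hN : IsGadgetCover X Y Z 𝓔 N) (hH : IsTripartite X Y Z 𝓔)
    (he : e ∈ 𝓔) (hz : ((.inr (e, 1), .inl (e.2.2, 0)) : GadgetNode V × GadgetNode V) ∈ N) :
    ((.inl (e.1, 0), .inr (e, 0)) : GadgetNode V × GadgetNode V) ∈ N ∧
      ((.inl (e.2.1, 0), .inr (e, 0)) : GadgetNode V × GadgetNode V) ∈ N := by
  have h10 : ((.inr (e, 1), .inr (e, 0)) : GadgetNode V × GadgetNode V) ∉ N := fun h10 => by
    simpa using eq_of_bipDeg_le_two (hN.bipDeg_le _) (hN.inr_one_two_mem he) hz h10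
      (by simp) (by simp)
  have hinc : ∀ q ∈ N, q.1 = .inr (e, 0) ∨ q.2 = .inr (e, 0) →
      q ∈ ({(.inl (e.1, 0), .inr (e, 0)), (.inl (e.2.1, 0), .inr (e, 0))} :
        Finset (GadgetNode V × GadgetNode V)) := fun q hq hq0 => by
    rcases eq_of_mem_gadgetEdges_inr_zero (hN.subset hq) hq0 with rfl | rfl | rfl
    exacts [absurd hq h10, by simp, by simp]
  have hdeg : 2 ≤ bipDeg N (.inr (e, 0)) := by
    by_contra hlt
    obtain ⟨q, hq, hq0⟩ := hN.covers (.inr (e, 0)) (by simp [gadgetTNodes, he])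
    obtain ⟨w, hw, rfl⟩ : ∃ w ∈ X ∪ Y, q = (.inl (w, 0), .inr (e, 0)) := by
      have := hinc q hq hq0
      simp only [Finset.mem_insert, Finset.mem_singleton] at this
      rcases this with rfl | rfl
      exacts [⟨_, Finset.mem_union_left _ (hH.mem he).1, rfl⟩,
        ⟨_, Finset.mem_union_right _ (hH.mem he).2.1, rfl⟩]
    have := bipDeg_pos_iff.2 ⟨_, hq, hq0⟩
    exact hN.vFree.bipDeg_ne_one (hN.bipDeg_le _) hq (hN.pendant_inl hw).1 (by simp)
      (hN.pendant_inl hw).2 (by omega)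
  have := subset_of_card_le_bipDeg hinc (by rwa [Finset.card_pair (by simp [hH.fst_ne_snd he])])
  simpa only [Finset.insert_subset_iff, Finset.singleton_subset_iff] using this

theorem exists_isPerfectMatching (hN : IsGadgetCover X Y Z 𝓔 N) (hH : IsTripartite X Y Z 𝓔)
    (hXZ : X.card = Z.card) (hYZ : Y.card = Z.card) :
    ∃ 𝓜 ⊆ 𝓔, IsPerfectMatching X Y Z 𝓜 := by
  set 𝓜 := 𝓔.filter fun e => ((.inr (e, 1), .inl (e.2.2, 0)) : GadgetNode V × GadgetNode V) ∈ N
  have hserved : ∀ {e}, e ∈ 𝓜 → _ := fun he =>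
    hN.inl_inr_zero_mem hH (Finset.mem_filter.1 he).1 (Finset.mem_filter.1 he).2
  have hmem : ∀ {e}, e ∈ 𝓜 → _ := fun he => hH.mem (Finset.mem_filter.1 he).1
  refine ⟨𝓜, Finset.filter_subset _ _, isPerfectMatching_of_injOn hXZ hYZ
    ((Finset.filter_subset _ _).trans hH.subset) ?_ ?_ ?_⟩
  · intro e he e' he' (h : e.1 = e'.1)
    have hx' := (hserved he').1
    rw [← h] at hx'
    exact hN.eq_of_inl_inr_zero_mem (Finset.mem_union_left _ (hmem he).1) (hserved he).1 hx'
  · intro e he e' he' (h : e.2.1 = e'.2.1)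
    have hy' := (hserved he').2
    rw [← h] at hy'
    exact hN.eq_of_inl_inr_zero_mem (Finset.mem_union_right _ (hmem he).2.1) (hserved he).2 hy'
  · intro z hz
    obtain ⟨e, he, rfl, hez⟩ := hN.exists_inr_one_inl_zero_mem hH hz
    exact ⟨e, Finset.mem_filter.2 ⟨he, hez⟩, rfl⟩

end IsGadgetCover

end Backward

section Forward

variable {V : Type*} [DecidableEq V] {X Y Z : Finset V} {𝓔 𝓜 : Finset (V × V × V)}
  {p : TSPath (GadgetNode V)}

def xyPath (e : V × V × V) : TSPath (GadgetNode V) :=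
  ⟨.inl (e.1, 1), .inl (e.1, 0), .inr (e, 0), .inl (e.2.1, 0), .inl (e.2.1, 1)⟩

def zPath (e : V × V × V) : TSPath (GadgetNode V) :=
  ⟨.inl (e.2.2, 0), .inr (e, 1), .inr (e, 2), .inr (e, 3), .inr (e, 4)⟩

def hyperedgePath (e : V × V × V) : TSPath (GadgetNode V) :=
  ⟨.inr (e, 0), .inr (e, 1), .inr (e, 2), .inr (e, 3), .inr (e, 4)⟩

def matchingPaths (𝓔 𝓜 : Finset (V × V × V)) : Finset (TSPath (GadgetNode V)) :=
  𝓜.image xyPath ∪ 𝓜.image zPath ∪ (𝓔 \ 𝓜).image hyperedgePath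

theorem mem_matchingPaths : p ∈ matchingPaths 𝓔 𝓜 ↔
    (∃ e ∈ 𝓜, p = xyPath e) ∨ (∃ e ∈ 𝓜, p = zPath e) ∨ ∃ e ∈ 𝓔 \ 𝓜, p = hyperedgePath e := by
  simp only [matchingPaths, Finset.mem_union, Finset.mem_image, eq_comm, or_assoc]

theorem nodup_of_mem_matchingPaths (hH : IsTripartite X Y Z 𝓔) (h𝓜 : 𝓜 ⊆ 𝓔)
    (hp : p ∈ matchingPaths 𝓔 𝓜) : p.Nodup := by
  rcases mem_matchingPaths.1 hp with ⟨e, he, rfl⟩ | ⟨e, he, rfl⟩ | ⟨e, he, rfl⟩ <;>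
    simp [TSPath.Nodup, xyPath, zPath, hyperedgePath]
  exact hH.fst_ne_snd (h𝓜 he)

theorem edges_subset_gadgetEdges (hH : IsTripartite X Y Z 𝓔) (h𝓜 : 𝓜 ⊆ 𝓔)
    (hp : p ∈ matchingPaths 𝓔 𝓜) : p.edges ⊆ gadgetEdges X Y 𝓔 := by
  intro q hq
  rw [mem_gadgetEdges]
  rcases mem_matchingPaths.1 hp with ⟨e, he, rfl⟩ | ⟨e, he, rfl⟩ | ⟨e, he, rfl⟩ <;>
    simp only [TSPath.edges, xyPath, zPath, hyperedgePath, Finset.mem_insert,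
      Finset.mem_singleton] at hq
  · have := hH.mem (h𝓜 he)
    rcases hq with rfl | rfl | rfl | rfl
    · exact Or.inl ⟨_, Finset.mem_union_left _ this.1, rfl⟩
    · exact Or.inr ⟨e, h𝓜 he, by simp⟩
    · exact Or.inr ⟨e, h𝓜 he, by simp⟩
    · exact Or.inl ⟨_, Finset.mem_union_right _ this.2.1, rfl⟩
  · exact Or.inr ⟨e, h𝓜 he, by rcases hq with rfl | rfl | rfl | rfl <;> simp⟩
  · exact Or.inr ⟨e, (Finset.mem_sdiff.1 he).1, by rcases hq with rfl | rfl | rfl | rfl <;> simp⟩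

theorem nodeDisjoint_matchingPaths (hH : IsTripartite X Y Z 𝓔) (h𝓜 : 𝓜 ⊆ 𝓔)
    (hM : ∀ m ∈ 𝓜, ∀ m' ∈ 𝓜, m ≠ m' → m.1 ≠ m'.1 ∧ m.2.1 ≠ m'.2.1 ∧ m.2.2 ≠ m'.2.2) :
    NodeDisjoint (matchingPaths 𝓔 𝓜) TSPath.edges := by
  have hXY := Finset.disjoint_left.1 hH.disjoint_XY
  have hXZ := Finset.disjoint_left.1 hH.disjoint_XZ
  have hYZ := Finset.disjoint_left.1 hH.disjoint_YZ
  have hmem := fun e (he : e ∈ 𝓜) => hH.mem (h𝓜 he)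
  rintro p hp q hq hpq v hvp hvq
  rw [TSPath.covers_edges_iff] at hvp hvq
  rcases mem_matchingPaths.1 hp with ⟨e, he, rfl⟩ | ⟨e, he, rfl⟩ | ⟨e, he, rfl⟩ <;>
  rcases mem_matchingPaths.1 hq with ⟨e', he', rfl⟩ | ⟨e', he', rfl⟩ | ⟨e', he', rfl⟩ <;>
  simp only [xyPath, zPath, hyperedgePath, ne_eq, TSPath.mk.injEq] at hvp hvq hpq <;>
  rcases hvp with rfl | rfl | rfl | rfl | rfl <;> simp at hvq hpq <;> grind

theorem covers_biUnion_matchingPaths (hM : IsPerfectMatching X Y Z 𝓜) {t : GadgetNode V}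
    (ht : t ∈ gadgetTNodes X Y Z 𝓔) :
    Covers ((matchingPaths 𝓔 𝓜).biUnion TSPath.edges) t := by
  obtain ⟨-, hX, hY, hZ⟩ := hM
  have cover : ∀ p ∈ matchingPaths 𝓔 𝓜, t = p.t₀ ∨ t = p.s₁ ∨ t = p.t₂ ∨ t = p.s₃ ∨ t = p.t₄ →
      Covers ((matchingPaths 𝓔 𝓜).biUnion TSPath.edges) t := fun p hp ht =>
    covers_biUnion_iff.2 ⟨p, hp, (TSPath.covers_edges_iff p).2 ht⟩
  have hxy : ∀ e ∈ 𝓜, xyPath e ∈ matchingPaths 𝓔 𝓜 := fun e he =>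
    mem_matchingPaths.2 (Or.inl ⟨e, he, rfl⟩)
  have hz : ∀ e ∈ 𝓜, zPath e ∈ matchingPaths 𝓔 𝓜 := fun e he =>
    mem_matchingPaths.2 (Or.inr (Or.inl ⟨e, he, rfl⟩))
  have hP : ∀ e ∈ 𝓔, e ∉ 𝓜 → hyperedgePath e ∈ matchingPaths 𝓔 𝓜 := fun e he hm =>
    mem_matchingPaths.2 (Or.inr (Or.inr ⟨e, Finset.mem_sdiff.2 ⟨he, hm⟩, rfl⟩))
  simp only [gadgetTNodes, Finset.mem_union, Finset.mem_image] at ht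
  rcases ht with ((((⟨x, hx, rfl⟩ | ⟨y, hy, rfl⟩) | ⟨z, hz', rfl⟩) | ⟨e, he, rfl⟩) | ⟨e, he, rfl⟩) |
    ⟨e, he, rfl⟩
  · obtain ⟨m, hm, rfl⟩ := hX x hx
    exact cover _ (hxy m hm) (by simp [xyPath])
  · obtain ⟨m, hm, rfl⟩ := hY y hy
    exact cover _ (hxy m hm) (by simp [xyPath])
  · obtain ⟨m, hm, rfl⟩ := hZ z hz'
    exact cover _ (hz m hm) (by simp [zPath])
  all_goals by_cases hm : e ∈ 𝓜
  · exact cover _ (hxy e hm) (by simp [xyPath])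
  · exact cover _ (hP e he hm) (by simp [hyperedgePath])
  · exact cover _ (hz e hm) (by simp [zPath])
  · exact cover _ (hP e he hm) (by simp [hyperedgePath])
  · exact cover _ (hz e hm) (by simp [zPath])
  · exact cover _ (hP e he hm) (by simp [hyperedgePath])

theorem IsPerfectMatching.exists_isGadgetCover (hM : IsPerfectMatching X Y Z 𝓜)
    (h𝓜 : 𝓜 ⊆ 𝓔) (hH : IsTripartite X Y Z 𝓔) :
    ∃ N, IsGadgetCover X Y Z 𝓔 N := by
  have hdisj := nodeDisjoint_matchingPaths hH h𝓜 hM.1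
  have hnodup := fun p hp => nodup_of_mem_matchingPaths (p := p) hH h𝓜 hp
  exact ⟨_, Finset.biUnion_subset.2 fun p hp => edges_subset_gadgetEdges hH h𝓜 hp,
    hdisj.bipDeg_biUnion_le fun p hp => TSPath.bipDeg_edges_le_two (hnodup p hp),
    hdisj.vFree_biUnion fun p hp => TSPath.vFree_edges (hnodup p hp),
    fun t ht => covers_biUnion_matchingPaths hM ht⟩

end Forward

theorem gadget_reduction_correct_general {V : Type*} [DecidableEq V]
    (X Y Z : Finset V) (hXY : Disjoint X Y) (hXZ : Disjoint X Z) (hYZ : Disjoint Y Z)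
    (𝓔 : Finset (V × V × V)) (h𝓔 : 𝓔 ⊆ X ×ˢ Y ×ˢ Z)
    (hregX : ∀ x ∈ X, (𝓔.filter (fun e => e.1 = x)).card = 3)
    (hregY : ∀ y ∈ Y, (𝓔.filter (fun e => e.2.1 = y)).card = 3)
    (hregZ : ∀ z ∈ Z, (𝓔.filter (fun e => e.2.2 = z)).card = 3)
    (T : Finset (GadgetNode V))
    (hT : T = X.image (fun x => Sum.inl (x, (1 : Fin 2))) ∪
              Y.image (fun y => Sum.inl (y, (1 : Fin 2))) ∪
              Z.image (fun z => Sum.inl (z, (0 : Fin 2))) ∪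
              𝓔.image (fun e => Sum.inr (e, (0 : Fin 5))) ∪
              𝓔.image (fun e => Sum.inr (e, (2 : Fin 5))) ∪
              𝓔.image (fun e => Sum.inr (e, (4 : Fin 5))))
    (E : Finset (GadgetNode V × GadgetNode V))
    (hEdef : E =
      X.image (fun x => ((Sum.inl (x, 0) : GadgetNode V), (Sum.inl (x, 1) : GadgetNode V))) ∪
      Y.image (fun y => ((Sum.inl (y, 0) : GadgetNode V), (Sum.inl (y, 1) : GadgetNode V))) ∪
      𝓔.biUnion (fun e =>
        { ((Sum.inr (e, 1) : GadgetNode V), (Sum.inr (e, 0) : GadgetNode V)),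
          (Sum.inr (e, 1), Sum.inr (e, 2)),
          (Sum.inr (e, 3), Sum.inr (e, 2)),
          (Sum.inr (e, 3), Sum.inr (e, 4)),
          (Sum.inl (e.1, 0), Sum.inr (e, 0)),
          (Sum.inl (e.2.1, 0), Sum.inr (e, 0)),
          (Sum.inr (e, 1), Sum.inl (e.2.2, 0)) })) :
    (∃ 𝓜 ⊆ 𝓔,
        (∀ m ∈ 𝓜, ∀ m' ∈ 𝓜, m ≠ m' →
          m.1 ≠ m'.1 ∧ m.2.1 ≠ m'.2.1 ∧ m.2.2 ≠ m'.2.2) ∧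
        (∀ x ∈ X, ∃ m ∈ 𝓜, m.1 = x) ∧ (∀ y ∈ Y, ∃ m ∈ 𝓜, m.2.1 = y) ∧
        (∀ z ∈ Z, ∃ m ∈ 𝓜, m.2.2 = z)) ↔
    (∃ N : Finset (GadgetNode V × GadgetNode V),
        Is2Matching E N ∧ VFree N ∧ ∀ t ∈ T, Covers N t) := by
  have hH : IsTripartite X Y Z 𝓔 := ⟨hXY, hXZ, hYZ, h𝓔⟩
  have hcardX := card_eq_mul_of_card_fiber_eq (fun e he => (hH.mem he).1) hregX
  have hcardY := card_eq_mul_of_card_fiber_eq (fun e he => (hH.mem he).2.1) hregY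
  have hcardZ := card_eq_mul_of_card_fiber_eq (fun e he => (hH.mem he).2.2) hregZ
  subst hT hEdef
  constructor
  · rintro ⟨𝓜, h𝓜, hM⟩
    obtain ⟨N, hN⟩ := IsPerfectMatching.exists_isGadgetCover hM h𝓜 hH
    exact ⟨N, ⟨hN.subset, hN.bipDeg_le⟩, hN.vFree, hN.covers⟩
  · rintro ⟨N, ⟨hNE, hdeg⟩, hvf, hcov⟩
    exact IsGadgetCover.exists_isPerfectMatching ⟨hNE, hdeg, hvf, hcov⟩ hH (by omega) (by omega)

/-- Correctness of the gadget reduction: a tripartite 3-regular 3-uniform hypergraph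
`H = (X,Y,Z;𝓔)` has a perfect matching iff the constructed bipartite graph
`G = (S,T;E)` has a `𝚅`-free 2-matching covering `T`. -/
theorem gadget_reduction_correct {V : Type*} [DecidableEq V] [Fintype V]
    (X Y Z : Finset V) (hXY : Disjoint X Y) (hXZ : Disjoint X Z) (hYZ : Disjoint Y Z)
    (𝓔 : Finset (V × V × V)) (h𝓔 : 𝓔 ⊆ X ×ˢ Y ×ˢ Z)
    (hregX : ∀ x ∈ X, (𝓔.filter (fun e => e.1 = x)).card = 3)
    (hregY : ∀ y ∈ Y, (𝓔.filter (fun e => e.2.1 = y)).card = 3)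
    (hregZ : ∀ z ∈ Z, (𝓔.filter (fun e => e.2.2 = z)).card = 3)
    (T : Finset (GadgetNode V))
    (hT : T = X.image (fun x => Sum.inl (x, (1 : Fin 2))) ∪
              Y.image (fun y => Sum.inl (y, (1 : Fin 2))) ∪
              Z.image (fun z => Sum.inl (z, (0 : Fin 2))) ∪
              𝓔.image (fun e => Sum.inr (e, (0 : Fin 5))) ∪
              𝓔.image (fun e => Sum.inr (e, (2 : Fin 5))) ∪
              𝓔.image (fun e => Sum.inr (e, (4 : Fin 5))))
    (E : Finset (GadgetNode V × GadgetNode V))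
    (hEdef : E =
      X.image (fun x => ((Sum.inl (x, 0) : GadgetNode V), (Sum.inl (x, 1) : GadgetNode V))) ∪
      Y.image (fun y => ((Sum.inl (y, 0) : GadgetNode V), (Sum.inl (y, 1) : GadgetNode V))) ∪
      𝓔.biUnion (fun e =>
        { ((Sum.inr (e, 1) : GadgetNode V), (Sum.inr (e, 0) : GadgetNode V)),
          (Sum.inr (e, 1), Sum.inr (e, 2)),
          (Sum.inr (e, 3), Sum.inr (e, 2)),
          (Sum.inr (e, 3), Sum.inr (e, 4)),
          (Sum.inl (e.1, 0), Sum.inr (e, 0)),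
          (Sum.inl (e.2.1, 0), Sum.inr (e, 0)),
          (Sum.inr (e, 1), Sum.inl (e.2.2, 0)) })) :
    (∃ 𝓜 ⊆ 𝓔,
        (∀ m ∈ 𝓜, ∀ m' ∈ 𝓜, m ≠ m' →
          m.1 ≠ m'.1 ∧ m.2.1 ≠ m'.2.1 ∧ m.2.2 ≠ m'.2.2) ∧
        (∀ x ∈ X, ∃ m ∈ 𝓜, m.1 = x) ∧ (∀ y ∈ Y, ∃ m ∈ 𝓜, m.2.1 = y) ∧
        (∀ z ∈ Z, ∃ m ∈ 𝓜, m.2.2 = z)) ↔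
    (∃ N : Finset (GadgetNode V × GadgetNode V),
        Is2Matching E N ∧ VFree N ∧ ∀ t ∈ T, Covers N t) :=
  gadget_reduction_correct_general X Y Z hXY hXZ hYZ 𝓔 h𝓔 hregX hregY hregZ T hT E hEdef
end

section
/- Let G=(S,T;E) be a bipartite graph and let N be the edge set of a family of pairwise node-disjoint S-links and S-claws covering a set S'⊆S, such that every node of S has degree at most 4 in E and degree at most 3 in E−N, and every node of T has degree 3 in E. Then the set T' of nodes of T not covered by N can be covered by a matching M disjoint from N, and deleting one edge from each S-claw of N yields a matching together with a family of node-disjoint S-links whose union covers T. -/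
/-- An `S`-claw `(v, u₁, u₂, u₃)`: a star with three edges, center `v ∈ T` and
distinct leaves `u₁, u₂, u₃ ∈ S`. -/
def IsSClaw {V : Type*} (E : Finset (V × V)) (c : V × V × V × V) : Prop :=
  (c.2.1, c.1) ∈ E ∧ (c.2.2.1, c.1) ∈ E ∧ (c.2.2.2, c.1) ∈ E ∧
  c.2.1 ≠ c.2.2.1 ∧ c.2.1 ≠ c.2.2.2 ∧ c.2.2.1 ≠ c.2.2.2

/-- The nodes of an `S`-claw. -/
def clawNodes {V : Type*} [DecidableEq V] (c : V × V × V × V) : Finset V :=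
  {c.1, c.2.1, c.2.2.1, c.2.2.2}

/-- The three edges of an `S`-claw. -/
def clawEdges {V : Type*} [DecidableEq V] (c : V × V × V × V) : Finset (V × V) :=
  {(c.2.1, c.1), (c.2.2.1, c.1), (c.2.2.2, c.1)}

/-!
Let `T'` be the nodes of `T` missed by `N`. Every `E`-edge at a node of `T'` avoids `N`, so in
`E − N` the nodes of `T'` have degree 3 while the nodes of `S` have degree at most 3. Counting
edges then gives Hall's condition for `T'`, and Hall's theorem yields a matching `M ⊆ E − N`
covering `T'`. Deleting the third edge of a claw leaves an `S`-link through its centre, so the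
links of `N` together with these cover every node of `T` that `N` covers, and `M` covers the rest.
-/

open Finset

section Bipartite

variable {V : Type*} {S T : Finset V} {D : Finset (V × V)}

lemma Covers.mono {M M' : Finset (V × V)} {v : V} (h : Covers M v) (hM : M ⊆ M') :
    Covers M' v :=
  let ⟨e, he, hv⟩ := h; ⟨e, hM he, hv⟩

lemma exists_snd_eq_of_covers (hST : Disjoint S T) (hD : D ⊆ S ×ˢ T) {t : V} (ht : t ∈ T)
    (h : Covers D t) : ∃ e ∈ D, e.2 = t := by
  obtain ⟨e, he, hfst | hsnd⟩ := h
  · exact absurd (hfst ▸ (mem_product.1 (hD he)).1) (disjoint_right.1 hST ht)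
  · exact ⟨e, he, hsnd⟩

variable [DecidableEq V]

lemma bipDeg_sdiff_of_not_covers {E N : Finset (V × V)} {v : V} (hv : ¬ Covers N v) :
    bipDeg (E \ N) v = bipDeg E v := by
  unfold bipDeg
  congr 1
  ext e
  simp only [mem_filter, mem_sdiff]
  exact ⟨fun h => ⟨h.1.1, h.2⟩, fun ⟨he, hev⟩ => ⟨⟨he, fun heN => hv ⟨e, heN, hev⟩⟩, hev⟩⟩

lemma bipDeg_eq_card_left (hST : Disjoint S T) (hD : D ⊆ S ×ˢ T) {t : V} (ht : t ∈ T) :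
    bipDeg D t = #{s ∈ S | (s, t) ∈ D} := by
  have hfst : ∀ e ∈ D, e.1 ∈ S ∧ e.2 ∈ T := fun e he => mem_product.1 (hD he)
  have htS : t ∉ S := disjoint_right.1 hST ht
  unfold bipDeg
  refine card_nbij' Prod.fst (fun s => (s, t)) ?_ ?_ ?_ ?_ <;>
    intro e he <;> simp only [mem_coe, mem_filter] at he ⊢ <;> grind

lemma bipDeg_eq_card_right (hST : Disjoint S T) (hD : D ⊆ S ×ˢ T) {s : V} (hs : s ∈ S) :
    bipDeg D s = #{t ∈ T | (s, t) ∈ D} := by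
  have hfst : ∀ e ∈ D, e.1 ∈ S ∧ e.2 ∈ T := fun e he => mem_product.1 (hD he)
  have hsT : s ∉ T := disjoint_left.1 hST hs
  unfold bipDeg
  refine card_nbij' Prod.snd (fun t => (s, t)) ?_ ?_ ?_ ?_ <;>
    intro e he <;> simp only [mem_coe, mem_filter] at he ⊢ <;> grind

variable {T' : Finset V} {k : ℕ}

lemma card_le_card_biUnion_of_bipDeg (hST : Disjoint S T) (hD : D ⊆ S ×ˢ T) (hT' : T' ⊆ T)
    (hk : 0 < k) (hT'deg : ∀ t ∈ T', k ≤ bipDeg D t) (hSdeg : ∀ s ∈ S, bipDeg D s ≤ k)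
    (A : Finset T') : #A ≤ #(A.biUnion fun t => {s ∈ S | (s, t.1) ∈ D}) := by
  set B := A.biUnion fun t => {s ∈ S | (s, t.1) ∈ D}
  have hB : ∀ s ∈ B, s ∈ S := fun s hs => by
    obtain ⟨t, -, hst⟩ := mem_biUnion.1 hs
    exact (mem_filter.1 hst).1
  suffices #A * k ≤ #B * k from Nat.le_of_mul_le_mul_right this hk
  refine card_mul_le_card_mul (fun t s => (s, t.1) ∈ D) (fun t ht => ?_) (fun s hs => ?_)
  · calc k ≤ bipDeg D t := hT'deg t t.2
      _ = #{s ∈ S | (s, t.1) ∈ D} := bipDeg_eq_card_left hST hD (hT' t.2)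
      _ ≤ #(B.bipartiteAbove _ t) := card_le_card fun s hs => mem_filter.2
          ⟨mem_biUnion.2 ⟨t, ht, hs⟩, (mem_filter.1 hs).2⟩
  · calc #(A.bipartiteBelow _ s) ≤ #{t ∈ T | (s, t) ∈ D} :=
          card_le_card_of_injOn Subtype.val
            (fun t ht => by
              rw [mem_coe, mem_bipartiteBelow] at ht
              exact mem_filter.2 ⟨hT' t.2, ht.2⟩)
            Subtype.val_injective.injOn
      _ = bipDeg D s := (bipDeg_eq_card_right hST hD (hB s hs)).symm
      _ ≤ k := hSdeg s (hB s hs)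

theorem exists_matching_covering_of_bipDeg (hST : Disjoint S T) (hD : D ⊆ S ×ˢ T)
    (hT' : T' ⊆ T) (hk : 0 < k) (hT'deg : ∀ t ∈ T', k ≤ bipDeg D t)
    (hSdeg : ∀ s ∈ S, bipDeg D s ≤ k) :
    ∃ M ⊆ D, IsMatching M ∧ ∀ t ∈ T', Covers M t := by
  obtain ⟨f, hf_inj, hf⟩ := (all_card_le_biUnion_card_iff_exists_injective _).1
    (card_le_card_biUnion_of_bipDeg hST hD hT' hk hT'deg hSdeg)
  have hfD : ∀ t, f t ∈ S ∧ (f t, t.1) ∈ D := fun t => mem_filter.1 (hf t)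
  have hf_ne : ∀ a b : T', f a ≠ b.1 := fun a b h =>
    disjoint_left.1 hST (hfD a).1 (h ▸ hT' b.2)
  refine ⟨univ.image fun t => (f t, t.1), ?_, ?_, fun t ht => ?_⟩
  · intro e he
    obtain ⟨t, -, rfl⟩ := mem_image.1 he
    exact (hfD t).2
  · intro e he e' he' hne
    obtain ⟨a, -, rfl⟩ := mem_image.1 he
    obtain ⟨b, -, rfl⟩ := mem_image.1 he'
    have hab : a ≠ b := by rintro rfl; exact hne rfl
    exact ⟨hf_inj.ne hab, Subtype.coe_injective.ne hab, hf_ne a b, (hf_ne b a).symm⟩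
  · exact ⟨(f ⟨t, ht⟩, t), mem_image_of_mem _ (mem_univ _), Or.inr rfl⟩

end Bipartite

section LinksAndClaws

variable {V : Type*} {E : Finset (V × V)}

def clawLink (c : V × V × V × V) : V × V × V := (c.2.1, c.1, c.2.2.1)

lemma IsSClaw.isSLink_clawLink {c : V × V × V × V} (h : IsSClaw E c) :
    IsSLink E (clawLink c) :=
  ⟨h.1, h.2.1, h.2.2.2.1⟩

variable [DecidableEq V]

lemma IsSLink.linkEdges_subset {p : V × V × V} (h : IsSLink E p) : linkEdges p ⊆ E := by
  simp only [linkEdges, insert_subset_iff, singleton_subset_iff]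
  exact ⟨h.1, h.2.1⟩

lemma IsSClaw.clawEdges_subset {c : V × V × V × V} (h : IsSClaw E c) : clawEdges c ⊆ E := by
  simp only [clawEdges, insert_subset_iff, singleton_subset_iff]
  exact ⟨h.1, h.2.1, h.2.2.1⟩

lemma linkNodes_clawLink_subset (c : V × V × V × V) : linkNodes (clawLink c) ⊆ clawNodes c := by
  intro v
  simp only [linkNodes, clawNodes, clawLink, mem_insert, mem_singleton]
  tauto

lemma linkEdges_clawLink_subset (c : V × V × V × V) : linkEdges (clawLink c) ⊆ clawEdges c := by
  intro e
  simp only [linkEdges, clawEdges, clawLink, mem_insert, mem_singleton]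
  tauto

lemma covers_linkEdges_clawLink {c : V × V × V × V} {e : V × V} (he : e ∈ clawEdges c) :
    Covers (linkEdges (clawLink c)) e.2 := by
  refine ⟨(c.2.1, c.1), by simp [linkEdges, clawLink], Or.inr ?_⟩
  simp only [clawEdges, mem_insert, mem_singleton] at he
  rcases he with rfl | rfl | rfl <;> rfl

variable {𝓛 : Finset (V × V × V)} {𝓒 : Finset (V × V × V × V)}

lemma DisjointLinks.union_image_clawLink (h𝓛d : DisjointLinks 𝓛)
    (h𝓒d : ∀ c ∈ 𝓒, ∀ c' ∈ 𝓒, c ≠ c' → Disjoint (clawNodes c) (clawNodes c'))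
    (h𝓛𝓒 : ∀ p ∈ 𝓛, ∀ c ∈ 𝓒, Disjoint (linkNodes p) (clawNodes c)) :
    DisjointLinks (𝓛 ∪ 𝓒.image clawLink) := by
  intro p hp q hq hpq
  rcases mem_union.1 hp with hp | hp <;> rcases mem_union.1 hq with hq | hq
  · exact h𝓛d p hp q hq hpq
  · obtain ⟨c, hc, rfl⟩ := mem_image.1 hq
    exact (h𝓛𝓒 p hp c hc).mono_right (linkNodes_clawLink_subset c)
  · obtain ⟨c, hc, rfl⟩ := mem_image.1 hp
    exact ((h𝓛𝓒 q hq c hc).mono_right (linkNodes_clawLink_subset c)).symm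
  · obtain ⟨c, hc, rfl⟩ := mem_image.1 hp
    obtain ⟨c', hc', rfl⟩ := mem_image.1 hq
    exact (h𝓒d c hc c' hc' (by rintro rfl; exact hpq rfl)).mono
      (linkNodes_clawLink_subset c) (linkNodes_clawLink_subset c')

lemma isSLink_of_mem_union_image_clawLink (h𝓛 : ∀ p ∈ 𝓛, IsSLink E p)
    (h𝓒 : ∀ c ∈ 𝓒, IsSClaw E c) {p : V × V × V} (hp : p ∈ 𝓛 ∪ 𝓒.image clawLink) :
    IsSLink E p := by
  rcases mem_union.1 hp with hp | hp
  · exact h𝓛 p hp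
  · obtain ⟨c, hc, rfl⟩ := mem_image.1 hp
    exact (h𝓒 c hc).isSLink_clawLink

lemma linkEdges_subset_of_mem_union_image_clawLink {p : V × V × V}
    (hp : p ∈ 𝓛 ∪ 𝓒.image clawLink) :
    linkEdges p ⊆ 𝓛.biUnion linkEdges ∪ 𝓒.biUnion clawEdges := by
  rcases mem_union.1 hp with hp | hp
  · exact (subset_biUnion_of_mem linkEdges hp).trans subset_union_left
  · obtain ⟨c, hc, rfl⟩ := mem_image.1 hp
    exact (linkEdges_clawLink_subset c).trans
      ((subset_biUnion_of_mem clawEdges hc).trans subset_union_right)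

lemma covers_biUnion_linkEdges_of_mem {e : V × V}
    (he : e ∈ 𝓛.biUnion linkEdges ∪ 𝓒.biUnion clawEdges) :
    Covers ((𝓛 ∪ 𝓒.image clawLink).biUnion linkEdges) e.2 := by
  rcases mem_union.1 he with he | he
  · obtain ⟨p, hp, hep⟩ := mem_biUnion.1 he
    exact ⟨e, mem_biUnion.2 ⟨p, mem_union_left _ hp, hep⟩, Or.inr rfl⟩
  · obtain ⟨c, hc, hec⟩ := mem_biUnion.1 he
    exact (covers_linkEdges_clawLink hec).mono
      (subset_biUnion_of_mem linkEdges (mem_union_right _ (mem_image_of_mem clawLink hc)))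

end LinksAndClaws

theorem links_claws_completion_general {V : Type*} [DecidableEq V]
    (S T : Finset V) (E : Finset (V × V))
    (hST : Disjoint S T) (hE : E ⊆ S ×ˢ T)
    (𝓛 : Finset (V × V × V)) (𝓒 : Finset (V × V × V × V))
    (h𝓛 : ∀ p ∈ 𝓛, IsSLink E p) (h𝓒 : ∀ c ∈ 𝓒, IsSClaw E c)
    (h𝓛d : DisjointLinks 𝓛)
    (h𝓒d : ∀ c ∈ 𝓒, ∀ c' ∈ 𝓒, c ≠ c' → Disjoint (clawNodes c) (clawNodes c'))
    (h𝓛𝓒 : ∀ p ∈ 𝓛, ∀ c ∈ 𝓒, Disjoint (linkNodes p) (clawNodes c))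
    (N : Finset (V × V)) (hN : N = 𝓛.biUnion linkEdges ∪ 𝓒.biUnion clawEdges)
    (hdSN : ∀ s ∈ S, bipDeg (E \ N) s ≤ 3)
    (hdT : ∀ t ∈ T, bipDeg E t = 3) :
    (∃ M ⊆ E \ N, IsMatching M ∧ ∀ t ∈ T, ¬ Covers N t → Covers M t) ∧
    (∃ (M : Finset (V × V)) (𝓕 : Finset (V × V × V)),
      M ⊆ E ∧ IsMatching M ∧
      (∀ p ∈ 𝓕, IsSLink E p ∧ linkEdges p ⊆ N) ∧ DisjointLinks 𝓕 ∧
      ∀ t ∈ T, Covers (M ∪ 𝓕.biUnion linkEdges) t) := by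
  classical
  have hNE : N ⊆ E := hN ▸ union_subset
    (biUnion_subset.2 fun p hp => (h𝓛 p hp).linkEdges_subset)
    (biUnion_subset.2 fun c hc => (h𝓒 c hc).clawEdges_subset)
  obtain ⟨M, hMsub, hM, hMcov⟩ := exists_matching_covering_of_bipDeg hST
    (sdiff_subset.trans hE) (filter_subset (fun t => ¬ Covers N t) T) three_pos
    (fun t ht => by
      rw [mem_filter] at ht
      rw [bipDeg_sdiff_of_not_covers ht.2, hdT t ht.1]) hdSN
  have hMcov' : ∀ t ∈ T, ¬ Covers N t → Covers M t := fun t ht htN =>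
    hMcov t (mem_filter.2 ⟨ht, htN⟩)
  refine ⟨⟨M, hMsub, hM, hMcov'⟩, M, 𝓛 ∪ 𝓒.image clawLink, hMsub.trans sdiff_subset, hM,
    fun p hp => ⟨isSLink_of_mem_union_image_clawLink h𝓛 h𝓒 hp,
      hN ▸ linkEdges_subset_of_mem_union_image_clawLink hp⟩,
    h𝓛d.union_image_clawLink h𝓒d h𝓛𝓒, fun t ht => ?_⟩
  by_cases htN : Covers N t
  · obtain ⟨e, he, rfl⟩ := exists_snd_eq_of_covers hST (hNE.trans hE) ht htN
    exact (covers_biUnion_linkEdges_of_mem (hN ▸ he)).mono subset_union_right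
  · exact (hMcov' t ht htN).mono subset_union_left

/-- Let `N` be the edge set of a family of pairwise node-disjoint `S`-links and
`S`-claws covering `S' ⊆ S`, where every node of `S` has degree at most 4 in `E` and
at most 3 in `E − N`, and every node of `T` has degree 3 in `E`. Then the set of
nodes of `T` not covered by `N` can be covered by a matching disjoint from `N`, and
deleting one edge from each `S`-claw yields a matching together with a family of
node-disjoint `S`-links whose union covers `T`. -/
theorem links_claws_completion {V : Type*} [DecidableEq V] [Fintype V]
    (S T : Finset V) (E : Finset (V × V))
    (hST : Disjoint S T) (hE : E ⊆ S ×ˢ T)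
    (𝓛 : Finset (V × V × V)) (𝓒 : Finset (V × V × V × V))
    (h𝓛 : ∀ p ∈ 𝓛, IsSLink E p) (h𝓒 : ∀ c ∈ 𝓒, IsSClaw E c)
    (h𝓛d : DisjointLinks 𝓛)
    (h𝓒d : ∀ c ∈ 𝓒, ∀ c' ∈ 𝓒, c ≠ c' → Disjoint (clawNodes c) (clawNodes c'))
    (h𝓛𝓒 : ∀ p ∈ 𝓛, ∀ c ∈ 𝓒, Disjoint (linkNodes p) (clawNodes c))
    (N : Finset (V × V)) (hN : N = 𝓛.biUnion linkEdges ∪ 𝓒.biUnion clawEdges)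
    (S' : Finset V) (hS' : S' ⊆ S)
    (hS'cov : ∀ s ∈ S', (∃ p ∈ 𝓛, s ∈ linkNodes p) ∨ ∃ c ∈ 𝓒, s ∈ clawNodes c)
    (hdS : ∀ s ∈ S, bipDeg E s ≤ 4) (hdSN : ∀ s ∈ S, bipDeg (E \ N) s ≤ 3)
    (hdT : ∀ t ∈ T, bipDeg E t = 3) :
    (∃ M ⊆ E \ N, IsMatching M ∧ ∀ t ∈ T, ¬ Covers N t → Covers M t) ∧
    (∃ (M : Finset (V × V)) (𝓕 : Finset (V × V × V)),
      M ⊆ E ∧ IsMatching M ∧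
      (∀ p ∈ 𝓕, IsSLink E p ∧ linkEdges p ⊆ N) ∧ DisjointLinks 𝓕 ∧
      ∀ t ∈ T, Covers (M ∪ 𝓕.biUnion linkEdges) t) :=
  links_claws_completion_general S T E hST hE 𝓛 𝓒 h𝓛 h𝓒 h𝓛d h𝓒d h𝓛𝓒 N hN hdSN hdT
end
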